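/- arXiv:2603.02975 — 10 statements merged into one kernel-verified Lean document; each statement's English description precedes it below -/
import Mathlib

section
/- Let b > 0, ξ > 1, M ≥ 0, and let u : [0,∞) → ℝ be Lebesgue measurable with essential supremum ‖u‖∞ = M. Suppose (η₁, η₂) : [0,∞) → ℝ² is locally absolutely continuous, satisfies η̇₁(t) = η₂(t) and η̇₂(t) = −2ξb·η₂(t) − b²·η₁(t) + b²·u(t) for almost every t ≥ 0, with η₁(0) = η₁₀ and η₂(0) = η₂₀. Then for all t ≥ 0, |η₁(t)| ≤ (ξ|η₁₀| + |η₂₀|/b)/√(ξ² − 1) + M. -/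
open MeasureTheory Set intervalIntegral

set_option linter.unusedVariables false
set_option linter.deprecated false

lemma integral_exp_lin (c d a t : ℝ) :
    ∫ s in a..t, c * Real.exp (c * s + d) = Real.exp (c * t + d) - Real.exp (c * a + d) := by
  have h : ∀ x ∈ Set.uIcc a t, HasDerivAt (fun s => Real.exp (c * s + d))
      (c * Real.exp (c * x + d)) x := by
    intro x _
    have h : HasDerivAt (fun s : ℝ => c * s + d) c x := by
      simpa using ((hasDerivAt_id x).const_mul c).add_const d
    simpa [mul_comm] using h.exp
  exact intervalIntegral.integral_eq_sub_of_hasDerivAt h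
    (Continuous.intervalIntegrable (by continuity) a t)

lemma integral_exp_lin' (c a t : ℝ) :
    ∫ s in a..t, c * Real.exp (c * s) = Real.exp (c * t) - Real.exp (c * a) := by
  simpa using integral_exp_lin c 0 a t

lemma swap_tri (T : ℝ) (hT : 0 ≤ T) (φ f : ℝ → ℝ) (hφ : Continuous φ)
    (hf : Measurable f) (hfi : IntegrableOn f (Set.Ioc 0 T)) :
    ∫ s in Set.Ioc 0 T, φ s * (∫ r in Set.Ioc 0 s, f r)
      = ∫ r in Set.Ioc 0 T, (∫ s in Set.Ioc r T, φ s) * f r := by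
  set μ := volume.restrict (Set.Ioc 0 T) with hμ
  obtain ⟨C, hC⟩ : ∃ C, ∀ x ∈ Set.Icc 0 T, ‖φ x‖ ≤ C :=
    (isCompact_Icc).exists_bound_of_continuousOn hφ.continuousOn
  have hC0 : 0 ≤ C := le_trans (norm_nonneg _) (hC 0 (by simp [hT]))
  set F : ℝ × ℝ → ℝ := fun p => if p.2 ≤ p.1 then φ p.1 * f p.2 else 0 with hF
  have hFmeas : Measurable F := by
    apply Measurable.ite (measurableSet_le measurable_snd measurable_fst)
    · exact (hφ.measurable.comp measurable_fst).mul (hf.comp measurable_snd)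
    · exact measurable_const
  have hmem : ∀ᵐ p : ℝ × ℝ ∂μ.prod μ, p ∈ (Set.Ioc 0 T) ×ˢ (Set.Ioc 0 T) := by
    rw [hμ, Measure.prod_restrict]
    exact ae_restrict_mem (measurableSet_Ioc.prod measurableSet_Ioc)
  have hconst : Integrable (fun _ : ℝ => C) μ := by
    rw [hμ]
    exact integrableOn_const measure_Ioc_lt_top.ne
  have hFint : Integrable F (μ.prod μ) := by
    refine Integrable.mono' (hconst.mul_prod hfi.norm) hFmeas.aestronglyMeasurable ?_
    filter_upwards [hmem] with p hp
    have h1 : ‖φ p.1‖ ≤ C := hC p.1 (Set.Ioc_subset_Icc_self hp.1)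
    by_cases h : p.2 ≤ p.1
    · simp only [hF, if_pos h, norm_mul]
      exact mul_le_mul_of_nonneg_right h1 (norm_nonneg _)
    · simp only [hF, if_neg h, norm_zero]
      positivity
  have key := integral_integral_swap (f := fun s r => F (s, r)) (μ := μ) (ν := μ) hFint
  have hL : ∫ s in Set.Ioc 0 T, φ s * (∫ r in Set.Ioc 0 s, f r)
      = ∫ s, (∫ r, F (s, r) ∂μ) ∂μ := by
    refine integral_congr_ae ?_
    filter_upwards [ae_restrict_mem measurableSet_Ioc] with s hs
    have h1 : ∀ r, F (s, r) = (Set.Iic s).indicator (fun r => φ s * f r) r := by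
      intro r
      simp [hF, Set.indicator_apply, Set.mem_Iic]
    have hset : Set.Iic s ∩ Set.Ioc 0 T = Set.Ioc 0 s := by
      ext r
      simp only [Set.mem_inter_iff, Set.mem_Iic, Set.mem_Ioc]
      constructor
      · rintro ⟨h1, h2, h3⟩; exact ⟨h2, h1⟩
      · rintro ⟨h1, h2⟩; exact ⟨h2, h1, h2.trans hs.2⟩
    calc φ s * ∫ r in Set.Ioc 0 s, f r
        = ∫ r in Set.Ioc 0 s, φ s * f r := (MeasureTheory.integral_const_mul _ _).symm
      _ = ∫ r in Set.Iic s ∩ Set.Ioc 0 T, φ s * f r := by rw [hset]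
      _ = ∫ r, (Set.Iic s).indicator (fun r => φ s * f r) r ∂μ := by
          rw [hμ, ← Measure.restrict_restrict measurableSet_Iic,
            MeasureTheory.integral_indicator measurableSet_Iic]
      _ = ∫ r, F (s, r) ∂μ := by simp only [h1]
  have hR : ∫ r in Set.Ioc 0 T, (∫ s in Set.Ioc r T, φ s) * f r
      = ∫ r, (∫ s, F (s, r) ∂μ) ∂μ := by
    refine integral_congr_ae ?_
    filter_upwards [ae_restrict_mem measurableSet_Ioc] with r hr
    have h1 : ∀ s, F (s, r) = (Set.Ici r).indicator (fun s => φ s * f r) s := by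
      intro s
      simp [hF, Set.indicator_apply, Set.mem_Ici]
    have hset : Set.Ici r ∩ Set.Ioc 0 T = Set.Icc r T := by
      ext s
      simp only [Set.mem_inter_iff, Set.mem_Ici, Set.mem_Ioc, Set.mem_Icc]
      constructor
      · rintro ⟨h1, h2, h3⟩; exact ⟨h1, h3⟩
      · rintro ⟨h1, h2⟩; exact ⟨h1, lt_of_lt_of_le hr.1 h1, h2⟩
    calc (∫ s in Set.Ioc r T, φ s) * f r
        = ∫ s in Set.Ioc r T, φ s * f r := (MeasureTheory.integral_mul_const _ _).symm
      _ = ∫ s in Set.Icc r T, φ s * f r := (integral_Icc_eq_integral_Ioc).symm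
      _ = ∫ s in Set.Ici r ∩ Set.Ioc 0 T, φ s * f r := by rw [hset]
      _ = ∫ s, (Set.Ici r).indicator (fun s => φ s * f r) s ∂μ := by
          rw [hμ, ← Measure.restrict_restrict measurableSet_Ici,
            MeasureTheory.integral_indicator measurableSet_Ici]
      _ = ∫ s, F (s, r) ∂μ := by simp only [h1]
  rw [hL, hR]
  exact key

lemma ode_solve (lam z0 : ℝ) (g z : ℝ → ℝ) (hgm : Measurable g)
    (hz : ContinuousOn z (Set.Ici 0))
    (hg : ∀ t, 0 ≤ t → IntervalIntegrable g volume 0 t)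
    (heq : ∀ t, 0 ≤ t → z t = z0 + ∫ s in (0:ℝ)..t, (-lam * z s + g s)) :
    ∀ t, 0 ≤ t → z t = Real.exp (-(lam * t)) *
      (z0 + ∫ s in (0:ℝ)..t, Real.exp (lam * s) * g s) := by
  set f : ℝ → ℝ := fun r => Real.exp (lam * r) * g r with hf_def
  have hfm : Measurable f :=
    ((Real.continuous_exp.comp (continuous_const.mul continuous_id)).measurable).mul hgm
  have hf_int : ∀ t, 0 ≤ t → IntervalIntegrable f volume 0 t := by
    intro t ht
    have hgI := (intervalIntegrable_iff_integrableOn_Ioc_of_le ht).1 (hg t ht)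
    rw [intervalIntegrable_iff_integrableOn_Ioc_of_le ht]
    refine Integrable.mono' ((hgI.norm).const_mul (Real.exp (|lam| * t)))
      hfm.aestronglyMeasurable.restrict ?_
    filter_upwards [ae_restrict_mem measurableSet_Ioc] with r hr
    have h1 : lam * r ≤ |lam| * t := by
      calc lam * r ≤ |lam * r| := le_abs_self _
        _ = |lam| * |r| := abs_mul _ _
        _ ≤ |lam| * t := by
            apply mul_le_mul_of_nonneg_left _ (abs_nonneg _)
            rw [abs_of_pos hr.1]; exact hr.2
    have : ‖f r‖ = Real.exp (lam * r) * ‖g r‖ := by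
      rw [hf_def]; simp [norm_mul, abs_of_pos (Real.exp_pos _)]
    rw [this]
    exact mul_le_mul_of_nonneg_right (Real.exp_le_exp.2 h1) (norm_nonneg _)
  set V : ℝ → ℝ := fun x => ∫ s in (0:ℝ)..x, f s with hV_def
  set Z : ℝ → ℝ := fun x => Real.exp (-(lam * x)) * (z0 + V x) with hZ_def
  -- continuity of Z on [0,T]
  have hVcont : ∀ T, 0 ≤ T → ContinuousOn V (Set.Icc 0 T) := by
    intro T hT
    have h1 : IntegrableOn f (Set.uIcc 0 T) := by
      rw [Set.uIcc_of_le hT]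
      exact ((intervalIntegrable_iff_integrableOn_Ioc_of_le hT).1
        (hf_int T hT)).congr_set_ae Ioc_ae_eq_Icc.symm
    have := intervalIntegral.continuousOn_primitive_interval h1
    rwa [Set.uIcc_of_le hT] at this
  have hZcont : ∀ T, 0 ≤ T → ContinuousOn Z (Set.Icc 0 T) := by
    intro T hT
    exact (Real.continuous_exp.comp (continuous_const.mul continuous_id).neg).continuousOn.mul
      (continuousOn_const.add (hVcont T hT))
  -- Z satisfies the same integral equation
  have hZeq : ∀ t, 0 ≤ t → Z t = z0 + ∫ s in (0:ℝ)..t, (-lam * Z s + g s) := by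
    intro t ht
    have hZi : IntervalIntegrable (fun s => -lam * Z s) volume 0 t := by
      apply ContinuousOn.intervalIntegrable
      rw [Set.uIcc_of_le ht]
      exact continuousOn_const.mul (hZcont t ht)
    have e1 : ∫ s in (0:ℝ)..t, (-lam * Z s + g s)
        = (∫ s in (0:ℝ)..t, -lam * Z s) + ∫ s in (0:ℝ)..t, g s :=
      intervalIntegral.integral_add hZi (hg t ht)
    have e2 : ∫ s in (0:ℝ)..t, -lam * Z s
        = (∫ s in (0:ℝ)..t, -lam * Real.exp (-(lam * s)) * z0)
          + ∫ s in (0:ℝ)..t, (-lam * Real.exp (-(lam * s))) * V s := by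
      rw [← intervalIntegral.integral_add]
      · apply intervalIntegral.integral_congr
        intro s _
        simp only [hZ_def]
        ring
      · apply ContinuousOn.intervalIntegrable; fun_prop
      · apply ContinuousOn.intervalIntegrable
        rw [Set.uIcc_of_le ht]
        exact (by fun_prop : Continuous fun s : ℝ => -lam * Real.exp (-(lam*s))).continuousOn.mul
          (hVcont t ht)
    have T1 : ∫ s in (0:ℝ)..t, -lam * Real.exp (-(lam * s)) * z0
        = (Real.exp (-(lam * t)) - 1) * z0 := by
      rw [intervalIntegral.integral_mul_const]
      have := integral_exp_lin' (-lam) 0 t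
      simp only [neg_mul] at this ⊢
      rw [this]
      simp
    have T2 : ∫ s in (0:ℝ)..t, (-lam * Real.exp (-(lam * s))) * V s
        = Real.exp (-(lam * t)) * V t - ∫ s in (0:ℝ)..t, g s := by
      rw [intervalIntegral.integral_of_le ht]
      have hswap := swap_tri t ht (fun s => -lam * Real.exp (-(lam * s))) f
        (by fun_prop) hfm ((intervalIntegrable_iff_integrableOn_Ioc_of_le ht).1 (hf_int t ht))
      have hVIoc : ∀ s, 0 ≤ s → V s = ∫ r in Set.Ioc 0 s, f r := fun s hs => by
        rw [hV_def]; exact intervalIntegral.integral_of_le hs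
      have e3 : ∫ s in Set.Ioc 0 t, (-lam * Real.exp (-(lam * s))) * V s
          = ∫ s in Set.Ioc 0 t, (fun s => -lam * Real.exp (-(lam * s))) s
              * (∫ r in Set.Ioc 0 s, f r) := by
        apply setIntegral_congr_fun measurableSet_Ioc
        intro s hs
        simp only [hVIoc s hs.1.le]
      rw [e3, hswap]
      have e4 : ∀ r ∈ Set.Ioc 0 t,
          (∫ s in Set.Ioc r t, -lam * Real.exp (-(lam * s))) * f r
            = Real.exp (-(lam * t)) * f r - g r := by
        intro r hr
        have h5 : ∫ s in Set.Ioc r t, -lam * Real.exp (-(lam * s))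
            = Real.exp (-(lam * t)) - Real.exp (-(lam * r)) := by
          rw [← intervalIntegral.integral_of_le hr.2]
          have := integral_exp_lin' (-lam) r t
          simpa [neg_mul] using this
        rw [h5, hf_def]
        have h6 : Real.exp (-(lam * r)) * Real.exp (lam * r) = 1 := by
          rw [← Real.exp_add]; simp
        have : (Real.exp (-(lam * t)) - Real.exp (-(lam * r))) * (Real.exp (lam * r) * g r)
            = Real.exp (-(lam * t)) * (Real.exp (lam * r) * g r)
              - (Real.exp (-(lam * r)) * Real.exp (lam * r)) * g r := by ring
        rw [this, h6, one_mul]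
      rw [setIntegral_congr_fun measurableSet_Ioc e4]
      have hfI : IntegrableOn f (Set.Ioc 0 t) :=
        (intervalIntegrable_iff_integrableOn_Ioc_of_le ht).1 (hf_int t ht)
      have hgI : IntegrableOn g (Set.Ioc 0 t) :=
        (intervalIntegrable_iff_integrableOn_Ioc_of_le ht).1 (hg t ht)
      rw [integral_sub (hfI.const_mul _) hgI, MeasureTheory.integral_const_mul,
        hVIoc t ht, intervalIntegral.integral_of_le ht]
    rw [e1, e2, T1, T2, hZ_def]
    ring
  -- now uniqueness
  intro t ht
  suffices h : z t = Z t by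
    rw [h, hZ_def]
  -- d satisfies d x = -lam * ∫ d  for x ≥ 0
  set d : ℝ → ℝ := fun x => z x - Z x with hd_def
  have hdcont : ∀ T, 0 ≤ T → ContinuousOn d (Set.Icc 0 T) := fun T hT =>
    (hz.mono (fun x hx => hx.1)).sub (hZcont T hT)
  have hd_int : ∀ x, 0 ≤ x → IntervalIntegrable d volume 0 x := by
    intro x hx
    apply ContinuousOn.intervalIntegrable
    rw [Set.uIcc_of_le hx]
    exact hdcont x hx
  have hdeq : ∀ x, 0 ≤ x → d x = -lam * ∫ s in (0:ℝ)..x, d s := by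
    intro x hx
    have hzi : IntervalIntegrable (fun s => -lam * z s) volume 0 x := by
      apply ContinuousOn.intervalIntegrable
      rw [Set.uIcc_of_le hx]
      exact continuousOn_const.mul (hz.mono (fun y hy => hy.1))
    have hZi : IntervalIntegrable (fun s => -lam * Z s) volume 0 x := by
      apply ContinuousOn.intervalIntegrable
      rw [Set.uIcc_of_le hx]
      exact continuousOn_const.mul (hZcont x hx)
    calc d x = (z0 + ∫ s in (0:ℝ)..x, (-lam * z s + g s))
        - (z0 + ∫ s in (0:ℝ)..x, (-lam * Z s + g s)) := by
          rw [hd_def, ← heq x hx, ← hZeq x hx]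
      _ = (∫ s in (0:ℝ)..x, (-lam * z s + g s)) - ∫ s in (0:ℝ)..x, (-lam * Z s + g s) := by ring
      _ = ∫ s in (0:ℝ)..x, ((-lam * z s + g s) - (-lam * Z s + g s)) := by
          rw [intervalIntegral.integral_sub (hzi.add (hg x hx)) (hZi.add (hg x hx))]
      _ = ∫ s in (0:ℝ)..x, -lam * d s := by
          apply intervalIntegral.integral_congr
          intro s _
          simp only [hd_def]
          ring
      _ = -lam * ∫ s in (0:ℝ)..x, d s := intervalIntegral.integral_const_mul _ _
  have hd0 : d 0 = 0 := by
    have := hdeq 0 le_rfl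
    simpa using this
  -- apply uniqueness on [0, t]
  have key : Set.EqOn d (fun _ => (0:ℝ)) (Set.Icc 0 t) := by
    apply ODE_solution_unique (v := fun _ x => -lam * x) (K := ‖lam‖₊)
    · intro s
      apply LipschitzWith.of_dist_le_mul
      intro x y
      simp only [Real.dist_eq, coe_nnnorm, Real.norm_eq_abs]
      rw [← mul_sub, abs_mul, abs_neg]
    · exact hdcont t ht
    · intro x hx
      have hxT : x < t := hx.2
      have hIcc_mem : Set.Icc 0 t ∈ nhdsWithin x (Set.Ici x) := by
        apply Filter.mem_of_superset (Ico_mem_nhdsGE_of_mem ⟨le_refl x, hxT⟩)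
        intro y hy
        exact ⟨hx.1.trans hy.1, hy.2.le⟩
      have hIoi_mem : Set.Icc 0 t ∈ nhdsWithin x (Set.Ioi x) :=
        nhdsWithin_mono x Set.Ioi_subset_Ici_self hIcc_mem
      have hD : HasDerivWithinAt (fun y => ∫ s in (0:ℝ)..y, d s) (d x) (Set.Ici x) x := by
        apply intervalIntegral.integral_hasDerivWithinAt_right (hd_int x hx.1)
        · exact ⟨Set.Icc 0 t, hIoi_mem, (hdcont t ht).aestronglyMeasurable measurableSet_Icc⟩
        · exact ((hdcont t ht) x ⟨hx.1, hxT.le⟩).mono_of_mem_nhdsWithin hIoi_mem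
      have h2 : HasDerivWithinAt (fun y => -lam * ∫ s in (0:ℝ)..y, d s)
          (-lam * d x) (Set.Ici x) x := hD.const_mul (-lam)
      have h3 : HasDerivWithinAt d (-lam * d x) (Set.Ici x) x := by
        apply h2.congr
        · intro y hy
          exact hdeq y (hx.1.trans hy)
        · exact hdeq x hx.1
      exact h3
    · exact continuousOn_const
    · intro x hx
      simpa using hasDerivWithinAt_const x (Set.Ici x) (0:ℝ)
    · simpa using hd0
  have := key ⟨ht, le_rfl⟩
  have hzt : z t - Z t = 0 := this
  linarith


lemma exp_mul_intervalIntegrable (lam t : ℝ) (ht : 0 ≤ t) (g : ℝ → ℝ)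
    (hgm : Measurable g) (hg : IntervalIntegrable g volume 0 t) :
    IntervalIntegrable (fun r => Real.exp (lam * r) * g r) volume 0 t := by
  have hfm : Measurable fun r => Real.exp (lam * r) * g r :=
    ((Real.continuous_exp.comp (continuous_const.mul continuous_id)).measurable).mul hgm
  have hgI := (intervalIntegrable_iff_integrableOn_Ioc_of_le ht).1 hg
  rw [intervalIntegrable_iff_integrableOn_Ioc_of_le ht]
  refine Integrable.mono' ((hgI.norm).const_mul (Real.exp (|lam| * t)))
    hfm.aestronglyMeasurable.restrict ?_
  filter_upwards [ae_restrict_mem measurableSet_Ioc] with r hr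
  have h1 : lam * r ≤ |lam| * t := by
    calc lam * r ≤ |lam * r| := le_abs_self _
      _ = |lam| * |r| := abs_mul _ _
      _ ≤ |lam| * t := by
          apply mul_le_mul_of_nonneg_left _ (abs_nonneg _)
          rw [abs_of_pos hr.1]; exact hr.2
  have h2 : ‖Real.exp (lam * r) * g r‖ = Real.exp (lam * r) * ‖g r‖ := by
    simp [norm_mul, abs_of_pos (Real.exp_pos _)]
  rw [h2]
  exact mul_le_mul_of_nonneg_right (Real.exp_le_exp.2 h1) (norm_nonneg _)

set_option maxHeartbeats 1000000 in
/-- Bound on the first component of a second-order low-pass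
filter driven by a measurable essentially bounded input. The filter
η̇₁ = η₂, η̇₂ = −2ξb·η₂ − b²·η₁ + b²·u (a.e. on [0,∞)) is encoded, as usual for
locally absolutely continuous solutions, by the integral (variation of
constants) identities together with local integrability of the derivatives. -/
theorem stmt0
    (b ξ M : ℝ) (hb : 0 < b) (hξ : 1 < ξ) (hM : 0 ≤ M)
    (u η₁ η₂ : ℝ → ℝ) (η₁₀ η₂₀ : ℝ)
    (hu_meas : Measurable u)
    (hu_bdd : ∀ᵐ t ∂volume, 0 ≤ t → |u t| ≤ M)
    (h₁0 : η₁ 0 = η₁₀) (h₂0 : η₂ 0 = η₂₀)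
    (hcont₁ : ContinuousOn η₁ (Set.Ici 0))
    (hcont₂ : ContinuousOn η₂ (Set.Ici 0))
    (hint : ∀ t, 0 ≤ t →
      IntervalIntegrable (fun s => -(2*ξ*b) * η₂ s - b^2 * η₁ s + b^2 * u s) volume 0 t)
    (h₁ : ∀ t, 0 ≤ t → η₁ t = η₁₀ + ∫ s in (0:ℝ)..t, η₂ s)
    (h₂ : ∀ t, 0 ≤ t → η₂ t = η₂₀ + ∫ s in (0:ℝ)..t,
      (-(2*ξ*b) * η₂ s - b^2 * η₁ s + b^2 * u s)) :
    ∀ t, 0 ≤ t →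
      |η₁ t| ≤ (ξ * |η₁₀| + |η₂₀| / b) / Real.sqrt (ξ^2 - 1) + M := by
  -- basic constants
  set σ : ℝ := Real.sqrt (ξ^2 - 1) with hσ_def
  have hσ2 : σ^2 = ξ^2 - 1 := Real.sq_sqrt (by nlinarith)
  have hσ_pos : 0 < σ := Real.sqrt_pos.2 (by nlinarith)
  have hσξ : σ < ξ := by nlinarith
  set l₁ : ℝ := b * (ξ - σ) with hl₁_def
  set l₂ : ℝ := b * (ξ + σ) with hl₂_def
  have hl₁_pos : 0 < l₁ := mul_pos hb (by linarith)
  have hl₂_pos : 0 < l₂ := mul_pos hb (by nlinarith)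
  have hl₁₂ : l₁ ≤ l₂ := by nlinarith
  have hprod : l₁ * l₂ = b^2 := by
    rw [hl₁_def, hl₂_def]; nlinarith [hσ2]
  have hsum : l₁ + l₂ = 2*ξ*b := by rw [hl₁_def, hl₂_def]; ring
  have hdiff : l₂ - l₁ = 2*b*σ := by rw [hl₁_def, hl₂_def]; ring
  have hdiff_pos : 0 < l₂ - l₁ := by rw [hdiff]; positivity
  -- integrability of u and g
  set g : ℝ → ℝ := fun r => b^2 * u r with hg_def
  have hgm : Measurable g := hu_meas.const_mul (b^2)
  have huI : ∀ τ, 0 ≤ τ → IntegrableOn u (Set.Ioc 0 τ) := by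
    intro τ hτ
    have hMc : IntegrableOn (fun _ : ℝ => M) (Set.Ioc 0 τ) volume :=
      integrableOn_const measure_Ioc_lt_top.ne
    refine Integrable.mono' hMc hu_meas.aestronglyMeasurable.restrict ?_
    filter_upwards [ae_restrict_mem measurableSet_Ioc, ae_restrict_of_ae hu_bdd] with r h1 h2
    simpa [Real.norm_eq_abs] using h2 h1.1.le
  have hgI : ∀ τ, 0 ≤ τ → IntervalIntegrable g volume 0 τ := by
    intro τ hτ
    rw [intervalIntegrable_iff_integrableOn_Ioc_of_le hτ]
    exact (huI τ hτ).const_mul _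
  have hη₂I : ∀ τ, 0 ≤ τ → IntervalIntegrable η₂ volume 0 τ := by
    intro τ hτ
    apply ContinuousOn.intervalIntegrable
    rw [Set.uIcc_of_le hτ]
    exact hcont₂.mono (fun x hx => hx.1)
  -- the two decoupled solutions
  set z₁ : ℝ → ℝ := fun τ => l₂ * η₁ τ + η₂ τ with hz₁_def
  set z₂ : ℝ → ℝ := fun τ => l₁ * η₁ τ + η₂ τ with hz₂_def
  have hz₁cont : ContinuousOn z₁ (Set.Ici 0) := (hcont₁.const_smul l₂).add hcont₂
  have hz₂cont : ContinuousOn z₂ (Set.Ici 0) := (hcont₁.const_smul l₁).add hcont₂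
  have hzeq : ∀ (lam lam' : ℝ), lam + lam' = 2*ξ*b → lam * lam' = b^2 →
      ∀ τ, 0 ≤ τ → lam' * η₁ τ + η₂ τ = (lam' * η₁₀ + η₂₀)
        + ∫ s in (0:ℝ)..τ, (-lam * (lam' * η₁ s + η₂ s) + g s) := by
    intro lam lam' hsum' hprod' τ hτ
    have e1 : lam' * η₁ τ + η₂ τ = (lam' * η₁₀ + η₂₀)
        + ((∫ s in (0:ℝ)..τ, lam' * η₂ s)
          + ∫ s in (0:ℝ)..τ, (-(2*ξ*b) * η₂ s - b^2 * η₁ s + b^2 * u s)) := by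
      rw [h₁ τ hτ, h₂ τ hτ, intervalIntegral.integral_const_mul]
      ring
    rw [e1, ← intervalIntegral.integral_add ((hη₂I τ hτ).const_mul lam') (hint τ hτ)]
    congr 1
    apply intervalIntegral.integral_congr
    intro s _
    simp only [hg_def]
    linear_combination (η₂ s) * hsum' + (η₁ s) * hprod'
  have hz₁eq := hzeq l₁ l₂ hsum hprod
  have hz₂eq := hzeq l₂ l₁ (by linarith) (by linarith [hprod])
  have F1 := ode_solve l₁ (l₂ * η₁₀ + η₂₀) g z₁ hgm hz₁cont hgI hz₁eq
  have F2 := ode_solve l₂ (l₁ * η₁₀ + η₂₀) g z₂ hgm hz₂cont hgI hz₂eq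
  intro t ht
  -- kernel
  set k : ℝ → ℝ := fun s => Real.exp (l₁ * s + -(l₁ * t)) - Real.exp (l₂ * s + -(l₂ * t))
    with hk_def
  have hW₁ := exp_mul_intervalIntegrable l₁ t ht g hgm (hgI t ht)
  have hW₂ := exp_mul_intervalIntegrable l₂ t ht g hgm (hgI t ht)
  set A : ℝ := Real.exp (-(l₁ * t)) with hA_def
  set B : ℝ := Real.exp (-(l₂ * t)) with hB_def
  have hA1 : A ≤ 1 := Real.exp_le_one_iff.2 (by nlinarith)
  have hB1 : B ≤ 1 := Real.exp_le_one_iff.2 (by nlinarith)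
  have key : z₁ t - z₂ t = (A * (l₂ * η₁₀ + η₂₀) - B * (l₁ * η₁₀ + η₂₀))
      + ∫ s in Set.Ioc 0 t, k s * g s := by
    rw [F1 t ht, F2 t ht]
    have e2 : ∫ s in Set.Ioc 0 t, k s * g s
        = (∫ s in (0:ℝ)..t, A * (Real.exp (l₁ * s) * g s))
          - ∫ s in (0:ℝ)..t, B * (Real.exp (l₂ * s) * g s) := by
      rw [← intervalIntegral.integral_sub (hW₁.const_mul A) (hW₂.const_mul B),
        intervalIntegral.integral_of_le ht]
      apply setIntegral_congr_fun measurableSet_Ioc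
      intro s _
      simp only [hk_def, hA_def, hB_def, Real.exp_add]
      ring
    rw [e2, intervalIntegral.integral_const_mul, intervalIntegral.integral_const_mul]
    ring
  -- nonnegativity of the kernel
  have hk_nonneg : ∀ s ∈ Set.Ioc 0 t, 0 ≤ k s := by
    intro s hs
    have : l₂ * s + -(l₂ * t) ≤ l₁ * s + -(l₁ * t) := by nlinarith [hs.2]
    simp only [hk_def, sub_nonneg]
    exact Real.exp_le_exp.2 this
  -- integral of kernel
  have hTi : ∀ lam : ℝ, 0 < lam → ∫ s in (0:ℝ)..t, Real.exp (lam * s + -(lam * t))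
      = (1 - Real.exp (-(lam * t))) / lam := by
    intro lam hlam
    have h := integral_exp_lin lam (-(lam * t)) 0 t
    rw [intervalIntegral.integral_const_mul] at h
    rw [eq_div_iff hlam.ne']
    rw [show lam * t + -(lam * t) = 0 by ring, Real.exp_zero] at h
    rw [show lam * 0 + -(lam * t) = -(lam * t) by ring] at h
    linarith [h]
  have hk_cont : Continuous k := by fun_prop
  have hk_int : ∫ s in Set.Ioc 0 t, k s
      = (1 - A) / l₁ - (1 - B) / l₂ := by
    rw [← intervalIntegral.integral_of_le ht, hk_def]
    rw [intervalIntegral.integral_sub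
      ((by fun_prop : Continuous fun s => Real.exp (l₁ * s + -(l₁ * t))).intervalIntegrable 0 t)
      ((by fun_prop : Continuous fun s => Real.exp (l₂ * s + -(l₂ * t))).intervalIntegrable 0 t)]
    rw [hTi l₁ hl₁_pos, hTi l₂ hl₂_pos]
  have hk_int_le : ∫ s in Set.Ioc 0 t, k s ≤ (l₂ - l₁) / (l₁ * l₂) := by
    rw [hk_int]
    rw [div_sub_div _ _ hl₁_pos.ne' hl₂_pos.ne']
    apply div_le_div_of_nonneg_right _ (by positivity)
    have hBA : B ≤ A := Real.exp_le_exp.2 (by nlinarith)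
    have hB_pos : 0 < B := Real.exp_pos _
    have hmul : l₁ * B ≤ l₂ * A := mul_le_mul hl₁₂ hBA hB_pos.le hl₂_pos.le
    linarith
  -- forced-term bound
  have hgIoc : IntegrableOn g (Set.Ioc 0 t) :=
    (intervalIntegrable_iff_integrableOn_Ioc_of_le ht).1 (hgI t ht)
  have hkg_int : IntegrableOn (fun s => k s * g s) (Set.Ioc 0 t) := by
    have h1 : IntegrableOn (fun s => A * (Real.exp (l₁ * s) * g s)
        - B * (Real.exp (l₂ * s) * g s)) (Set.Ioc 0 t) := by
      apply Integrable.sub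
      · exact (((intervalIntegrable_iff_integrableOn_Ioc_of_le ht).1 hW₁).const_mul A)
      · exact (((intervalIntegrable_iff_integrableOn_Ioc_of_le ht).1 hW₂).const_mul B)
    apply h1.congr
    apply ae_of_all
    intro s
    simp only [hk_def, hA_def, hB_def, Real.exp_add]
    ring
  have hforce : |∫ s in Set.Ioc 0 t, k s * g s| ≤ M * (l₂ - l₁) := by
    have h1 : |∫ s in Set.Ioc 0 t, k s * g s| ≤ ∫ s in Set.Ioc 0 t, |k s * g s| := by
      simpa only [Real.norm_eq_abs] using
        MeasureTheory.norm_integral_le_integral_norm (μ := volume.restrict (Set.Ioc 0 t))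
          (fun s => k s * g s)
    have h2 : ∫ s in Set.Ioc 0 t, |k s * g s| ≤ ∫ s in Set.Ioc 0 t, k s * (b^2 * M) := by
      apply integral_mono_ae hkg_int.abs ((hk_cont.integrableOn_Ioc).mul_const _)
      filter_upwards [ae_restrict_mem measurableSet_Ioc, ae_restrict_of_ae hu_bdd] with s hs hbd
      have hk0 := hk_nonneg s hs
      calc |k s * g s| = k s * |g s| := by rw [abs_mul, abs_of_nonneg hk0]
        _ = k s * (b^2 * |u s|) := by rw [hg_def]; simp [abs_mul, abs_of_pos (pow_pos hb 2)]
        _ ≤ k s * (b^2 * M) := by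
            apply mul_le_mul_of_nonneg_left _ hk0
            exact mul_le_mul_of_nonneg_left (hbd hs.1.le) (by positivity)
    calc |∫ s in Set.Ioc 0 t, k s * g s|
        ≤ ∫ s in Set.Ioc 0 t, |k s * g s| := h1
      _ ≤ ∫ s in Set.Ioc 0 t, k s * (b^2 * M) := h2
      _ = (∫ s in Set.Ioc 0 t, k s) * (b^2 * M) := MeasureTheory.integral_mul_const _ _
      _ ≤ ((l₂ - l₁) / (l₁ * l₂)) * (b^2 * M) :=
          mul_le_mul_of_nonneg_right hk_int_le (by positivity)
      _ = M * (l₂ - l₁) := by rw [hprod]; field_simp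
  -- homogeneous bound
  have hhom : |A * (l₂ * η₁₀ + η₂₀) - B * (l₁ * η₁₀ + η₂₀)|
      ≤ 2*ξ*b*|η₁₀| + 2*|η₂₀| := by
    have h1 : |A * (l₂ * η₁₀ + η₂₀)| ≤ l₂ * |η₁₀| + |η₂₀| := by
      rw [abs_mul, abs_of_pos (Real.exp_pos _)]
      calc A * |l₂ * η₁₀ + η₂₀| ≤ 1 * |l₂ * η₁₀ + η₂₀| :=
            mul_le_mul_of_nonneg_right hA1 (abs_nonneg _)
        _ = |l₂ * η₁₀ + η₂₀| := one_mul _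
        _ ≤ |l₂ * η₁₀| + |η₂₀| := abs_add_le _ _
        _ = l₂ * |η₁₀| + |η₂₀| := by rw [abs_mul, abs_of_pos hl₂_pos]
    have h2 : |B * (l₁ * η₁₀ + η₂₀)| ≤ l₁ * |η₁₀| + |η₂₀| := by
      rw [abs_mul, abs_of_pos (Real.exp_pos _)]
      calc B * |l₁ * η₁₀ + η₂₀| ≤ 1 * |l₁ * η₁₀ + η₂₀| :=
            mul_le_mul_of_nonneg_right hB1 (abs_nonneg _)
        _ = |l₁ * η₁₀ + η₂₀| := one_mul _
        _ ≤ |l₁ * η₁₀| + |η₂₀| := abs_add_le _ _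
        _ = l₁ * |η₁₀| + |η₂₀| := by rw [abs_mul, abs_of_pos hl₁_pos]
    calc |A * (l₂ * η₁₀ + η₂₀) - B * (l₁ * η₁₀ + η₂₀)|
        ≤ |A * (l₂ * η₁₀ + η₂₀)| + |B * (l₁ * η₁₀ + η₂₀)| := abs_sub _ _
      _ ≤ (l₂ * |η₁₀| + |η₂₀|) + (l₁ * |η₁₀| + |η₂₀|) := add_le_add h1 h2
      _ = 2*ξ*b*|η₁₀| + 2*|η₂₀| := by linear_combination |η₁₀| * hsum
  -- combine
  have hlin : η₁ t = (z₁ t - z₂ t) / (l₂ - l₁) := by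
    rw [hz₁_def, hz₂_def]
    field_simp
    ring
  have htot : |z₁ t - z₂ t| ≤ (2*ξ*b*|η₁₀| + 2*|η₂₀|) + M * (l₂ - l₁) := by
    rw [key]
    calc |(A * (l₂ * η₁₀ + η₂₀) - B * (l₁ * η₁₀ + η₂₀)) + ∫ s in Set.Ioc 0 t, k s * g s|
        ≤ |A * (l₂ * η₁₀ + η₂₀) - B * (l₁ * η₁₀ + η₂₀)| + |∫ s in Set.Ioc 0 t, k s * g s| :=
          abs_add_le _ _
      _ ≤ (2*ξ*b*|η₁₀| + 2*|η₂₀|) + M * (l₂ - l₁) := add_le_add hhom hforce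
  rw [hlin, abs_div, abs_of_pos hdiff_pos]
  rw [div_le_iff₀ hdiff_pos]
  have hfin : ((ξ * |η₁₀| + |η₂₀| / b) / σ + M) * (l₂ - l₁)
      = (2*ξ*b*|η₁₀| + 2*|η₂₀|) + M * (l₂ - l₁) := by
    rw [hdiff]
    field_simp
  rw [hσ_def] at hfin ⊢
  rw [hfin]
  exact htot
end

section
/- Let b > 0, ξ > 1, M ≥ 0, and let u : [0,∞) → ℝ be Lebesgue measurable with essential supremum ‖u‖∞ = M. Suppose (η₁, η₂) : [0,∞) → ℝ² is locally absolutely continuous, satisfies η̇₁(t) = η₂(t) and η̇₂(t) = −2ξb·η₂(t) − b²·η₁(t) + b²·u(t) for almost every t ≥ 0, with η₁(0) = η₁₀ and η₂(0) = η₂₀. Then for all t ≥ 0, |η₂(t)| ≤ (b|η₁₀| + ξ|η₂₀|)/√(ξ² − 1) + bM/√(ξ² − 1). -/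
open MeasureTheory
open Set


lemma stmt1_fubini_aux (lam t : ℝ) (ht : 0 ≤ t) (h : ℝ → ℝ)
    (hh : IntegrableOn h (Set.Ioc 0 t) volume) :
    ∫ s in (0:ℝ)..t, (lam * Real.exp (lam * s)) * (∫ r in (0:ℝ)..s, h r)
      = ∫ r in (0:ℝ)..t, (Real.exp (lam * t) - Real.exp (lam * r)) * h r := by
  set c : ℝ → ℝ := fun s => lam * Real.exp (lam * s) with hc
  have hc_cont : Continuous c := by fun_prop
  have hcInt : Integrable c (volume.restrict (Ioc 0 t)) := (hc_cont.intervalIntegrable 0 t).1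
  have hmeasS : MeasurableSet {p : ℝ × ℝ | p.2 ≤ p.1} :=
    measurableSet_le measurable_snd measurable_fst
  have hG : Integrable (fun p : ℝ × ℝ => c p.1 * h p.2)
      ((volume.restrict (Ioc 0 t)).prod (volume.restrict (Ioc 0 t))) :=
    hcInt.mul_prod hh
  have hF : Integrable (Function.uncurry (fun s r : ℝ => if r ≤ s then c s * h r else 0))
      ((volume.restrict (Ioc 0 t)).prod (volume.restrict (Ioc 0 t))) := by
    have := hG.indicator hmeasS
    refine this.congr ?_
    filter_upwards with p
    simp only [Function.uncurry, Set.indicator_apply, Set.mem_setOf_eq]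
  rw [intervalIntegral.integral_of_le ht, intervalIntegral.integral_of_le ht]
  calc ∫ s in Ioc 0 t, c s * ∫ r in (0:ℝ)..s, h r
      = ∫ s in Ioc 0 t, ∫ r in Ioc 0 t, (if r ≤ s then c s * h r else 0) := by
        apply setIntegral_congr_fun measurableSet_Ioc
        intro s hs
        show c s * (∫ r in (0:ℝ)..s, h r) = ∫ r in Ioc 0 t, (if r ≤ s then c s * h r else 0)
        have h1 : ∫ r in (0:ℝ)..s, h r = ∫ r in Ioc 0 s, h r :=
          intervalIntegral.integral_of_le hs.1.le
        have h2 : ∫ r in Ioc 0 t, (if r ≤ s then c s * h r else 0)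
            = ∫ r in Ioc 0 t ∩ Iic s, c s * h r := by
          rw [← setIntegral_indicator measurableSet_Iic]
          congr 1
        have h3 : Ioc 0 t ∩ Iic s = Ioc 0 s := by
          ext r
          simp only [mem_inter_iff, mem_Ioc, mem_Iic]
          constructor
          · rintro ⟨⟨h1', _⟩, h2'⟩; exact ⟨h1', h2'⟩
          · rintro ⟨h1', h2'⟩; exact ⟨⟨h1', h2'.trans hs.2⟩, h2'⟩
        rw [h1, h2, h3, integral_const_mul]
    _ = ∫ r in Ioc 0 t, ∫ s in Ioc 0 t, (if r ≤ s then c s * h r else 0) :=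
        integral_integral_swap hF
    _ = ∫ r in Ioc 0 t, (Real.exp (lam * t) - Real.exp (lam * r)) * h r := by
        apply setIntegral_congr_fun measurableSet_Ioc
        intro r hr
        show (∫ s in Ioc 0 t, (if r ≤ s then c s * h r else 0)) = (Real.exp (lam * t) - Real.exp (lam * r)) * h r
        have h2 : ∫ s in Ioc 0 t, (if r ≤ s then c s * h r else 0)
            = ∫ s in Ioc 0 t ∩ Ici r, c s * h r := by
          rw [← setIntegral_indicator measurableSet_Ici]
          congr 1
        have h3 : Ioc 0 t ∩ Ici r = Icc r t := by
          ext s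
          simp only [mem_inter_iff, mem_Ioc, mem_Ici, mem_Icc]
          constructor
          · rintro ⟨⟨_, h1'⟩, h2'⟩; exact ⟨h2', h1'⟩
          · rintro ⟨h1', h2'⟩; exact ⟨⟨lt_of_lt_of_le hr.1 h1', h2'⟩, h1'⟩
        have hFTC : ∫ s in r..t, c s = Real.exp (lam * t) - Real.exp (lam * r) := by
          have hd : ∀ x ∈ Set.uIcc r t, HasDerivAt (fun y => Real.exp (lam * y)) (c x) x := by
            intro x _
            have := (Real.hasDerivAt_exp (lam * x)).comp x ((hasDerivAt_id x).const_mul lam)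
            simpa [hc, mul_comm, Function.comp_def] using this
          exact intervalIntegral.integral_eq_sub_of_hasDerivAt hd
            (hc_cont.intervalIntegrable r t)
        rw [h2, h3, integral_Icc_eq_integral_Ioc,
          ← intervalIntegral.integral_of_le hr.2, intervalIntegral.integral_mul_const, hFTC]

lemma stmt1_ftc (lam a b : ℝ) :
    ∫ s in a..b, lam * Real.exp (lam * s) = Real.exp (lam * b) - Real.exp (lam * a) := by
  have hd : ∀ x ∈ Set.uIcc a b,
      HasDerivAt (fun y => Real.exp (lam * y)) (lam * Real.exp (lam * x)) x := by
    intro x _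
    have := (Real.hasDerivAt_exp (lam * x)).comp x ((hasDerivAt_id x).const_mul lam)
    simpa [mul_comm, Function.comp_def] using this
  exact intervalIntegral.integral_eq_sub_of_hasDerivAt hd
    ((by fun_prop : Continuous fun s => lam * Real.exp (lam * s)).intervalIntegrable a b)

lemma stmt1_key (lam C : ℝ) (hlam : 0 < lam) (hC : 0 ≤ C) (w v : ℝ → ℝ)
    (hw : ContinuousOn w (Set.Ici 0))
    (hv_int : ∀ t, 0 ≤ t → IntervalIntegrable v volume 0 t)
    (hv_bdd : ∀ᵐ s ∂volume, 0 ≤ s → |v s| ≤ C)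
    (heq : ∀ t, 0 ≤ t → w t = w 0 + ∫ s in (0:ℝ)..t, (-lam * w s + v s)) :
    ∀ t, 0 ≤ t → |w t| ≤ |w 0| + C / lam := by
  intro t ht
  set g : ℝ → ℝ := fun s => -lam * w s + v s with hgdef
  set E : ℝ → ℝ := fun s => Real.exp (lam * s) with hEdef
  have hE_cont : Continuous E := by fun_prop
  have hE0 : E 0 = 1 := by simp [hEdef]
  have huIcc : ∀ t' : ℝ, 0 ≤ t' → Set.uIcc (0:ℝ) t' ⊆ Set.Ici 0 := by
    intro t' ht'
    rw [Set.uIcc_of_le ht']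
    exact Set.Icc_subset_Ici_self
  have hw_int : ∀ t', 0 ≤ t' → IntervalIntegrable w volume 0 t' := fun t' ht' =>
    (hw.mono (huIcc t' ht')).intervalIntegrable
  have hg_int : ∀ t', 0 ≤ t' → IntervalIntegrable g volume 0 t' := fun t' ht' =>
    ((hw_int t' ht').const_mul (-lam)).add (hv_int t' ht')
  have hEw_int : IntervalIntegrable (fun s => lam * E s * w s) volume 0 t :=
    (hw_int t ht).continuousOn_mul ((by fun_prop : Continuous fun s => lam * E s).continuousOn)
  have hEg_int : IntervalIntegrable (fun s => E s * g s) volume 0 t :=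
    (hg_int t ht).continuousOn_mul hE_cont.continuousOn
  have hEtg_int : IntervalIntegrable (fun s => E t * g s) volume 0 t :=
    (hg_int t ht).const_mul (E t)
  have hEw0_int : IntervalIntegrable (fun s => lam * E s * w 0) volume 0 t :=
    ((by fun_prop : Continuous fun s => lam * E s * w 0)).intervalIntegrable 0 t
  set A : ℝ := ∫ s in (0:ℝ)..t, lam * E s * w s with hA
  set B : ℝ := ∫ s in (0:ℝ)..t, E s * g s with hB
  -- the Fubini identity instantiated at g
  have star : ∫ s in (0:ℝ)..t, (lam * E s) * (w s - w 0)
      = ∫ r in (0:ℝ)..t, (E t - E r) * g r := by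
    have := stmt1_fubini_aux lam t ht g (hg_int t ht).1
    rw [← this]
    apply intervalIntegral.integral_congr
    intro s hs
    have hs0 : 0 ≤ s := (huIcc t ht hs).out
    have hws : w s - w 0 = ∫ r in (0:ℝ)..s, g r := by rw [heq s hs0]; ring
    show lam * E s * (w s - w 0) = lam * Real.exp (lam * s) * ∫ r in (0:ℝ)..s, g r
    rw [hws]
    try simp only [hEdef]
  -- expand the left side
  have lhs_eq : ∫ s in (0:ℝ)..t, (lam * E s) * (w s - w 0) = A - w 0 * (E t - 1) := by
    have h1 : ∫ s in (0:ℝ)..t, (lam * E s) * (w s - w 0)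
        = ∫ s in (0:ℝ)..t, (lam * E s * w s - lam * E s * w 0) := by
      apply intervalIntegral.integral_congr; intro s _; ring
    rw [h1, intervalIntegral.integral_sub hEw_int hEw0_int, ← hA,
      intervalIntegral.integral_mul_const, stmt1_ftc lam 0 t]
    rw [show Real.exp (lam * 0) = 1 by simp]
    ring
  -- expand the right side
  have rhs_eq : ∫ r in (0:ℝ)..t, (E t - E r) * g r = E t * (w t - w 0) - B := by
    have h1 : ∫ r in (0:ℝ)..t, (E t - E r) * g r
        = ∫ r in (0:ℝ)..t, (E t * g r - E r * g r) := by
      apply intervalIntegral.integral_congr; intro r _; ring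
    rw [h1, intervalIntegral.integral_sub hEtg_int hEg_int, ← hB,
      intervalIntegral.integral_const_mul]
    have hwt : (∫ s in (0:ℝ)..t, g s) = w t - w 0 := by
      have := heq t ht; linarith
    rw [hwt]
  -- combine
  have hAB : A + B = ∫ s in (0:ℝ)..t, E s * v s := by
    rw [hA, hB, ← intervalIntegral.integral_add hEw_int hEg_int]
    apply intervalIntegral.integral_congr
    intro s _
    simp only [hgdef]
    ring
  have keyid : E t * w t = w 0 + ∫ s in (0:ℝ)..t, E s * v s := by
    have := star
    rw [lhs_eq, rhs_eq] at this
    rw [← hAB]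
    linarith
  -- bound the integral term
  have hEv_int : IntervalIntegrable (fun s => E s * v s) volume 0 t :=
    (hv_int t ht).continuousOn_mul hE_cont.continuousOn
  have hCE_int : IntervalIntegrable (fun s => C * E s) volume 0 t :=
    ((by fun_prop : Continuous fun s => C * E s)).intervalIntegrable 0 t
  have hbd : |∫ s in (0:ℝ)..t, E s * v s| ≤ C / lam * (E t - 1) := by
    have h1 : |∫ s in (0:ℝ)..t, E s * v s| ≤ ∫ s in (0:ℝ)..t, |E s * v s| :=
      intervalIntegral.abs_integral_le_integral_abs ht
    have h2 : (∫ s in (0:ℝ)..t, |E s * v s|) ≤ ∫ s in (0:ℝ)..t, C * E s := by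
      apply intervalIntegral.integral_mono_ae_restrict ht hEv_int.abs hCE_int
      filter_upwards [ae_restrict_of_ae hv_bdd, ae_restrict_mem measurableSet_Icc]
        with s h1' h2'
      have hvs := h1' h2'.1
      have hEpos : 0 < E s := Real.exp_pos _
      rw [abs_mul, abs_of_pos hEpos]
      calc E s * |v s| ≤ E s * C := by nlinarith
        _ = C * E s := by ring
    have h3 : ∫ s in (0:ℝ)..t, C * E s = C / lam * (E t - 1) := by
      have e1 : ∀ s : ℝ, C * E s = C / lam * (lam * E s) := by
        intro s; field_simp
      simp_rw [e1]
      rw [intervalIntegral.integral_const_mul, stmt1_ftc lam 0 t]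
      simp [hEdef]
    linarith
  -- finish
  have hEt1 : 1 ≤ E t := Real.one_le_exp (by positivity)
  have hEtpos : 0 < E t := Real.exp_pos _
  have hfin : E t * |w t| ≤ |w 0| + C / lam * (E t - 1) := by
    have habs : E t * |w t| = |E t * w t| := by
      rw [abs_mul, abs_of_pos hEtpos]
    rw [habs, keyid]
    calc |w 0 + ∫ s in (0:ℝ)..t, E s * v s|
        ≤ |w 0| + |∫ s in (0:ℝ)..t, E s * v s| := abs_add_le _ _
      _ ≤ |w 0| + C / lam * (E t - 1) := by linarith
  have hCl : 0 ≤ C / lam := div_nonneg hC hlam.le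
  nlinarith [abs_nonneg (w 0), abs_nonneg (w t)]


/-- Bound on the second component of a second-order low-pass
filter driven by a measurable essentially bounded input. The filter
η̇₁ = η₂, η̇₂ = −2ξb·η₂ − b²·η₁ + b²·u (a.e. on [0,∞)) is encoded, as usual for
locally absolutely continuous solutions, by the integral (variation of
constants) identities together with local integrability of the derivatives. -/
theorem stmt1
    (b ξ M : ℝ) (hb : 0 < b) (hξ : 1 < ξ) (hM : 0 ≤ M)
    (u η₁ η₂ : ℝ → ℝ) (η₁₀ η₂₀ : ℝ)
    (hu_meas : Measurable u)
    (hu_bdd : ∀ᵐ t ∂volume, 0 ≤ t → |u t| ≤ M)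
    (h₁0 : η₁ 0 = η₁₀) (h₂0 : η₂ 0 = η₂₀)
    (hcont₁ : ContinuousOn η₁ (Set.Ici 0))
    (hcont₂ : ContinuousOn η₂ (Set.Ici 0))
    (hint : ∀ t, 0 ≤ t →
      IntervalIntegrable (fun s => -(2*ξ*b) * η₂ s - b^2 * η₁ s + b^2 * u s) volume 0 t)
    (h₁ : ∀ t, 0 ≤ t → η₁ t = η₁₀ + ∫ s in (0:ℝ)..t, η₂ s)
    (h₂ : ∀ t, 0 ≤ t → η₂ t = η₂₀ + ∫ s in (0:ℝ)..t,
      (-(2*ξ*b) * η₂ s - b^2 * η₁ s + b^2 * u s)) :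
    ∀ t, 0 ≤ t →
      |η₂ t| ≤ (b * |η₁₀| + ξ * |η₂₀|) / Real.sqrt (ξ^2 - 1) + b * M / Real.sqrt (ξ^2 - 1) := by
  set σ : ℝ := Real.sqrt (ξ^2 - 1) with hσdef
  have hξ21 : (0:ℝ) < ξ^2 - 1 := by nlinarith
  have hσpos : 0 < σ := Real.sqrt_pos.mpr hξ21
  have hσ2 : σ^2 = ξ^2 - 1 := Real.sq_sqrt hξ21.le
  have hσξ : σ < ξ := by nlinarith
  set l₁ : ℝ := b * (ξ - σ) with hl₁def
  set l₂ : ℝ := b * (ξ + σ) with hl₂def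
  have hl₁pos : 0 < l₁ := by apply mul_pos hb; linarith
  have hl₂pos : 0 < l₂ := by apply mul_pos hb; positivity
  have hprod : l₁ * l₂ = b^2 := by rw [hl₁def, hl₂def]; nlinarith
  have hsum : l₁ + l₂ = 2*ξ*b := by rw [hl₁def, hl₂def]; ring
  have hdiff : l₂ - l₁ = 2*b*σ := by rw [hl₁def, hl₂def]; ring
  set w₁ : ℝ → ℝ := fun t => l₂ * η₁ t + η₂ t with hw₁def
  set w₂ : ℝ → ℝ := fun t => l₁ * η₁ t + η₂ t with hw₂def
  set v : ℝ → ℝ := fun s => b^2 * u s with hvdef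
  set C : ℝ := b^2 * M with hCdef
  have hCnn : 0 ≤ C := by positivity
  -- interval integrability facts
  have huIcc : ∀ t : ℝ, 0 ≤ t → Set.uIcc (0:ℝ) t ⊆ Set.Ici 0 := by
    intro t ht
    rw [Set.uIcc_of_le ht]
    exact Set.Icc_subset_Ici_self
  have hη₁int : ∀ t, 0 ≤ t → IntervalIntegrable η₁ volume 0 t := fun t ht =>
    (hcont₁.mono (huIcc t ht)).intervalIntegrable
  have hη₂int : ∀ t, 0 ≤ t → IntervalIntegrable η₂ volume 0 t := fun t ht =>
    (hcont₂.mono (huIcc t ht)).intervalIntegrable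
  have hv_int : ∀ t, 0 ≤ t → IntervalIntegrable v volume 0 t := by
    intro t ht
    have hfe : v = fun s => ((-(2*ξ*b) * η₂ s - b^2 * η₁ s + b^2 * u s) + (2*ξ*b) * η₂ s)
        + b^2 * η₁ s := by
      funext s; simp only [hvdef]; ring
    rw [hfe]
    exact (((hint t ht).add ((hη₂int t ht).const_mul _)).add ((hη₁int t ht).const_mul _))
  have hv_bdd : ∀ᵐ s ∂volume, 0 ≤ s → |v s| ≤ C := by
    filter_upwards [hu_bdd] with s hs hs0
    have := hs hs0
    simp only [hvdef, hCdef]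
    rw [abs_mul, abs_of_nonneg (by positivity : (0:ℝ) ≤ b^2)]
    exact mul_le_mul_of_nonneg_left this (by positivity)
  -- integral representations for w₁ and w₂
  have hrep : ∀ (l l' : ℝ), l + l' = 2*ξ*b → l * l' = b^2 →
      ∀ t, 0 ≤ t → (fun t => l' * η₁ t + η₂ t) t
        = (fun t => l' * η₁ t + η₂ t) 0
          + ∫ s in (0:ℝ)..t, (-l * ((fun t => l' * η₁ t + η₂ t) s) + v s) := by
    intro l l' hsum' hprod' t ht
    simp only []
    have e1 : l' * η₁ t + η₂ t
        = l' * η₁ 0 + η₂ 0 + ((∫ s in (0:ℝ)..t, l' * η₂ s)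
          + ∫ s in (0:ℝ)..t, (-(2*ξ*b) * η₂ s - b^2 * η₁ s + b^2 * u s)) := by
      rw [h₁ t ht, h₂ t ht, intervalIntegral.integral_const_mul, h₁0, h₂0]
      ring
    rw [e1, ← intervalIntegral.integral_add ((hη₂int t ht).const_mul _) (hint t ht)]
    congr 1
    apply intervalIntegral.integral_congr
    intro s _
    simp only [hvdef]
    linear_combination (η₁ s) * hprod' + (η₂ s) * hsum'
  have hwcont : ∀ l' : ℝ, ContinuousOn (fun t => l' * η₁ t + η₂ t) (Set.Ici 0) :=
    fun l' => (continuousOn_const.mul hcont₁).add hcont₂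
  have key1 : ∀ t, 0 ≤ t → |w₁ t| ≤ |w₁ 0| + C / l₁ :=
    stmt1_key l₁ C hl₁pos hCnn w₁ v (hwcont l₂) hv_int hv_bdd
      (hrep l₁ l₂ hsum hprod)
  have key2 : ∀ t, 0 ≤ t → |w₂ t| ≤ |w₂ 0| + C / l₂ :=
    stmt1_key l₂ C hl₂pos hCnn w₂ v (hwcont l₁) hv_int hv_bdd
      (hrep l₂ l₁ (by linarith) (by linarith [hprod]))
  -- combine
  intro t ht
  have hK1 := key1 t ht
  have hK2 := key2 t ht
  have hCd1 : l₁ * (C / l₁) = C := by field_simp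
  have hCd2 : l₂ * (C / l₂) = C := by field_simp
  have habs : (l₂ - l₁) * |η₂ t| ≤ l₂ * |w₂ t| + l₁ * |w₁ t| := by
    have e2 : (l₂ - l₁) * η₂ t = l₂ * w₂ t - l₁ * w₁ t := by
      simp only [hw₁def, hw₂def]; ring
    have hd0 : (0:ℝ) < l₂ - l₁ := by rw [hdiff]; positivity
    calc (l₂ - l₁) * |η₂ t| = |(l₂ - l₁) * η₂ t| := by
          rw [abs_mul (l₂ - l₁) (η₂ t), abs_of_pos hd0]
      _ = |l₂ * w₂ t - l₁ * w₁ t| := by rw [e2]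
      _ ≤ |l₂ * w₂ t| + |l₁ * w₁ t| := abs_sub _ _
      _ = l₂ * |w₂ t| + l₁ * |w₁ t| := by
          rw [abs_mul l₂ (w₂ t), abs_mul l₁ (w₁ t), abs_of_pos hl₂pos, abs_of_pos hl₁pos]
  have hw10 : |w₁ 0| ≤ l₂ * |η₁₀| + |η₂₀| := by
    have : w₁ 0 = l₂ * η₁₀ + η₂₀ := by simp only [hw₁def]; rw [h₁0, h₂0]
    rw [this]
    calc |l₂ * η₁₀ + η₂₀| ≤ |l₂ * η₁₀| + |η₂₀| := abs_add_le _ _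
      _ = l₂ * |η₁₀| + |η₂₀| := by rw [abs_mul l₂ η₁₀, abs_of_pos hl₂pos]
  have hw20 : |w₂ 0| ≤ l₁ * |η₁₀| + |η₂₀| := by
    have : w₂ 0 = l₁ * η₁₀ + η₂₀ := by simp only [hw₂def]; rw [h₁0, h₂0]
    rw [this]
    calc |l₁ * η₁₀ + η₂₀| ≤ |l₁ * η₁₀| + |η₂₀| := abs_add_le _ _
      _ = l₁ * |η₁₀| + |η₂₀| := by rw [abs_mul l₁ η₁₀, abs_of_pos hl₁pos]
  have c1 : l₁ * |w₁ t| ≤ l₁ * |w₁ 0| + C := by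
    have := mul_le_mul_of_nonneg_left hK1 hl₁pos.le
    rw [mul_add, hCd1] at this
    exact this
  have c2 : l₂ * |w₂ t| ≤ l₂ * |w₂ 0| + C := by
    have := mul_le_mul_of_nonneg_left hK2 hl₂pos.le
    rw [mul_add, hCd2] at this
    exact this
  have c4 : l₁ * |w₁ 0| ≤ b^2 * |η₁₀| + l₁ * |η₂₀| := by
    have h' := mul_le_mul_of_nonneg_left hw10 hl₁pos.le
    have e' : l₁ * (l₂ * |η₁₀| + |η₂₀|) = b^2 * |η₁₀| + l₁ * |η₂₀| := by
      rw [mul_add, ← mul_assoc, hprod]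
    linarith only [h', e'.le, e'.ge]
  have c5 : l₂ * |w₂ 0| ≤ b^2 * |η₁₀| + l₂ * |η₂₀| := by
    have h' := mul_le_mul_of_nonneg_left hw20 hl₂pos.le
    have e' : l₂ * (l₁ * |η₁₀| + |η₂₀|) = b^2 * |η₁₀| + l₂ * |η₂₀| := by
      rw [mul_add, ← mul_assoc, mul_comm l₂ l₁, hprod]
    linarith only [h', e'.le, e'.ge]
  have e3 : l₁ * |η₂₀| + l₂ * |η₂₀| = 2*ξ*b*|η₂₀| := by rw [← add_mul, hsum]
  have habs' : 2*b*σ * |η₂ t| ≤ l₂ * |w₂ t| + l₁ * |w₁ t| := by rw [← hdiff]; exact habs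
  have H : 2*b*σ * |η₂ t| ≤ 2*b^2*|η₁₀| + 2*ξ*b*|η₂₀| + 2*C := by
    linarith only [habs', c1, c2, c4, c5, e3]
  rw [← add_div, le_div_iff₀ hσpos]
  rw [hCdef] at H
  have H' : 2*b*(|η₂ t| * σ) ≤ 2*b*(b * |η₁₀| + ξ * |η₂₀| + b * M) := by linarith only [H]
  exact le_of_mul_le_mul_left H' (by positivity)
end

section
/- Let b > 0, ξ > 1, γ₁ = b(ξ + √(ξ² − 1)), γ₂ = b(ξ − √(ξ² − 1)), and let η₁₀, η₂₀ ∈ ℝ. Define c₁ = (−γ₂η₁₀ − η₂₀)/(γ₁ − γ₂) and c₂ = (γ₁η₁₀ + η₂₀)/(γ₁ − γ₂). Then |c₁| + |c₂| ≤ (ξ|η₁₀| + |η₂₀|/b)/√(ξ² − 1). -/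
/-- Bound on the homogeneous-solution coefficients c₁, c₂ of
the overdamped second-order filter in terms of the initial conditions. -/
theorem stmt3 (b ξ η₁₀ η₂₀ : ℝ) (hb : 0 < b) (hξ : 1 < ξ)
    (γ₁ γ₂ c₁ c₂ : ℝ)
    (hγ₁ : γ₁ = b * (ξ + Real.sqrt (ξ^2 - 1)))
    (hγ₂ : γ₂ = b * (ξ - Real.sqrt (ξ^2 - 1)))
    (hc₁ : c₁ = (-γ₂ * η₁₀ - η₂₀) / (γ₁ - γ₂))
    (hc₂ : c₂ = (γ₁ * η₁₀ + η₂₀) / (γ₁ - γ₂)) :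
    |c₁| + |c₂| ≤ (ξ * |η₁₀| + |η₂₀| / b) / Real.sqrt (ξ^2 - 1) := by
  have h1 : (0:ℝ) < ξ^2 - 1 := by nlinarith
  set s := Real.sqrt (ξ^2 - 1) with hs
  have hs0 : 0 < s := Real.sqrt_pos.mpr h1
  have hs2 : s^2 = ξ^2 - 1 := Real.sq_sqrt h1.le
  have hsξ : s < ξ := by nlinarith
  have hd : γ₁ - γ₂ = 2*b*s := by rw [hγ₁, hγ₂]; ring
  have hd0 : (0:ℝ) < 2*b*s := by positivity
  have hγ₂0 : 0 ≤ γ₂ := by rw [hγ₂]; nlinarith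
  have hγ₁0 : 0 ≤ γ₁ := by rw [hγ₁]; nlinarith
  have h₁ : |c₁| ≤ (γ₂*|η₁₀| + |η₂₀|)/(2*b*s) := by
    rw [hc₁, hd, abs_div, abs_of_pos hd0]
    gcongr
    calc |-γ₂ * η₁₀ - η₂₀| ≤ |-γ₂ * η₁₀| + |η₂₀| := abs_sub _ _
      _ = γ₂*|η₁₀| + |η₂₀| := by rw [abs_mul, abs_neg, abs_of_nonneg hγ₂0]
  have h₂ : |c₂| ≤ (γ₁*|η₁₀| + |η₂₀|)/(2*b*s) := by
    rw [hc₂, hd, abs_div, abs_of_pos hd0]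
    gcongr
    calc |γ₁ * η₁₀ + η₂₀| ≤ |γ₁ * η₁₀| + |η₂₀| := abs_add_le _ _
      _ = γ₁*|η₁₀| + |η₂₀| := by rw [abs_mul, abs_of_nonneg hγ₁0]
  have hsum : γ₁ + γ₂ = 2*b*ξ := by rw [hγ₁, hγ₂]; ring
  have hfin : (γ₂*|η₁₀| + |η₂₀|)/(2*b*s) + (γ₁*|η₁₀| + |η₂₀|)/(2*b*s)
      = (ξ * |η₁₀| + |η₂₀| / b) / s := by
    rw [← add_div]
    rw [show γ₂*|η₁₀| + |η₂₀| + (γ₁*|η₁₀| + |η₂₀|) = (γ₁+γ₂)*|η₁₀| + 2*|η₂₀| by ring,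
      hsum]
    field_simp
  linarith
end

section
/- Let b > 0, ξ > 1, γ₁ = b(ξ + √(ξ² − 1)), γ₂ = b(ξ − √(ξ² − 1)), and let η₁₀, η₂₀ ∈ ℝ. Define c₁ = (−γ₂η₁₀ − η₂₀)/(γ₁ − γ₂) and c₂ = (γ₁η₁₀ + η₂₀)/(γ₁ − γ₂). Then γ₁|c₁| + γ₂|c₂| ≤ (b|η₁₀| + ξ|η₂₀|)/√(ξ² − 1). -/
/-- Weighted bound γ₁|c₁| + γ₂|c₂| on the homogeneous-solution
coefficients of the overdamped second-order filter. -/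
theorem stmt4 (b ξ η₁₀ η₂₀ : ℝ) (hb : 0 < b) (hξ : 1 < ξ)
    (γ₁ γ₂ c₁ c₂ : ℝ)
    (hγ₁ : γ₁ = b * (ξ + Real.sqrt (ξ^2 - 1)))
    (hγ₂ : γ₂ = b * (ξ - Real.sqrt (ξ^2 - 1)))
    (hc₁ : c₁ = (-γ₂ * η₁₀ - η₂₀) / (γ₁ - γ₂))
    (hc₂ : c₂ = (γ₁ * η₁₀ + η₂₀) / (γ₁ - γ₂)) :
    γ₁ * |c₁| + γ₂ * |c₂| ≤ (b * |η₁₀| + ξ * |η₂₀|) / Real.sqrt (ξ^2 - 1) := by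
  set s := Real.sqrt (ξ^2 - 1) with hsdef
  have hs : 0 < s := Real.sqrt_pos.2 (by nlinarith)
  have hs2 : s^2 = ξ^2 - 1 := Real.sq_sqrt (by nlinarith)
  have hsξ : s < ξ := by nlinarith
  have hγ₁pos : 0 < γ₁ := by rw [hγ₁]; positivity
  have hγ₂pos : 0 < γ₂ := by rw [hγ₂]; nlinarith
  have hd : γ₁ - γ₂ = 2*b*s := by rw [hγ₁, hγ₂]; ring
  have hbs : 0 < 2*b*s := by positivity
  have hX1 : |(-γ₂ * η₁₀ - η₂₀)| ≤ γ₂*|η₁₀| + |η₂₀| := by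
    calc |(-γ₂ * η₁₀ - η₂₀)| ≤ |(-γ₂ * η₁₀)| + |η₂₀| := abs_sub _ _
    _ = γ₂*|η₁₀| + |η₂₀| := by
        rw [neg_mul, abs_neg, abs_mul, abs_of_pos hγ₂pos]
  have hX2 : |(γ₁ * η₁₀ + η₂₀)| ≤ γ₁*|η₁₀| + |η₂₀| := by
    calc |(γ₁ * η₁₀ + η₂₀)| ≤ |(γ₁ * η₁₀)| + |η₂₀| := abs_add_le _ _
    _ = γ₁*|η₁₀| + |η₂₀| := by rw [abs_mul, abs_of_pos hγ₁pos]
  have h1 : γ₁ * |c₁| ≤ (γ₁*γ₂*|η₁₀| + γ₁*|η₂₀|)/(2*b*s) := by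
    rw [hc₁, hd, abs_div, abs_of_pos hbs, mul_div_assoc']
    gcongr ?_ / _
    nlinarith [hγ₁pos.le]
  have h2 : γ₂ * |c₂| ≤ (γ₁*γ₂*|η₁₀| + γ₂*|η₂₀|)/(2*b*s) := by
    rw [hc₂, hd, abs_div, abs_of_pos hbs, mul_div_assoc']
    gcongr ?_ / _
    nlinarith [hγ₂pos.le]
  have hsum : (γ₁*γ₂*|η₁₀| + γ₁*|η₂₀|)/(2*b*s) + (γ₁*γ₂*|η₁₀| + γ₂*|η₂₀|)/(2*b*s)
      = (b * |η₁₀| + ξ * |η₂₀|) / s := by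
    rw [← add_div, hγ₁, hγ₂]
    rw [div_eq_div_iff hbs.ne' hs.ne']
    linear_combination (-(2*b^2*s*|η₁₀|)) * hs2
  linarith
end

section
/- Let ω_b, C_f, K_VC, K_CC, μ, R, L > 0 and set k = min{K_VC, K_CC}. For all real numbers e_v, e_i, i_g, v_c, v_g, z, define u = −( K_CC + ((1 + e^z)·ω_b²/(4μ))·(1 + i_g² + v_c²) )·e_i − (ω_b/C_f)·e_v. Then −K_VC·e_v² + (ω_b/C_f)·e_v·e_i + e_i·u + (ω_b·R/L)·e_i·i_g − (ω_b/L)·e_i·v_c + (ω_b/L)·e_i·v_g ≤ −2k·(e_v²/2 + e_i²/2) + μ·(1 + R² + v_g²)/(L²·(1 + e^z)). -/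
private lemma young_aux (b x y : ℝ) (hb : 0 < b) :
    x * y ≤ b * x^2 + y^2 / (4 * b) := by
  rw [← sub_le_iff_le_add', le_div_iff₀ (by positivity)]
  nlinarith [sq_nonneg (2 * b * x - y)]

/-- Pointwise algebraic (Young's-inequality) estimate
underlying the dissipation bound of the d-channel storage function
W_d = e_v²/2 + e_i²/2 in the DADS-backstepping grid-forming controller. -/
theorem stmt9
    (ωb Cf KVC KCC μ R L : ℝ)
    (hωb : 0 < ωb) (hCf : 0 < Cf) (hKVC : 0 < KVC) (hKCC : 0 < KCC)
    (hμ : 0 < μ) (hR : 0 < R) (hL : 0 < L)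
    (k : ℝ) (hk : k = min KVC KCC) :
    ∀ ev ei ig vc vg z u : ℝ,
      u = -(KCC + ((1 + Real.exp z) * ωb^2 / (4 * μ)) * (1 + ig^2 + vc^2)) * ei
          - (ωb / Cf) * ev →
      -KVC * ev^2 + (ωb / Cf) * ev * ei + ei * u + (ωb * R / L) * ei * ig
          - (ωb / L) * ei * vc + (ωb / L) * ei * vg
        ≤ -(2 * k) * (ev^2 / 2 + ei^2 / 2)
          + μ * (1 + R^2 + vg^2) / (L^2 * (1 + Real.exp z)) := by
  intro ev ei ig vc vg z u hu
  subst hu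
  have hE : 0 < 1 + Real.exp z := by positivity
  set E := 1 + Real.exp z with hEdef
  set a : ℝ := E * ωb^2 / (4 * μ) with ha_def
  have ha : 0 < a := by rw [ha_def, hEdef]; positivity
  have hE' : E ≠ 0 := ne_of_gt hE
  have h1 : (ei * ig) * (ωb * R / L) ≤ a * (ei * ig)^2 + (ωb * R / L)^2 / (4 * a) :=
    young_aux a (ei * ig) (ωb * R / L) ha
  have h2 : (ei * vc) * (-(ωb / L)) ≤ a * (ei * vc)^2 + (-(ωb / L))^2 / (4 * a) :=
    young_aux a (ei * vc) (-(ωb / L)) ha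
  have h3 : ei * (ωb * vg / L) ≤ a * ei^2 + (ωb * vg / L)^2 / (4 * a) :=
    young_aux a ei (ωb * vg / L) ha
  have e1 : (ωb * R / L)^2 / (4 * a) = μ * R^2 / (L^2 * E) := by
    rw [ha_def]; field_simp
  have e2 : (-(ωb / L))^2 / (4 * a) = μ * 1 / (L^2 * E) := by
    rw [ha_def]; field_simp
  have e3 : (ωb * vg / L)^2 / (4 * a) = μ * vg^2 / (L^2 * E) := by
    rw [ha_def]; field_simp
  rw [e1] at h1; rw [e2] at h2; rw [e3] at h3
  have hkV : k ≤ KVC := hk ▸ min_le_left _ _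
  have hkC : k ≤ KCC := hk ▸ min_le_right _ _
  have hsum : μ * (1 + R^2 + vg^2) / (L^2 * E)
      = μ * R^2 / (L^2 * E) + μ * 1 / (L^2 * E) + μ * vg^2 / (L^2 * E) := by
    field_simp; ring
  have pV : 0 ≤ (KVC - k) * ev^2 := mul_nonneg (by linarith) (sq_nonneg ev)
  have pC : 0 ≤ (KCC - k) * ei^2 := mul_nonneg (by linarith) (sq_nonneg ei)
  ring_nf at h1 h2 h3 hsum pV pC ⊢
  linarith [h1, h2, h3, pV, pC, hsum]
end

section
/- Let ω_b, C_f, K_VC, K_CC, μ, R, L, Γ, ε > 0 and set k = min{K_VC, K_CC}. Let i_g, v_c : [0,∞) → ℝ be Lebesgue measurable, let v_g : [0,∞) → ℝ be Lebesgue measurable and essentially bounded with essential supremum ‖v_g‖∞, and let e_v, e_i, z : [0,∞) → ℝ be locally absolutely continuous functions satisfying, for almost every t ≥ 0: ė_v(t) = (ω_b/C_f)·e_i(t) − K_VC·e_v(t); ė_i(t) = u(t) + (ω_b·R/L)·i_g(t) − (ω_b/L)·v_c(t) + (ω_b/L)·v_g(t), where u(t) = −( K_CC + ((1 + e^{z(t)})·ω_b²/(4μ))·(1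 + i_g(t)² + v_c(t)²) )·e_i(t) − (ω_b/C_f)·e_v(t); and ż(t) = Γ·e^{−z(t)}·max{W(t) − ε, 0}, where W(t) = e_v(t)²/2 + e_i(t)²/2. Then for all t ≥ 0, W(t) ≤ e^{−2kt}·W(0) + μ·(1 + R² + ‖v_g‖∞²)/(2k·L²·(1 + e^{z(0)})); in particular, e_v(t)² ≤ 2e^{−2kt}·W(0) + μ·(1 + R² + ‖v_g‖∞²)/(k·L²). -/
open MeasureTheory

/-- The DADS nonlinear damping input u of the d-channel. -/
noncomputable def dadsInput (ωb Cf KCC μ : ℝ) (ig vc ev ei z : ℝ → ℝ) (s : ℝ) : ℝ :=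
  -(KCC + ((1 + Real.exp (z s)) * ωb^2 / (4 * μ)) * (1 + (ig s)^2 + (vc s)^2)) * ei s
    - (ωb / Cf) * ev s

/-- The d-channel storage function W = e_v²/2 + e_i²/2. -/
noncomputable def storageW (ev ei : ℝ → ℝ) (s : ℝ) : ℝ := (ev s)^2 / 2 + (ei s)^2 / 2

open Set in
private lemma dads_swap {f g : ℝ → ℝ} {t : ℝ}
    (hf : IntegrableOn f (Ioc 0 t)) (hg : IntegrableOn g (Ioc 0 t)) :
    ∫ s in Ioc (0:ℝ) t, f s * ∫ r in Ioc s t, g r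
      = ∫ r in Ioc (0:ℝ) t, (∫ s in Ioc (0:ℝ) r, f s) * g r := by
  have hmeasD : MeasurableSet {p : ℝ × ℝ | p.1 < p.2} :=
    measurableSet_lt measurable_fst measurable_snd
  have hΦ : Integrable ({p : ℝ × ℝ | p.1 < p.2}.indicator (fun p => f p.1 * g p.2))
      ((volume.restrict (Ioc (0:ℝ) t)).prod (volume.restrict (Ioc (0:ℝ) t))) :=
    (Integrable.mul_prod hf hg).indicator hmeasD
  have hswap := integral_integral_swap
    (f := fun s r => ({p : ℝ × ℝ | p.1 < p.2}.indicator (fun p => f p.1 * g p.2)) (s, r))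
    (μ := volume.restrict (Ioc (0:ℝ) t)) (ν := volume.restrict (Ioc (0:ℝ) t)) hΦ
  have hL : (∫ s in Ioc (0:ℝ) t, ∫ r in Ioc (0:ℝ) t,
        ({p : ℝ × ℝ | p.1 < p.2}.indicator (fun p => f p.1 * g p.2)) (s, r))
      = ∫ s in Ioc (0:ℝ) t, f s * ∫ r in Ioc s t, g r := by
    refine setIntegral_congr_fun measurableSet_Ioc (fun s hs => ?_)
    have h1 : (∫ r in Ioc (0:ℝ) t,
        ({p : ℝ × ℝ | p.1 < p.2}.indicator (fun p => f p.1 * g p.2)) (s, r))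
        = ∫ r in Ioc (0:ℝ) t, (Ioi s).indicator (fun r => f s * g r) r := by
      refine setIntegral_congr_fun measurableSet_Ioc (fun r _ => ?_)
      by_cases h : s < r <;> simp [Set.indicator_apply, h]
    rw [h1, setIntegral_indicator measurableSet_Ioi, Set.Ioc_inter_Ioi,
      sup_eq_right.mpr hs.1.le, integral_const_mul]
  have hR : (∫ r in Ioc (0:ℝ) t, ∫ s in Ioc (0:ℝ) t,
        ({p : ℝ × ℝ | p.1 < p.2}.indicator (fun p => f p.1 * g p.2)) (s, r))
      = ∫ r in Ioc (0:ℝ) t, (∫ s in Ioc (0:ℝ) r, f s) * g r := by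
    refine setIntegral_congr_fun measurableSet_Ioc (fun r hr => ?_)
    have h1 : (∫ s in Ioc (0:ℝ) t,
        ({p : ℝ × ℝ | p.1 < p.2}.indicator (fun p => f p.1 * g p.2)) (s, r))
        = ∫ s in Ioc (0:ℝ) t, (Iio r).indicator (fun s => f s * g r) s := by
      refine setIntegral_congr_fun measurableSet_Ioc (fun s _ => ?_)
      by_cases h : s < r <;> simp [Set.indicator_apply, h]
    have h2 : Ioc (0:ℝ) t ∩ Iio r = Ioo 0 r := by
      ext x
      simp only [mem_inter_iff, mem_Ioc, mem_Iio, mem_Ioo]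
      constructor
      · rintro ⟨⟨hx1, _⟩, hx3⟩; exact ⟨hx1, hx3⟩
      · rintro ⟨hx1, hx3⟩; exact ⟨⟨hx1, hx3.le.trans hr.2⟩, hx3⟩
    rw [h1, setIntegral_indicator measurableSet_Iio, h2,
      ← integral_Ioc_eq_integral_Ioo, integral_mul_const]
  rw [← hL, ← hR]; exact hswap

open Set in
private lemma dads_rep_mul {f g F G : ℝ → ℝ} {a b : ℝ}
    (hf : ∀ u, 0 ≤ u → IntervalIntegrable f volume 0 u)
    (hg : ∀ u, 0 ≤ u → IntervalIntegrable g volume 0 u)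
    (hF : ∀ u, 0 ≤ u → F u = a + ∫ s in (0:ℝ)..u, f s)
    (hG : ∀ u, 0 ≤ u → G u = b + ∫ s in (0:ℝ)..u, g s)
    {t : ℝ} (ht : 0 ≤ t) :
    F t * G t = a * b + ∫ s in (0:ℝ)..t, (f s * G s + F s * g s) := by
  have huIcc : Set.uIcc (0:ℝ) t = Set.Icc 0 t := uIcc_of_le ht
  have hprimf : ContinuousOn (fun u => ∫ s in (0:ℝ)..u, f s) (Set.uIcc 0 t) :=
    intervalIntegral.continuousOn_primitive_interval' (hf t ht) left_mem_uIcc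
  have hprimg : ContinuousOn (fun u => ∫ s in (0:ℝ)..u, g s) (Set.uIcc 0 t) :=
    intervalIntegral.continuousOn_primitive_interval' (hg t ht) left_mem_uIcc
  have hFc : ContinuousOn F (Set.uIcc 0 t) := by
    refine ((continuousOn_const (c := a)).add hprimf).congr ?_
    intro u hu; rw [huIcc] at hu; exact hF u hu.1
  have hGc : ContinuousOn G (Set.uIcc 0 t) := by
    refine ((continuousOn_const (c := b)).add hprimg).congr ?_
    intro u hu; rw [huIcc] at hu; exact hG u hu.1
  have hfG : IntervalIntegrable (fun s => f s * G s) volume 0 t :=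
    (hf t ht).mul_continuousOn hGc
  have hFg : IntervalIntegrable (fun s => F s * g s) volume 0 t :=
    (hg t ht).continuousOn_mul hFc
  have hfG0 : IntervalIntegrable (fun s => f s * ∫ r in (0:ℝ)..s, g r) volume 0 t :=
    (hf t ht).mul_continuousOn hprimg
  have hF0g : IntervalIntegrable (fun s => (∫ r in (0:ℝ)..s, f r) * g s) volume 0 t :=
    (hg t ht).continuousOn_mul hprimf
  have hgIcc : IntegrableOn g (Set.uIcc 0 t) := by
    rw [huIcc, integrableOn_Icc_iff_integrableOn_Ioc]
    exact (intervalIntegrable_iff_integrableOn_Ioc_of_le ht).1 (hg t ht)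
  have hprimgl : ContinuousOn (fun u => ∫ r in u..t, g r) (Set.uIcc 0 t) :=
    intervalIntegral.continuousOn_primitive_interval_left hgIcc
  have hfTg : IntervalIntegrable (fun s => f s * ∫ r in s..t, g r) volume 0 t :=
    (hf t ht).mul_continuousOn hprimgl
  have e1 : (∫ s in (0:ℝ)..t, f s * G s)
      = (∫ s in (0:ℝ)..t, f s) * b + ∫ s in (0:ℝ)..t, f s * ∫ r in (0:ℝ)..s, g r := by
    have heq : EqOn (fun s => f s * G s)
        (fun s => f s * b + f s * ∫ r in (0:ℝ)..s, g r) (Set.uIcc 0 t) := by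
      intro s hs; rw [huIcc] at hs
      simp only; rw [hG s hs.1]; ring
    rw [intervalIntegral.integral_congr heq,
      intervalIntegral.integral_add ((hf t ht).mul_const b) hfG0,
      intervalIntegral.integral_mul_const]
  have e2 : (∫ s in (0:ℝ)..t, F s * g s)
      = a * (∫ s in (0:ℝ)..t, g s) + ∫ s in (0:ℝ)..t, (∫ r in (0:ℝ)..s, f r) * g s := by
    have heq : EqOn (fun s => F s * g s)
        (fun s => a * g s + (∫ r in (0:ℝ)..s, f r) * g s) (Set.uIcc 0 t) := by
      intro s hs; rw [huIcc] at hs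
      simp only; rw [hF s hs.1]; ring
    rw [intervalIntegral.integral_congr heq,
      intervalIntegral.integral_add ((hg t ht).const_mul a) hF0g,
      intervalIntegral.integral_const_mul]
  have core : (∫ s in (0:ℝ)..t, f s) * (∫ s in (0:ℝ)..t, g s)
      = (∫ s in (0:ℝ)..t, f s * ∫ r in (0:ℝ)..s, g r)
        + ∫ s in (0:ℝ)..t, (∫ r in (0:ℝ)..s, f r) * g s := by
    have hsplit : EqOn (fun s => f s * ∫ r in (0:ℝ)..t, g r)
        (fun s => f s * (∫ r in (0:ℝ)..s, g r) + f s * ∫ r in s..t, g r) (Set.uIcc 0 t) := by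
      intro s hs; rw [huIcc] at hs
      simp only
      have hsub : Set.uIcc s t ⊆ Set.uIcc (0:ℝ) t := by
        rw [huIcc, Set.uIcc_of_le hs.2]; exact Set.Icc_subset_Icc hs.1 le_rfl
      rw [← mul_add, intervalIntegral.integral_add_adjacent_intervals (hg s hs.1)
        ((hg t ht).mono_set hsub)]
    have hswapstep : (∫ s in (0:ℝ)..t, f s * ∫ r in s..t, g r)
        = ∫ s in (0:ℝ)..t, (∫ r in (0:ℝ)..s, f r) * g s := by
      have hfIoc : IntegrableOn f (Ioc 0 t) :=
        (intervalIntegrable_iff_integrableOn_Ioc_of_le ht).1 (hf t ht)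
      have hgIoc : IntegrableOn g (Ioc 0 t) :=
        (intervalIntegrable_iff_integrableOn_Ioc_of_le ht).1 (hg t ht)
      rw [intervalIntegral.integral_of_le ht, intervalIntegral.integral_of_le ht]
      calc (∫ s in Ioc (0:ℝ) t, f s * ∫ r in s..t, g r)
          = ∫ s in Ioc (0:ℝ) t, f s * ∫ r in Ioc s t, g r := by
            refine setIntegral_congr_fun measurableSet_Ioc (fun s hs => ?_)
            rw [intervalIntegral.integral_of_le hs.2]
        _ = ∫ r in Ioc (0:ℝ) t, (∫ s in Ioc (0:ℝ) r, f s) * g r := dads_swap hfIoc hgIoc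
        _ = ∫ r in Ioc (0:ℝ) t, (∫ s in (0:ℝ)..r, f s) * g r := by
            refine setIntegral_congr_fun measurableSet_Ioc (fun r hr => ?_)
            rw [intervalIntegral.integral_of_le hr.1.le]
    calc (∫ s in (0:ℝ)..t, f s) * (∫ s in (0:ℝ)..t, g s)
        = ∫ s in (0:ℝ)..t, f s * ∫ r in (0:ℝ)..t, g r := by
          rw [intervalIntegral.integral_mul_const]
      _ = (∫ s in (0:ℝ)..t, f s * ∫ r in (0:ℝ)..s, g r)
          + ∫ s in (0:ℝ)..t, f s * ∫ r in s..t, g r := by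
          rw [intervalIntegral.integral_congr hsplit,
            intervalIntegral.integral_add hfG0 hfTg]
      _ = (∫ s in (0:ℝ)..t, f s * ∫ r in (0:ℝ)..s, g r)
          + ∫ s in (0:ℝ)..t, (∫ r in (0:ℝ)..s, f r) * g s := by rw [hswapstep]
  rw [intervalIntegral.integral_add hfG hFg, hF t ht, hG t ht, e1, e2]
  linear_combination core

private lemma dads_young {c I q : ℝ} (hc : 0 < c) : I * q ≤ c * I^2 + q^2/(4*c) := by
  have h4 : (0:ℝ) < 4*c := by linarith
  have h : I*q - c*I^2 ≤ q^2/(4*c) := by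
    rw [le_div_iff₀ h4]; nlinarith [sq_nonneg (2*c*I - q)]
  linarith

set_option maxHeartbeats 1000000 in
/-- Exponential decay estimate for the d-channel storage
function of the closed-loop DADS-backstepping error system. The locally
absolutely continuous solution (e_v, e_i, z) of the closed-loop ODEs (a.e. on
[0,∞)) is encoded by the integral identities plus local integrability of the
right-hand sides; v_g is measurable with essential bound Vg, and i_g, v_c are
measurable. -/
theorem stmt10
    (ωb Cf KVC KCC μ R L Γ ε : ℝ)
    (hωb : 0 < ωb) (hCf : 0 < Cf) (hKVC : 0 < KVC) (hKCC : 0 < KCC)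
    (hμ : 0 < μ) (hR : 0 < R) (hL : 0 < L) (hΓ : 0 < Γ) (hε : 0 < ε)
    (k : ℝ) (hk : k = min KVC KCC)
    (ig vc vg ev ei z : ℝ → ℝ) (Vg : ℝ)
    (hig_meas : Measurable ig) (hvc_meas : Measurable vc) (hvg_meas : Measurable vg)
    (hvg_bdd : ∀ᵐ t ∂volume, 0 ≤ t → |vg t| ≤ Vg)
    (hev_int : ∀ t, 0 ≤ t → IntervalIntegrable
      (fun s => (ωb / Cf) * ei s - KVC * ev s) volume 0 t)
    (hev_rep : ∀ t, 0 ≤ t → ev t = ev 0 + ∫ s in (0:ℝ)..t,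
      ((ωb / Cf) * ei s - KVC * ev s))
    (hei_int : ∀ t, 0 ≤ t → IntervalIntegrable
      (fun s => dadsInput ωb Cf KCC μ ig vc ev ei z s
        + (ωb * R / L) * ig s - (ωb / L) * vc s + (ωb / L) * vg s) volume 0 t)
    (hei_rep : ∀ t, 0 ≤ t → ei t = ei 0 + ∫ s in (0:ℝ)..t,
      (dadsInput ωb Cf KCC μ ig vc ev ei z s
        + (ωb * R / L) * ig s - (ωb / L) * vc s + (ωb / L) * vg s))
    (hz_int : ∀ t, 0 ≤ t → IntervalIntegrable
      (fun s => Γ * Real.exp (-(z s)) * max (storageW ev ei s - ε) 0) volume 0 t)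
    (hz_rep : ∀ t, 0 ≤ t → z t = z 0 + ∫ s in (0:ℝ)..t,
      (Γ * Real.exp (-(z s)) * max (storageW ev ei s - ε) 0)) :
    ∀ t, 0 ≤ t →
      storageW ev ei t ≤ Real.exp (-(2 * k) * t) * storageW ev ei 0
          + μ * (1 + R^2 + Vg^2) / (2 * k * L^2 * (1 + Real.exp (z 0))) ∧
      (ev t)^2 ≤ 2 * Real.exp (-(2 * k) * t) * storageW ev ei 0
          + μ * (1 + R^2 + Vg^2) / (k * L^2) := by
  have hk0 : 0 < k := hk ▸ lt_min hKVC hKCC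
  have hkV : k ≤ KVC := hk ▸ min_le_left _ _
  have hkC : k ≤ KCC := hk ▸ min_le_right _ _
  set fev : ℝ → ℝ := fun s => (ωb / Cf) * ei s - KVC * ev s with hfev
  set fei : ℝ → ℝ := fun s => dadsInput ωb Cf KCC μ ig vc ev ei z s
      + (ωb * R / L) * ig s - (ωb / L) * vc s + (ωb / L) * vg s with hfei
  set φ : ℝ → ℝ := fun s => ev s * fev s + ei s * fei s with hφ
  set D : ℝ := μ * (1 + R^2 + Vg^2) / (L^2 * (1 + Real.exp (z 0))) with hD
  clear_value fev fei φ D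
  -- continuity of ev, ei on [0, u]
  have hev_cont : ∀ u, 0 ≤ u → ContinuousOn ev (Set.uIcc 0 u) := by
    intro u hu
    refine ((continuousOn_const (c := ev 0)).add
      (intervalIntegral.continuousOn_primitive_interval' (hev_int u hu)
        Set.left_mem_uIcc)).congr ?_
    intro s hs; rw [Set.uIcc_of_le hu] at hs; exact hev_rep s hs.1
  have hei_cont : ∀ u, 0 ≤ u → ContinuousOn ei (Set.uIcc 0 u) := by
    intro u hu
    refine ((continuousOn_const (c := ei 0)).add
      (intervalIntegral.continuousOn_primitive_interval' (hei_int u hu)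
        Set.left_mem_uIcc)).congr ?_
    intro s hs; rw [Set.uIcc_of_le hu] at hs; exact hei_rep s hs.1
  have hφ_int : ∀ u, 0 ≤ u → IntervalIntegrable φ volume 0 u := by
    intro u hu
    rw [hφ]
    exact ((hev_int u hu).continuousOn_mul (hev_cont u hu)).add
      ((hei_int u hu).continuousOn_mul (hei_cont u hu))
  -- representation of the storage function
  have hW_rep : ∀ u, 0 ≤ u →
      storageW ev ei u = storageW ev ei 0 + ∫ s in (0:ℝ)..u, φ s := by
    intro u hu
    have r1 := dads_rep_mul hev_int hev_int hev_rep hev_rep hu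
    have r2 := dads_rep_mul hei_int hei_int hei_rep hei_rep hu
    have c1 : (∫ s in (0:ℝ)..u, (fev s * ev s + ev s * fev s))
        = 2 * ∫ s in (0:ℝ)..u, ev s * fev s := by
      rw [← intervalIntegral.integral_const_mul]
      exact intervalIntegral.integral_congr (fun s _ => by ring)
    have c2 : (∫ s in (0:ℝ)..u, (fei s * ei s + ei s * fei s))
        = 2 * ∫ s in (0:ℝ)..u, ei s * fei s := by
      rw [← intervalIntegral.integral_const_mul]
      exact intervalIntegral.integral_congr (fun s _ => by ring)
    rw [c1] at r1; rw [c2] at r2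
    have hsum : (∫ s in (0:ℝ)..u, φ s)
        = (∫ s in (0:ℝ)..u, ev s * fev s) + ∫ s in (0:ℝ)..u, ei s * fei s := by
      rw [hφ]
      exact intervalIntegral.integral_add
        ((hev_int u hu).continuousOn_mul (hev_cont u hu))
        ((hei_int u hu).continuousOn_mul (hei_cont u hu))
    simp only [storageW]
    linear_combination r1 / 2 + r2 / 2 - hsum
  -- z is nondecreasing from 0
  have hzge : ∀ s, 0 ≤ s → z 0 ≤ z s := by
    intro s hs
    rw [hz_rep s hs]
    have h0 : 0 ≤ ∫ r in (0:ℝ)..s, Γ * Real.exp (-(z r)) * max (storageW ev ei r - ε) 0 :=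
      intervalIntegral.integral_nonneg hs (fun x _ =>
        mul_nonneg (mul_nonneg hΓ.le (Real.exp_pos _).le) (le_max_right _ _))
    linarith
  -- key pointwise dissipation estimate
  have hkey : ∀ s, 0 ≤ s → |vg s| ≤ Vg →
      φ s + 2 * k * storageW ev ei s ≤ D := by
    intro s hs hvgs
    have hζ : Real.exp (z 0) ≤ Real.exp (z s) := Real.exp_le_exp.2 (hzge s hs)
    have hζ0 : (0:ℝ) < 1 + Real.exp (z s) := by positivity
    have hA : (0:ℝ) < 1 + (ig s)^2 + (vc s)^2 := by positivity
    have hcA : 0 < ((1 + Real.exp (z s)) * ωb^2 / (4*μ)) * (1 + (ig s)^2 + (vc s)^2) := by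
      apply mul_pos _ hA
      apply div_pos (mul_pos hζ0 (pow_pos hωb 2)) (by linarith)
    have hφeq : φ s = -KVC * (ev s)^2 - KCC * (ei s)^2
        - (((1 + Real.exp (z s)) * ωb^2 / (4*μ)) * (1 + (ig s)^2 + (vc s)^2)) * (ei s)^2
        + (ei s) * ((ωb/L) * (R * ig s - vc s + vg s)) := by
      simp only [hφ, hfev, hfei, dadsInput]; ring
    have hq := dads_young (I := ei s) (q := (ωb/L) * (R * ig s - vc s + vg s)) hcA
    have hq2 : ((ωb/L) * (R * ig s - vc s + vg s))^2
        ≤ (ωb/L)^2 * ((1 + R^2 + Vg^2) * (1 + (ig s)^2 + (vc s)^2)) := by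
      have hcs : (R * ig s - vc s + vg s)^2
          ≤ (R^2 + 1 + (vg s)^2) * ((ig s)^2 + (vc s)^2 + 1) := by
        nlinarith [sq_nonneg (R * vc s + ig s), sq_nonneg (R - vg s * ig s),
          sq_nonneg (1 + vg s * vc s)]
      have hw : (vg s)^2 ≤ Vg^2 := by
        calc (vg s)^2 = |vg s|^2 := (sq_abs _).symm
          _ ≤ Vg^2 := pow_le_pow_left₀ (abs_nonneg _) hvgs 2
      nlinarith [mul_le_mul_of_nonneg_left hcs (sq_nonneg (ωb/L)),
        mul_nonneg (mul_nonneg (sq_nonneg (ωb/L)) hA.le)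
          (by linarith : (0:ℝ) ≤ Vg^2 - (vg s)^2)]
    have hbound : ((ωb/L) * (R * ig s - vc s + vg s))^2
        / (4 * (((1 + Real.exp (z s)) * ωb^2 / (4*μ)) * (1 + (ig s)^2 + (vc s)^2))) ≤ D := by
      have hstep := (div_le_div_iff_of_pos_right (by linarith : (0:ℝ) < 4 *
        (((1 + Real.exp (z s)) * ωb^2 / (4*μ)) * (1 + (ig s)^2 + (vc s)^2)))).2 hq2
      have heq : ((ωb/L)^2 * ((1 + R^2 + Vg^2) * (1 + (ig s)^2 + (vc s)^2)))
          / (4 * (((1 + Real.exp (z s)) * ωb^2 / (4*μ)) * (1 + (ig s)^2 + (vc s)^2)))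
          = μ * (1 + R^2 + Vg^2) / (L^2 * (1 + Real.exp (z s))) := by
        field_simp
      have hle : μ * (1 + R^2 + Vg^2) / (L^2 * (1 + Real.exp (z s))) ≤ D := by
        rw [hD]
        apply div_le_div_of_nonneg_left (by positivity) (by positivity)
        have : (0:ℝ) < L^2 := by positivity
        nlinarith [hζ]
      calc ((ωb/L) * (R * ig s - vc s + vg s))^2
          / (4 * (((1 + Real.exp (z s)) * ωb^2 / (4*μ)) * (1 + (ig s)^2 + (vc s)^2)))
          ≤ ((ωb/L)^2 * ((1 + R^2 + Vg^2) * (1 + (ig s)^2 + (vc s)^2)))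
            / (4 * (((1 + Real.exp (z s)) * ωb^2 / (4*μ)) * (1 + (ig s)^2 + (vc s)^2))) := hstep
        _ = μ * (1 + R^2 + Vg^2) / (L^2 * (1 + Real.exp (z s))) := heq
        _ ≤ D := hle
    have hWval : storageW ev ei s = (ev s)^2/2 + (ei s)^2/2 := rfl
    rw [hφeq, hWval]
    nlinarith [hq, hbound, mul_nonneg (by linarith : (0:ℝ) ≤ KVC - k) (sq_nonneg (ev s)),
      mul_nonneg (by linarith : (0:ℝ) ≤ KCC - k) (sq_nonneg (ei s))]
  -- exponential weight representation
  have hexp_cont : Continuous (fun s : ℝ => 2*k*Real.exp (2*k*s)) :=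
    continuous_const.mul (Real.continuous_exp.comp (continuous_const.mul continuous_id))
  have hfexp_int : ∀ u, 0 ≤ u →
      IntervalIntegrable (fun s => 2*k*Real.exp (2*k*s)) volume 0 u :=
    fun u _ => hexp_cont.intervalIntegrable 0 u
  have hexpF : ∀ u, 0 ≤ u →
      Real.exp (2*k*u) = 1 + ∫ s in (0:ℝ)..u, 2*k*Real.exp (2*k*s) := by
    intro u _
    have hder : ∀ x ∈ Set.uIcc (0:ℝ) u, HasDerivAt (fun s => Real.exp (2*k*s))
        (2*k*Real.exp (2*k*x)) x := by
      intro x _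
      have h1 : HasDerivAt (fun s : ℝ => 2*k*s) (2*k) x := by
        simpa using (hasDerivAt_id x).const_mul (2*k)
      simpa [mul_comm] using h1.exp
    rw [intervalIntegral.integral_eq_sub_of_hasDerivAt hder
      (hexp_cont.intervalIntegrable 0 u)]
    simp [Real.exp_zero]
  intro t ht
  have hgron : Real.exp (2*k*t) * storageW ev ei t
      = 1 * storageW ev ei 0 + ∫ s in (0:ℝ)..t,
        (2*k*Real.exp (2*k*s) * storageW ev ei s + Real.exp (2*k*s) * φ s) :=
    dads_rep_mul (F := fun u => Real.exp (2*k*u)) (G := storageW ev ei)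
      hfexp_int hφ_int hexpF hW_rep ht
  -- continuity of W on [0,t]
  have hWc : ContinuousOn (storageW ev ei) (Set.uIcc 0 t) := by
    refine ((continuousOn_const (c := storageW ev ei 0)).add
      (intervalIntegral.continuousOn_primitive_interval' (hφ_int t ht)
        Set.left_mem_uIcc)).congr ?_
    intro s hs; rw [Set.uIcc_of_le ht] at hs; exact hW_rep s hs.1
  have hInt1 : IntervalIntegrable
      (fun s => 2*k*Real.exp (2*k*s) * storageW ev ei s + Real.exp (2*k*s) * φ s)
      volume 0 t := by
    refine IntervalIntegrable.add ?_ ?_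
    · exact ContinuousOn.intervalIntegrable (hexp_cont.continuousOn.mul hWc)
    · exact (hφ_int t ht).continuousOn_mul (Real.continuous_exp.comp
        (continuous_const.mul continuous_id)).continuousOn
  have hInt2 : IntervalIntegrable (fun s => D * Real.exp (2*k*s)) volume 0 t :=
    Continuous.intervalIntegrable (continuous_const.mul
      (Real.continuous_exp.comp (continuous_const.mul continuous_id))) 0 t
  have hae : (fun s => 2*k*Real.exp (2*k*s) * storageW ev ei s + Real.exp (2*k*s) * φ s)
      ≤ᵐ[volume.restrict (Set.Icc 0 t)] fun s => D * Real.exp (2*k*s) := by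
    filter_upwards [ae_restrict_of_ae hvg_bdd, ae_restrict_mem measurableSet_Icc]
      with s h1 h2
    have hs0 : 0 ≤ s := h2.1
    have hkey' := hkey s hs0 (h1 hs0)
    have hepos := (Real.exp_pos (2*k*s)).le
    linarith [mul_le_mul_of_nonneg_left hkey' hepos]
  have hmono := intervalIntegral.integral_mono_ae_restrict ht hInt1 hInt2 hae
  have hDint : (∫ s in (0:ℝ)..t, D * Real.exp (2*k*s))
      = (D/(2*k)) * (Real.exp (2*k*t) - 1) := by
    have heq : Set.EqOn (fun s => D * Real.exp (2*k*s))
        (fun s => (D/(2*k)) * (2*k*Real.exp (2*k*s))) (Set.uIcc 0 t) := by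
      intro s _; simp only; field_simp
    rw [intervalIntegral.integral_congr heq, intervalIntegral.integral_const_mul]
    have h := hexpF t ht
    rw [show (∫ s in (0:ℝ)..t, 2*k*Real.exp (2*k*s)) = Real.exp (2*k*t) - 1 by linarith]
  have hD0 : 0 ≤ D := by rw [hD]; positivity
  have hD2k : 0 ≤ D/(2*k) := div_nonneg hD0 (by linarith)
  have hfinal : Real.exp (2*k*t) * storageW ev ei t
      ≤ storageW ev ei 0 + (D/(2*k)) * (Real.exp (2*k*t) - 1) := by
    rw [hgron, one_mul, ← hDint]
    linarith [hmono]
  have hWt : storageW ev ei t ≤ Real.exp (-(2*k)*t) * storageW ev ei 0 + D/(2*k) := by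
    have he : (0:ℝ) < Real.exp (2*k*t) := Real.exp_pos _
    have h2 : Real.exp (2*k*t) * storageW ev ei t
        ≤ storageW ev ei 0 + Real.exp (2*k*t) * (D/(2*k)) := by
      nlinarith [hfinal]
    have h3 : Real.exp (-(2*k)*t) = (Real.exp (2*k*t))⁻¹ := by
      rw [show -(2*k)*t = -(2*k*t) by ring, Real.exp_neg]
    rw [h3]
    calc storageW ev ei t = (Real.exp (2*k*t))⁻¹ * (Real.exp (2*k*t) * storageW ev ei t) := by
          field_simp
      _ ≤ (Real.exp (2*k*t))⁻¹ * (storageW ev ei 0 + Real.exp (2*k*t) * (D/(2*k))) :=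
          mul_le_mul_of_nonneg_left h2 (inv_nonneg.2 he.le)
      _ = (Real.exp (2*k*t))⁻¹ * storageW ev ei 0 + D/(2*k) := by
          field_simp
  have hDeq : D/(2*k) = μ * (1 + R^2 + Vg^2) / (2 * k * L^2 * (1 + Real.exp (z 0))) := by
    rw [hD, div_div]; congr 1; ring
  constructor
  · rw [← hDeq]; exact hWt
  · have h2W : (ev t)^2 ≤ 2 * storageW ev ei t := by
      have : storageW ev ei t = (ev t)^2/2 + (ei t)^2/2 := rfl
      nlinarith [sq_nonneg (ei t)]
    have hDk : D/k ≤ μ * (1 + R^2 + Vg^2) / (k * L^2) := by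
      rw [hD, div_div]
      apply div_le_div_of_nonneg_left (by positivity) (by positivity)
      nlinarith [Real.exp_pos (z 0), sq_nonneg L, hk0, mul_pos hk0 (pow_pos hL 2),
        mul_nonneg (mul_pos hk0 (pow_pos hL 2)).le (Real.exp_pos (z 0)).le]
    have h2k : 2 * (D/(2*k)) = D/k := by
      rw [eq_div_iff hk0.ne']; field_simp
    linarith [hWt, h2W, hDk, h2k]
end

section
/- Let ω_b, C_f, K_VC, K_CC, μ, R, L, Γ, ε > 0 and set k = min{K_VC, K_CC}. Under the same hypotheses as the d-channel closed-loop error system (i_g, v_c measurable, v_g measurable and essentially bounded with essential supremum ‖v_g‖∞, and e_v, e_i, z locally absolutely continuous satisfying ė_v = (ω_b/C_f)e_i − K_VC·e_v, ė_i = u + (ω_b R/L)i_g − (ω_b/L)v_c + (ω_b/L)v_g with u = −(K_CC + ((1+e^z)ω_b²/(4μ))(1 + i_g² + v_c²))e_i − (ω_b/C_f)e_v, and ż = Γe^{−z}max{W − ε, 0} with W = e_v²/2 + e_i²/2, almost everywhere), the adaptive gain satisfies for all t ≥ 0: z(0) ≤ z(t) ≤ ln( max{ μ(1 + R² + ‖v_g‖∞²)/(2kL²ε)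 − 1, e^{z(0)} } + (Γ/(2k))·max{ W(0) + μ(1 + R² + ‖v_g‖∞²)/(2kL²(1 + e^{z(0)})) − ε, 0 } ). -/
open MeasureTheory intervalIntegral Set

private lemma contOn_of_rep (f p : ℝ → ℝ) (a b : ℝ) (hab : a ≤ b)
    (hp : IntervalIntegrable p volume a b)
    (hf : ∀ s ∈ Icc a b, f s = f a + ∫ r in a..s, p r) :
    ContinuousOn f (Icc a b) := by
  have h1 : ContinuousOn (fun s => ∫ r in a..s, p r) (uIcc a b) :=
    intervalIntegral.continuousOn_primitive_interval
      ((uIcc_of_le hab ▸ (intervalIntegrable_iff_integrableOn_Icc_of_le hab).mp hp))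
  rw [uIcc_of_le hab] at h1
  exact (continuousOn_const.add h1).congr hf


private lemma tele_eq (F K e : ℝ → ℝ) (a b : ℝ) (hab : a ≤ b)
    (hK : IntervalIntegrable K volume a b)
    (he : IntervalIntegrable e volume a b)
    (he0 : ∀ s, 0 ≤ e s)
    (h : ∀ η > 0, ∃ δ > 0, ∀ u v, a ≤ u → u ≤ v → v ≤ b → v - u ≤ δ →
      |F v - F u - ∫ s in u..v, K s| ≤ η * ∫ s in u..v, e s) :
    F b = F a + ∫ s in a..b, K s := by
  have hE : (0:ℝ) ≤ ∫ s in a..b, e s :=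
    intervalIntegral.integral_nonneg hab (fun u _ => he0 u)
  have key : ∀ η > 0, |F b - F a - ∫ s in a..b, K s| ≤ η * ∫ s in a..b, e s := by
    intro η hη
    obtain ⟨δ, hδ, hstep⟩ := h η hη
    obtain ⟨n, hn⟩ := exists_nat_gt ((b - a) / δ)
    have hn0 : 0 < (n:ℝ) := lt_of_le_of_lt (div_nonneg (by linarith) hδ.le) hn
    set x : ℕ → ℝ := fun i => a + i * ((b - a) / n) with hxdef
    have hxstep : ∀ i : ℕ, x (i+1) - x i = (b - a) / n := by
      intro i; simp only [hxdef]; push_cast; ring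
    have hmesh : (b - a) / n ≤ δ := by
      rw [div_le_iff₀ hn0]
      rw [div_lt_iff₀ hδ] at hn
      nlinarith
    have hxmono : ∀ i j : ℕ, i ≤ j → x i ≤ x j := by
      intro i j hij
      simp only [hxdef]
      have : (i:ℝ) ≤ j := by exact_mod_cast hij
      have hq : 0 ≤ (b - a) / n := div_nonneg (by linarith) hn0.le
      nlinarith
    have hx0 : x 0 = a := by simp [hxdef]
    have hxn : x n = b := by
      simp only [hxdef]; field_simp; ring
    have hxmem : ∀ i : ℕ, i ≤ n → x i ∈ Icc a b := by
      intro i hi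
      constructor
      · rw [← hx0]; exact hxmono 0 i (Nat.zero_le i)
      · rw [← hxn]; exact hxmono i n hi
    have hsub : ∀ i : ℕ, i < n → uIcc (x i) (x (i+1)) ⊆ uIcc a b := by
      intro i hi
      apply uIcc_subset_uIcc
      · rw [uIcc_of_le hab]; exact hxmem i hi.le
      · rw [uIcc_of_le hab]; exact hxmem (i+1) hi
    have hKi : ∀ i < n, IntervalIntegrable K volume (x i) (x (i+1)) :=
      fun i hi => hK.mono_set (hsub i hi)
    have hei : ∀ i < n, IntervalIntegrable e volume (x i) (x (i+1)) :=
      fun i hi => he.mono_set (hsub i hi)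
    have hKsum : ∑ i ∈ Finset.range n, ∫ s in x i..x (i+1), K s = ∫ s in a..b, K s := by
      rw [intervalIntegral.sum_integral_adjacent_intervals hKi, hx0, hxn]
    have hesum : ∑ i ∈ Finset.range n, ∫ s in x i..x (i+1), e s = ∫ s in a..b, e s := by
      rw [intervalIntegral.sum_integral_adjacent_intervals hei, hx0, hxn]
    have hFtel : F b - F a = ∑ i ∈ Finset.range n, (F (x (i+1)) - F (x i)) := by
      rw [Finset.sum_range_sub (fun i => F (x i)), hx0, hxn]
    calc |F b - F a - ∫ s in a..b, K s|
        = |∑ i ∈ Finset.range n, (F (x (i+1)) - F (x i) - ∫ s in x i..x (i+1), K s)| := by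
          rw [Finset.sum_sub_distrib, ← hFtel, hKsum]
      _ ≤ ∑ i ∈ Finset.range n, |F (x (i+1)) - F (x i) - ∫ s in x i..x (i+1), K s| :=
          Finset.abs_sum_le_sum_abs _ _
      _ ≤ ∑ i ∈ Finset.range n, η * ∫ s in x i..x (i+1), e s := by
          apply Finset.sum_le_sum
          intro i hi
          rw [Finset.mem_range] at hi
          refine hstep (x i) (x (i+1)) (hxmem i hi.le).1 (hxmono i (i+1) (Nat.le_succ i))
            (hxmem (i+1) hi).2 ?_
          rw [hxstep]; exact hmesh
      _ = η * ∫ s in a..b, e s := by rw [← Finset.mul_sum, hesum]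
  have habs : |F b - F a - ∫ s in a..b, K s| ≤ 0 := by
    by_contra hlt
    push_neg at hlt
    set X := |F b - F a - ∫ s in a..b, K s| with hX
    set E := ∫ s in a..b, e s with hEd
    have hη : 0 < X / (2 * (E + 1)) := by positivity
    have := key _ hη
    rw [div_mul_eq_mul_div, le_div_iff₀ (by positivity)] at this
    nlinarith
  have : F b - F a - ∫ s in a..b, K s = 0 := by
    have := abs_nonneg (F b - F a - ∫ s in a..b, K s)
    have h0 : |F b - F a - ∫ s in a..b, K s| = 0 := le_antisymm habs this
    exact abs_eq_zero.mp h0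
  linarith


private lemma mul_rep (f h p q : ℝ → ℝ) (a b : ℝ) (hab : a ≤ b)
    (hp : IntervalIntegrable p volume a b) (hq : IntervalIntegrable q volume a b)
    (hf : ∀ s ∈ Icc a b, f s = f a + ∫ r in a..s, p r)
    (hh : ∀ s ∈ Icc a b, h s = h a + ∫ r in a..s, q r) :
    f b * h b = f a * h a + ∫ s in a..b, (p s * h s + f s * q s) := by
  have hfc : ContinuousOn f (Icc a b) := contOn_of_rep f p a b hab hp hf
  have hhc : ContinuousOn h (Icc a b) := contOn_of_rep h q a b hab hq hh
  have hsubU : ∀ u v : ℝ, u ∈ Icc a b → v ∈ Icc a b → uIcc u v ⊆ uIcc a b := by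
    intro u v hu hv
    exact uIcc_subset_uIcc (by rw [uIcc_of_le hab]; exact hu) (by rw [uIcc_of_le hab]; exact hv)
  have hsubIcc : ∀ u v : ℝ, u ∈ Icc a b → v ∈ Icc a b → uIcc u v ⊆ Icc a b := by
    intro u v hu hv; rw [← uIcc_of_le hab]; exact hsubU u v hu hv
  have habmem : a ∈ Icc a b := left_mem_Icc.mpr hab
  have hbmem : b ∈ Icc a b := right_mem_Icc.mpr hab
  have hKint : IntervalIntegrable (fun s => p s * h s + f s * q s) volume a b := by
    apply IntervalIntegrable.add
    · exact hp.mul_continuousOn (hhc.mono (hsubIcc a b habmem hbmem))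
    · exact hq.continuousOn_mul (hfc.mono (hsubIcc a b habmem hbmem))
  have heint : IntervalIntegrable (fun s => |p s| + |q s|) volume a b := hp.abs.add hq.abs
  have hfd : ∀ u v : ℝ, u ∈ Icc a b → v ∈ Icc a b → f v - f u = ∫ r in u..v, p r := by
    intro u v hu hv
    rw [hf u hu, hf v hv]
    have h1 : IntervalIntegrable p volume a u := hp.mono_set (hsubU a u habmem hu)
    have h2 : IntervalIntegrable p volume a v := hp.mono_set (hsubU a v habmem hv)
    rw [add_sub_add_left_eq_sub]
    exact intervalIntegral.integral_interval_sub_left h2 h1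
  have hhd : ∀ u v : ℝ, u ∈ Icc a b → v ∈ Icc a b → h v - h u = ∫ r in u..v, q r := by
    intro u v hu hv
    rw [hh u hu, hh v hv]
    have h1 : IntervalIntegrable q volume a u := hq.mono_set (hsubU a u habmem hu)
    have h2 : IntervalIntegrable q volume a v := hq.mono_set (hsubU a v habmem hv)
    rw [add_sub_add_left_eq_sub]
    exact intervalIntegral.integral_interval_sub_left h2 h1
  have hfu := (isCompact_Icc (a := a) (b := b)).uniformContinuousOn_of_continuous hfc
  have hhu := (isCompact_Icc (a := a) (b := b)).uniformContinuousOn_of_continuous hhc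
  rw [Metric.uniformContinuousOn_iff_le] at hfu hhu
  apply tele_eq _ _ (fun s => |p s| + |q s|) a b hab hKint heint
    (fun s => by positivity)
  intro η hη
  obtain ⟨δ₁, hδ₁, hf1⟩ := hfu η hη
  obtain ⟨δ₂, hδ₂, hh1⟩ := hhu η hη
  refine ⟨min δ₁ δ₂, lt_min hδ₁ hδ₂, ?_⟩
  intro u v hau huv hvb hd
  have hu : u ∈ Icc a b := ⟨hau, huv.trans hvb⟩
  have hv : v ∈ Icc a b := ⟨hau.trans huv, hvb⟩
  have hsub : uIcc u v ⊆ uIcc a b := hsubU u v hu hv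
  have hsub' : uIcc u v ⊆ Icc a b := hsubIcc u v hu hv
  have hpuv : IntervalIntegrable p volume u v := hp.mono_set hsub
  have hquv : IntervalIntegrable q volume u v := hq.mono_set hsub
  have hfvq : IntervalIntegrable (fun s => (f v - f s) * q s) volume u v :=
    hquv.continuousOn_mul (continuousOn_const.sub (hfc.mono hsub'))
  have hhup : IntervalIntegrable (fun s => (h u - h s) * p s) volume u v :=
    hpuv.continuousOn_mul (continuousOn_const.sub (hhc.mono hsub'))
  have hid : f v * h v - f u * h u - (∫ s in u..v, (p s * h s + f s * q s))
      = ∫ s in u..v, ((f v - f s) * q s + (h u - h s) * p s) := by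
    have e1 : f v * h v - f u * h u = f v * (h v - h u) + h u * (f v - f u) := by ring
    rw [e1, hhd u v hu hv, hfd u v hu hv,
      ← intervalIntegral.integral_const_mul, ← intervalIntegral.integral_const_mul,
      ← intervalIntegral.integral_add (hquv.const_mul (f v)) (hpuv.const_mul (h u)),
      ← intervalIntegral.integral_sub
        ((hquv.const_mul (f v)).add (hpuv.const_mul (h u)))
        (hKint.mono_set hsub)]
    apply intervalIntegral.integral_congr
    intro s _
    ring
  rw [hid]
  calc |∫ s in u..v, ((f v - f s) * q s + (h u - h s) * p s)|
      ≤ ∫ s in u..v, |(f v - f s) * q s + (h u - h s) * p s| :=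
        intervalIntegral.abs_integral_le_integral_abs huv
    _ ≤ ∫ s in u..v, η * (|p s| + |q s|) := by
        apply intervalIntegral.integral_mono_on huv ((hfvq.add hhup).abs)
          ((heint.mono_set hsub).const_mul η)
        intro s hs
        have hsmem : s ∈ Icc a b := hsub' (by rw [uIcc_of_le huv]; exact hs)
        have h1 : |f v - f s| ≤ η := by
          have hdist : dist v s ≤ δ₁ := by
            rw [Real.dist_eq, abs_of_nonneg (by linarith [hs.2])]
            have := min_le_left δ₁ δ₂
            linarith [hs.1]
          have := hf1 v hv s hsmem hdist
          rwa [Real.dist_eq] at this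
        have h2 : |h u - h s| ≤ η := by
          have hdist : dist u s ≤ δ₂ := by
            rw [Real.dist_eq, abs_of_nonpos (by linarith [hs.1])]
            have := min_le_right δ₁ δ₂
            linarith [hs.2]
          have := hh1 u hu s hsmem hdist
          rwa [Real.dist_eq] at this
        calc |(f v - f s) * q s + (h u - h s) * p s|
            ≤ |(f v - f s) * q s| + |(h u - h s) * p s| := abs_add_le _ _
          _ = |f v - f s| * |q s| + |h u - h s| * |p s| := by rw [abs_mul, abs_mul]
          _ ≤ η * |q s| + η * |p s| := by
              have := abs_nonneg (p s); have := abs_nonneg (q s)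
              have := abs_nonneg (f v - f s); have := abs_nonneg (h u - h s)
              nlinarith
          _ ≤ η * (|p s| + |q s|) := le_of_eq (by ring)
    _ = η * ∫ s in u..v, (|p s| + |q s|) := intervalIntegral.integral_const_mul η _


private lemma exp_rep (z P : ℝ → ℝ) (Γ a b : ℝ) (hab : a ≤ b) (hΓ : 0 < Γ)
    (hP0 : ∀ s, 0 ≤ P s)
    (hζ : IntervalIntegrable (fun s => Γ * Real.exp (-(z s)) * P s) volume a b)
    (hPK : IntervalIntegrable (fun s => Γ * P s) volume a b)
    (hz : ∀ s ∈ Icc a b, z s = z a + ∫ r in a..s, Γ * Real.exp (-(z r)) * P r) :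
    Real.exp (z b) = Real.exp (z a) + ∫ s in a..b, Γ * P s := by
  set ζ : ℝ → ℝ := fun s => Γ * Real.exp (-(z s)) * P s with hζdef
  have hζ0 : ∀ s, 0 ≤ ζ s := fun s => by
    have := hP0 s; have := (Real.exp_pos (-(z s))).le; positivity
  have hzc : ContinuousOn z (Icc a b) := contOn_of_rep z ζ a b hab hζ hz
  have hsubU : ∀ u v : ℝ, u ∈ Icc a b → v ∈ Icc a b → uIcc u v ⊆ uIcc a b := by
    intro u v hu hv
    exact uIcc_subset_uIcc (by rw [uIcc_of_le hab]; exact hu) (by rw [uIcc_of_le hab]; exact hv)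
  have habmem : a ∈ Icc a b := left_mem_Icc.mpr hab
  have hzd : ∀ u v : ℝ, u ∈ Icc a b → v ∈ Icc a b → z v - z u = ∫ r in u..v, ζ r := by
    intro u v hu hv
    rw [hz u hu, hz v hv, add_sub_add_left_eq_sub]
    exact intervalIntegral.integral_interval_sub_left
      (hζ.mono_set (hsubU a v habmem hv)) (hζ.mono_set (hsubU a u habmem hu))
  -- monotonicity of z on Icc a b
  have hzmono : ∀ u v : ℝ, u ∈ Icc a b → v ∈ Icc a b → u ≤ v → z u ≤ z v := by
    intro u v hu hv huv
    have := hzd u v hu hv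
    have h2 : 0 ≤ ∫ r in u..v, ζ r :=
      intervalIntegral.integral_nonneg huv (fun r _ => hζ0 r)
    linarith
  have hzu := (isCompact_Icc (a := a) (b := b)).uniformContinuousOn_of_continuous hzc
  rw [Metric.uniformContinuousOn_iff_le] at hzu
  apply tele_eq _ _ (fun s => Γ * P s) a b hab hPK hPK
    (fun s => by have := hP0 s; positivity)
  intro η hη
  obtain ⟨δ, hδ, hz1⟩ := hzu (Real.log (1 + η)) (Real.log_pos (by linarith))
  refine ⟨δ, hδ, ?_⟩
  intro u v hau huv hvb hd
  have hu : u ∈ Icc a b := ⟨hau, huv.trans hvb⟩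
  have hv : v ∈ Icc a b := ⟨hau.trans huv, hvb⟩
  have hsub : uIcc u v ⊆ uIcc a b := hsubU u v hu hv
  have hζuv : IntervalIntegrable ζ volume u v := hζ.mono_set hsub
  have hPuv : IntervalIntegrable (fun s => Γ * P s) volume u v := hPK.mono_set hsub
  set Δ : ℝ := z v - z u with hΔdef
  have hΔ0 : 0 ≤ Δ := by have := hzmono u v hu hv huv; linarith
  have hΔint : Δ = ∫ r in u..v, ζ r := hzd u v hu hv
  have hΔη : Δ ≤ Real.log (1 + η) := by
    have hdist : dist v u ≤ δ := by
      rw [Real.dist_eq, abs_of_nonneg (by linarith)]; exact hd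
    have := hz1 v hv u hu hdist
    rw [Real.dist_eq] at this
    exact (le_abs_self _).trans this
  have hexpΔ : Real.exp Δ ≤ 1 + η := by
    calc Real.exp Δ ≤ Real.exp (Real.log (1 + η)) := Real.exp_le_exp.mpr hΔη
      _ = 1 + η := Real.exp_log (by linarith)
  -- bounds on the integral I := ∫ u..v, Γ P
  set I : ℝ := ∫ s in u..v, Γ * P s with hIdef
  have hKeq : ∀ s ∈ Icc u v, Γ * P s = Real.exp (z s) * ζ s := by
    intro s _
    have h1 : Real.exp (z s) * Real.exp (-z s) = 1 := by rw [← Real.exp_add]; simp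
    simp only [hζdef]
    linear_combination (-(Γ * P s)) * h1
  have hIl : Real.exp (z u) * Δ ≤ I := by
    rw [hΔint, ← intervalIntegral.integral_const_mul]
    apply intervalIntegral.integral_mono_on huv (hζuv.const_mul _) hPuv
    intro s hs
    rw [hKeq s hs]
    have hsm : s ∈ Icc a b := ⟨hau.trans hs.1, hs.2.trans hvb⟩
    have hzs := hzmono u s hu hsm hs.1
    have hζs := hζ0 s
    have hexps := Real.exp_le_exp.mpr hzs
    nlinarith [Real.exp_pos (z u)]
  have hIu : I ≤ Real.exp (z v) * Δ := by
    rw [hΔint, ← intervalIntegral.integral_const_mul]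
    apply intervalIntegral.integral_mono_on huv hPuv (hζuv.const_mul _)
    intro s hs
    rw [hKeq s hs]
    have hsm : s ∈ Icc a b := ⟨hau.trans hs.1, hs.2.trans hvb⟩
    have hzs := hzmono s v hsm hv hs.2
    have hζs := hζ0 s
    have hexps := Real.exp_le_exp.mpr hzs
    nlinarith [Real.exp_pos (z v)]
  -- bounds on exp z v - exp z u
  have hEl : Real.exp (z u) * Δ ≤ Real.exp (z v) - Real.exp (z u) := by
    have hv' : z v = z u + Δ := by rw [hΔdef]; ring
    rw [hv', Real.exp_add]
    have h1 : Δ + 1 ≤ Real.exp Δ := Real.add_one_le_exp Δ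
    nlinarith [Real.exp_pos (z u)]
  have hEu : Real.exp (z v) - Real.exp (z u) ≤ Real.exp (z v) * Δ := by
    have hv' : z u = z v + (-Δ) := by rw [hΔdef]; ring
    rw [hv', Real.exp_add]
    have h1 : -Δ + 1 ≤ Real.exp (-Δ) := Real.add_one_le_exp (-Δ)
    nlinarith [Real.exp_pos (z v)]
  -- both lie in [exp(z u) Δ, exp(z v) Δ], whose width is ≤ η * exp(z u) * Δ ≤ η * I
  have hwidth : Real.exp (z v) * Δ - Real.exp (z u) * Δ ≤ η * (Real.exp (z u) * Δ) := by
    have hv' : z v = z u + Δ := by rw [hΔdef]; ring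
    have hI0' : 0 ≤ Real.exp (z u) * Δ := by positivity
    rw [hv', Real.exp_add]
    nlinarith [mul_nonneg (sub_nonneg.mpr hexpΔ) hI0']
  have hI0 : 0 ≤ Real.exp (z u) * Δ := by positivity
  rw [abs_le]
  constructor <;> nlinarith


private lemma exp_prim (k τ : ℝ) :
    ∀ s : ℝ, Real.exp (2*k*s) = Real.exp (2*k*τ)
      + ∫ r in τ..s, 2*k*Real.exp (2*k*r) := by
  intro s
  have hder : ∀ r ∈ uIcc τ s, HasDerivAt (fun x => Real.exp (2*k*x))
      (2*k*Real.exp (2*k*r)) r := by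
    intro r _
    have h1 : HasDerivAt (fun x : ℝ => 2*k*x) (2*k) r := by
      simpa using (hasDerivAt_id r).const_mul (2*k)
    simpa [mul_comm] using h1.exp
  have hint : IntervalIntegrable (fun r => 2*k*Real.exp (2*k*r)) volume τ s :=
    (Continuous.intervalIntegrable (by continuity) τ s)
  have := intervalIntegral.integral_eq_sub_of_hasDerivAt hder hint
  linarith [this]


private lemma gron (k c τ σ : ℝ) (hk : 0 < k) (hτσ : τ ≤ σ)
    (W q : ℝ → ℝ)
    (hq : IntervalIntegrable q volume τ σ)
    (hWrep : ∀ s ∈ Icc τ σ, W s = W τ + ∫ r in τ..s, q r)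
    (hbd : ∀ᵐ s ∂(volume.restrict (Icc τ σ)), q s ≤ -(2*k) * W s + c) :
    W σ ≤ c/(2*k) + (W τ - c/(2*k)) * Real.exp (-(2*k)*(σ - τ)) := by
  have hec : Continuous fun s : ℝ => Real.exp (2*k*s) := by continuity
  have hec2 : Continuous fun s : ℝ => 2*k*Real.exp (2*k*s) := by continuity
  have hec3 : Continuous fun s : ℝ => c*Real.exp (2*k*s) := by continuity
  have hpint : IntervalIntegrable (fun s => 2*k*Real.exp (2*k*s)) volume τ σ :=
    hec2.intervalIntegrable τ σ
  have hWc : ContinuousOn W (Icc τ σ) := contOn_of_rep W q τ σ hτσ hq hWrep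
  have hfrep : ∀ s ∈ Icc τ σ, Real.exp (2*k*s) = Real.exp (2*k*τ)
      + ∫ r in τ..s, 2*k*Real.exp (2*k*r) := fun s _ => exp_prim k τ s
  have hmul := mul_rep (fun s => Real.exp (2*k*s)) W (fun s => 2*k*Real.exp (2*k*s)) q
    τ σ hτσ hpint hq hfrep hWrep
  have hint1 : IntervalIntegrable
      (fun s => 2*k*Real.exp (2*k*s) * W s + Real.exp (2*k*s) * q s) volume τ σ := by
    apply IntervalIntegrable.add
    · exact hpint.mul_continuousOn (hWc.mono (uIcc_of_le hτσ).le)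
    · exact hq.continuousOn_mul hec.continuousOn
  have hint2 : IntervalIntegrable (fun s => c * Real.exp (2*k*s)) volume τ σ :=
    hec3.intervalIntegrable τ σ
  have hmono : (∫ s in τ..σ, (2*k*Real.exp (2*k*s) * W s + Real.exp (2*k*s) * q s))
      ≤ ∫ s in τ..σ, c * Real.exp (2*k*s) := by
    apply intervalIntegral.integral_mono_ae_restrict hτσ hint1 hint2
    filter_upwards [hbd] with s hs'
    have he := Real.exp_pos (2*k*s)
    nlinarith [mul_le_mul_of_nonneg_left hs' he.le]
  have h3 : ∫ s in τ..σ, c * Real.exp (2*k*s)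
      = (c/(2*k)) * (Real.exp (2*k*σ) - Real.exp (2*k*τ)) := by
    have h5 := exp_prim k τ σ
    have h4 : (∫ s in τ..σ, c * Real.exp (2*k*s))
        = (c/(2*k)) * ∫ s in τ..σ, 2*k*Real.exp (2*k*s) := by
      rw [← intervalIntegral.integral_const_mul]
      apply intervalIntegral.integral_congr
      intro x _
      field_simp
    rw [h4]
    rw [show (∫ s in τ..σ, 2*k*Real.exp (2*k*s)) = Real.exp (2*k*σ) - Real.exp (2*k*τ) by
      linarith]
  have hkey : Real.exp (2*k*σ) * W σ ≤ Real.exp (2*k*τ) * W τ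
      + (c/(2*k)) * (Real.exp (2*k*σ) - Real.exp (2*k*τ)) := by
    rw [hmul]; rw [h3] at hmono; linarith
  have hfσ : (0:ℝ) < Real.exp (2*k*σ) := Real.exp_pos _
  rw [← mul_le_mul_iff_of_pos_right hfσ]
  have hee : Real.exp (-(2*k)*(σ - τ)) * Real.exp (2*k*σ) = Real.exp (2*k*τ) := by
    rw [← Real.exp_add]; ring_nf
  calc W σ * Real.exp (2*k*σ) = Real.exp (2*k*σ) * W σ := by ring
    _ ≤ Real.exp (2*k*τ) * W τ + (c/(2*k)) * (Real.exp (2*k*σ) - Real.exp (2*k*τ)) := hkey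
    _ = (c/(2*k) + (W τ - c/(2*k)) * Real.exp (-(2*k)*(σ - τ))) * Real.exp (2*k*σ) := by
        linear_combination (c/(2*k) - W τ) * hee


private lemma keybound (ωb Cf KVC KCC μ R L k Vg X : ℝ)
    (hμ : 0 < μ) (hL : 0 < L)
    (hkK1 : k ≤ KVC) (hkK2 : k ≤ KCC) (hX : 0 < X)
    (a b G C V : ℝ) (hV : |V| ≤ Vg) :
    a*((ωb/Cf)*b - KVC*a)
      + b*(-(KCC + (X*ωb^2/(4*μ))*(1+G^2+C^2))*b - (ωb/Cf)*a
        + (ωb*R/L)*G - (ωb/L)*C + (ωb/L)*V)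
    ≤ -(2*k)*(a^2/2 + b^2/2) + μ*(1+R^2+Vg^2)/(L^2*X) := by
  have hV2 : V^2 ≤ Vg^2 := by nlinarith [abs_nonneg V, sq_abs V]
  have hpoly : 4*μ*X*ωb*L*(R*G - C + V)*b
      ≤ X^2*ωb^2*L^2*(1+G^2+C^2)*b^2 + 4*μ^2*(1+R^2+Vg^2) := by
    nlinarith [sq_nonneg (X*ωb*L*b*G - 2*μ*R), sq_nonneg (X*ωb*L*b*C + 2*μ),
      sq_nonneg (X*ωb*L*b - 2*μ*V), sq_nonneg μ, mul_pos hμ hμ]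
  have hpos : (0:ℝ) < 4*μ*L^2*X := by positivity
  have e1 : μ*(1+R^2+Vg^2)/(L^2*X)
      - ((ωb/L)*(R*G - C + V)*b - (X*ωb^2/(4*μ))*(1+G^2+C^2)*b^2)
      = (X^2*ωb^2*L^2*(1+G^2+C^2)*b^2 + 4*μ^2*(1+R^2+Vg^2)
          - 4*μ*X*ωb*L*(R*G - C + V)*b) / (4*μ*L^2*X) := by
    field_simp
    ring
  have e2 : (0:ℝ) ≤ (X^2*ωb^2*L^2*(1+G^2+C^2)*b^2 + 4*μ^2*(1+R^2+Vg^2)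
          - 4*μ*X*ωb*L*(R*G - C + V)*b) / (4*μ*L^2*X) :=
    div_nonneg (by linarith) hpos.le
  have key2 : (ωb/L)*(R*G - C + V)*b - (X*ωb^2/(4*μ))*(1+G^2+C^2)*b^2
      ≤ μ*(1+R^2+Vg^2)/(L^2*X) := by linarith
  have h1 : k*a^2 ≤ KVC*a^2 := mul_le_mul_of_nonneg_right hkK1 (sq_nonneg a)
  have h2 : k*b^2 ≤ KCC*b^2 := mul_le_mul_of_nonneg_right hkK2 (sq_nonneg b)
  have expand : a*((ωb/Cf)*b - KVC*a)
      + b*(-(KCC + (X*ωb^2/(4*μ))*(1+G^2+C^2))*b - (ωb/Cf)*a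
        + (ωb*R/L)*G - (ωb/L)*C + (ωb/L)*V)
      = -(KVC*a^2) - KCC*b^2
        + ((ωb/L)*(R*G - C + V)*b - (X*ωb^2/(4*μ))*(1+G^2+C^2)*b^2) := by
    field_simp
    ring
  rw [expand]
  linarith


set_option maxHeartbeats 1000000 in
/-- Bound on the adaptive gain z of the closed-loop
DADS-backstepping d-channel error system: z(0) ≤ z(t) and the explicit
logarithmic upper bound hold for all t ≥ 0. The locally absolutely continuous
closed-loop solution is encoded by the integral identities plus local
integrability; v_g is measurable with essential bound Vg, and i_g, v_c are
measurable. -/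
theorem stmt11
    (ωb Cf KVC KCC μ R L Γ ε : ℝ)
    (hωb : 0 < ωb) (hCf : 0 < Cf) (hKVC : 0 < KVC) (hKCC : 0 < KCC)
    (hμ : 0 < μ) (hR : 0 < R) (hL : 0 < L) (hΓ : 0 < Γ) (hε : 0 < ε)
    (k : ℝ) (hk : k = min KVC KCC)
    (ig vc vg ev ei z : ℝ → ℝ) (Vg : ℝ)
    (hig_meas : Measurable ig) (hvc_meas : Measurable vc) (hvg_meas : Measurable vg)
    (hvg_bdd : ∀ᵐ t ∂volume, 0 ≤ t → |vg t| ≤ Vg)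
    (hev_int : ∀ t, 0 ≤ t → IntervalIntegrable
      (fun s => (ωb / Cf) * ei s - KVC * ev s) volume 0 t)
    (hev_rep : ∀ t, 0 ≤ t → ev t = ev 0 + ∫ s in (0:ℝ)..t,
      ((ωb / Cf) * ei s - KVC * ev s))
    (hei_int : ∀ t, 0 ≤ t → IntervalIntegrable
      (fun s => dadsInput ωb Cf KCC μ ig vc ev ei z s
        + (ωb * R / L) * ig s - (ωb / L) * vc s + (ωb / L) * vg s) volume 0 t)
    (hei_rep : ∀ t, 0 ≤ t → ei t = ei 0 + ∫ s in (0:ℝ)..t,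
      (dadsInput ωb Cf KCC μ ig vc ev ei z s
        + (ωb * R / L) * ig s - (ωb / L) * vc s + (ωb / L) * vg s))
    (hz_int : ∀ t, 0 ≤ t → IntervalIntegrable
      (fun s => Γ * Real.exp (-(z s)) * max (storageW ev ei s - ε) 0) volume 0 t)
    (hz_rep : ∀ t, 0 ≤ t → z t = z 0 + ∫ s in (0:ℝ)..t,
      (Γ * Real.exp (-(z s)) * max (storageW ev ei s - ε) 0)) :
    ∀ t, 0 ≤ t →
      z 0 ≤ z t ∧
      z t ≤ Real.log (max (μ * (1 + R^2 + Vg^2) / (2 * k * L^2 * ε) - 1)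
              (Real.exp (z 0))
            + (Γ / (2 * k)) * max (storageW ev ei 0
              + μ * (1 + R^2 + Vg^2) / (2 * k * L^2 * (1 + Real.exp (z 0))) - ε) 0) := by
  intro t ht
  have hk0 : 0 < k := by rw [hk]; exact lt_min hKVC hKCC
  have hkKVC : k ≤ KVC := by rw [hk]; exact min_le_left _ _
  have hkKCC : k ≤ KCC := by rw [hk]; exact min_le_right _ _
  have hζ0 : ∀ s, 0 ≤ Γ * Real.exp (-(z s)) * max (storageW ev ei s - ε) 0 := by
    intro s
    have h1 : (0:ℝ) ≤ max (storageW ev ei s - ε) 0 := le_max_right _ _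
    have h2 := (Real.exp_pos (-(z s))).le
    positivity
  -- z is nondecreasing
  have hzd : ∀ s u : ℝ, 0 ≤ s → s ≤ u →
      z u - z s = ∫ r in s..u, Γ * Real.exp (-(z r)) * max (storageW ev ei r - ε) 0 := by
    intro s u hs hsu
    rw [hz_rep u (hs.trans hsu), hz_rep s hs, add_sub_add_left_eq_sub]
    exact intervalIntegral.integral_interval_sub_left (hz_int u (hs.trans hsu)) (hz_int s hs)
  have hzmono : ∀ s u : ℝ, 0 ≤ s → s ≤ u → z s ≤ z u := by
    intro s u hs hsu
    have h1 := hzd s u hs hsu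
    have h2 : 0 ≤ ∫ r in s..u, Γ * Real.exp (-(z r)) * max (storageW ev ei r - ε) 0 :=
      intervalIntegral.integral_nonneg hsu fun r _ => hζ0 r
    linarith
  refine ⟨hzmono 0 t le_rfl ht, ?_⟩
  -- constants
  set D : ℝ := μ * (1 + R^2 + Vg^2) / L^2 with hDdef
  have hD0 : 0 < D := by rw [hDdef]; positivity
  set c0 : ℝ := D / (1 + Real.exp (z 0)) with hc0def
  have hc00 : 0 < c0 := by rw [hc0def]; positivity
  set Wb : ℝ := storageW ev ei 0 + c0 / (2*k) with hWbdef
  set M : ℝ := max (D / (2*k*ε) - 1) (Real.exp (z 0)) with hMdef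
  set Q : ℝ := max (Wb - ε) 0 with hQdef
  have hM0 : 0 < M := lt_of_lt_of_le (Real.exp_pos _) (le_max_right _ _)
  have hQ0 : (0:ℝ) ≤ Q := le_max_right _ _
  -- rewrite the goal
  have hgoalarg : max (μ * (1 + R^2 + Vg^2) / (2 * k * L^2 * ε) - 1)
              (Real.exp (z 0))
            + (Γ / (2 * k)) * max (storageW ev ei 0
              + μ * (1 + R^2 + Vg^2) / (2 * k * L^2 * (1 + Real.exp (z 0))) - ε) 0
      = M + (Γ / (2*k)) * Q := by
    have e1 : μ * (1 + R^2 + Vg^2) / (2 * k * L^2 * ε) = D / (2*k*ε) := by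
      rw [hDdef]; field_simp
    have e2 : μ * (1 + R^2 + Vg^2) / (2 * k * L^2 * (1 + Real.exp (z 0))) = c0 / (2*k) := by
      rw [hc0def, hDdef]
      field_simp
    rw [e1, e2, hMdef, hQdef, hWbdef]
  rw [hgoalarg]
  -- continuity infrastructure
  have hgI : IntervalIntegrable (fun s => (ωb / Cf) * ei s - KVC * ev s) volume 0 t :=
    hev_int t ht
  have hmI : IntervalIntegrable (fun s => dadsInput ωb Cf KCC μ ig vc ev ei z s
      + (ωb * R / L) * ig s - (ωb / L) * vc s + (ωb / L) * vg s) volume 0 t := hei_int t ht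
  have hevc : ContinuousOn ev (Icc 0 t) :=
    contOn_of_rep ev _ 0 t ht hgI (fun s hs => hev_rep s hs.1)
  have heic : ContinuousOn ei (Icc 0 t) :=
    contOn_of_rep ei _ 0 t ht hmI (fun s hs => hei_rep s hs.1)
  have hzc : ContinuousOn z (Icc 0 t) :=
    contOn_of_rep z _ 0 t ht (hz_int t ht) (fun s hs => hz_rep s hs.1)
  have hWcon : ContinuousOn (storageW ev ei) (Icc 0 t) := by
    show ContinuousOn (fun s => (ev s)^2/2 + (ei s)^2/2) (Icc 0 t)
    exact ((hevc.pow 2).div_const 2).add ((heic.pow 2).div_const 2)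
  have hPc : ContinuousOn (fun s => max (storageW ev ei s - ε) 0) (Icc 0 t) :=
    by have := continuous_max.comp_continuousOn ((hWcon.sub (continuousOn_const (c := ε))).prodMk (continuousOn_const (c := (0:ℝ)))); exact this
  have hsubU : ∀ τ σ : ℝ, 0 ≤ τ → τ ≤ σ → σ ≤ t → uIcc τ σ ⊆ uIcc 0 t := by
    intro τ σ hτ hτσ hσ
    apply uIcc_subset_uIcc <;> rw [uIcc_of_le ht]
    · exact ⟨hτ, hτσ.trans hσ⟩
    · exact ⟨hτ.trans hτσ, hσ⟩
  have hsubI : ∀ τ σ : ℝ, 0 ≤ τ → τ ≤ σ → σ ≤ t → uIcc τ σ ⊆ Icc 0 t := by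
    intro τ σ hτ hτσ hσ
    rw [← uIcc_of_le ht]
    exact hsubU τ σ hτ hτσ hσ
  -- representation of ev, ei, z from an arbitrary starting point τ
  have hevrepτ : ∀ τ : ℝ, 0 ≤ τ → ∀ s : ℝ, τ ≤ s →
      ev s = ev τ + ∫ r in τ..s, ((ωb / Cf) * ei r - KVC * ev r) := by
    intro τ hτ s hτs
    have h1 : ev s - ev τ = ∫ r in τ..s, ((ωb / Cf) * ei r - KVC * ev r) := by
      rw [hev_rep s (hτ.trans hτs), hev_rep τ hτ, add_sub_add_left_eq_sub]
      exact intervalIntegral.integral_interval_sub_left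
        (hev_int s (hτ.trans hτs)) (hev_int τ hτ)
    linarith
  have heirepτ : ∀ τ : ℝ, 0 ≤ τ → ∀ s : ℝ, τ ≤ s →
      ei s = ei τ + ∫ r in τ..s, (dadsInput ωb Cf KCC μ ig vc ev ei z r
        + (ωb * R / L) * ig r - (ωb / L) * vc r + (ωb / L) * vg r) := by
    intro τ hτ s hτs
    have h1 : ei s - ei τ = ∫ r in τ..s, (dadsInput ωb Cf KCC μ ig vc ev ei z r
        + (ωb * R / L) * ig r - (ωb / L) * vc r + (ωb / L) * vg r) := by
      rw [hei_rep s (hτ.trans hτs), hei_rep τ hτ, add_sub_add_left_eq_sub]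
      exact intervalIntegral.integral_interval_sub_left
        (hei_int s (hτ.trans hτs)) (hei_int τ hτ)
    linarith
  -- the storage function representation
  have hqint : ∀ τ σ : ℝ, 0 ≤ τ → τ ≤ σ → σ ≤ t → IntervalIntegrable
      (fun r => ev r * ((ωb / Cf) * ei r - KVC * ev r)
        + ei r * (dadsInput ωb Cf KCC μ ig vc ev ei z r
          + (ωb * R / L) * ig r - (ωb / L) * vc r + (ωb / L) * vg r)) volume τ σ := by
    intro τ σ hτ hτσ hσ
    apply IntervalIntegrable.add
    · exact (hgI.mono_set (hsubU τ σ hτ hτσ hσ)).continuousOn_mul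
        (hevc.mono (hsubI τ σ hτ hτσ hσ))
    · exact (hmI.mono_set (hsubU τ σ hτ hτσ hσ)).continuousOn_mul
        (heic.mono (hsubI τ σ hτ hτσ hσ))
  have hWrep : ∀ τ σ : ℝ, 0 ≤ τ → τ ≤ σ → σ ≤ t → ∀ s ∈ Icc τ σ,
      storageW ev ei s = storageW ev ei τ + ∫ r in τ..s,
        (ev r * ((ωb / Cf) * ei r - KVC * ev r)
          + ei r * (dadsInput ωb Cf KCC μ ig vc ev ei z r
            + (ωb * R / L) * ig r - (ωb / L) * vc r + (ωb / L) * vg r)) := by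
    intro τ σ hτ hτσ hσ s hs
    have hτs : τ ≤ s := hs.1
    have hst : s ≤ t := hs.2.trans hσ
    have hgτs : IntervalIntegrable (fun r => (ωb / Cf) * ei r - KVC * ev r) volume τ s :=
      hgI.mono_set (hsubU τ s hτ hτs hst)
    have hmτs : IntervalIntegrable (fun r => dadsInput ωb Cf KCC μ ig vc ev ei z r
        + (ωb * R / L) * ig r - (ωb / L) * vc r + (ωb / L) * vg r) volume τ s :=
      hmI.mono_set (hsubU τ s hτ hτs hst)
    have h1 := mul_rep ev ev _ _ τ s hτs hgτs hgτs
      (fun r hr => hevrepτ τ hτ r hr.1) (fun r hr => hevrepτ τ hτ r hr.1)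
    have h2 := mul_rep ei ei _ _ τ s hτs hmτs hmτs
      (fun r hr => heirepτ τ hτ r hr.1) (fun r hr => heirepτ τ hτ r hr.1)
    have hevgI : IntervalIntegrable (fun r => ev r * ((ωb / Cf) * ei r - KVC * ev r))
        volume τ s := hgτs.continuousOn_mul (hevc.mono (hsubI τ s hτ hτs hst))
    have heimI : IntervalIntegrable (fun r => ei r * (dadsInput ωb Cf KCC μ ig vc ev ei z r
        + (ωb * R / L) * ig r - (ωb / L) * vc r + (ωb / L) * vg r))
        volume τ s := hmτs.continuousOn_mul (heic.mono (hsubI τ s hτ hτs hst))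
    have e1 : ∫ r in τ..s, (((ωb / Cf) * ei r - KVC * ev r) * ev r
          + ev r * ((ωb / Cf) * ei r - KVC * ev r))
        = 2 * ∫ r in τ..s, ev r * ((ωb / Cf) * ei r - KVC * ev r) := by
      rw [← intervalIntegral.integral_const_mul]
      apply intervalIntegral.integral_congr
      intro r _; ring
    have e2 : ∫ r in τ..s, ((dadsInput ωb Cf KCC μ ig vc ev ei z r
          + (ωb * R / L) * ig r - (ωb / L) * vc r + (ωb / L) * vg r) * ei r
          + ei r * (dadsInput ωb Cf KCC μ ig vc ev ei z r
          + (ωb * R / L) * ig r - (ωb / L) * vc r + (ωb / L) * vg r))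
        = 2 * ∫ r in τ..s, ei r * (dadsInput ωb Cf KCC μ ig vc ev ei z r
          + (ωb * R / L) * ig r - (ωb / L) * vc r + (ωb / L) * vg r) := by
      rw [← intervalIntegral.integral_const_mul]
      apply intervalIntegral.integral_congr
      intro r _; ring
    have e3 := intervalIntegral.integral_add hevgI heimI
    rw [e1] at h1
    rw [e2] at h2
    show (ev s)^2/2 + (ei s)^2/2 = (ev τ)^2/2 + (ei τ)^2/2 + _
    rw [e3]
    have p1 : (ev s)^2 = ev s * ev s := by ring
    have p2 : (ev τ)^2 = ev τ * ev τ := by ring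
    have p3 : (ei s)^2 = ei s * ei s := by ring
    have p4 : (ei τ)^2 = ei τ * ei τ := by ring
    linarith [h1, h2]
  -- almost-everywhere differential inequality
  have haebound : ∀ τ σ c : ℝ, 0 ≤ τ → τ ≤ σ → σ ≤ t →
      (∀ s ∈ Icc τ σ, D / (1 + Real.exp (z s)) ≤ c) →
      ∀ᵐ s ∂(volume.restrict (Icc τ σ)),
        ev s * ((ωb / Cf) * ei s - KVC * ev s)
          + ei s * (dadsInput ωb Cf KCC μ ig vc ev ei z s
            + (ωb * R / L) * ig s - (ωb / L) * vc s + (ωb / L) * vg s)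
        ≤ -(2*k) * storageW ev ei s + c := by
    intro τ σ c hτ hτσ hσt hc
    have h1 : ∀ᵐ s ∂(volume.restrict (Icc τ σ)), (0 ≤ s → |vg s| ≤ Vg) :=
      ae_restrict_of_ae hvg_bdd
    have h2 : ∀ᵐ s ∂(volume.restrict (Icc τ σ)), s ∈ Icc τ σ :=
      ae_restrict_mem measurableSet_Icc
    filter_upwards [h1, h2] with s hs1 hs2
    have hs0 : 0 ≤ s := hτ.trans hs2.1
    have hVs := hs1 hs0
    have hX : (0:ℝ) < 1 + Real.exp (z s) := by positivity
    have hkey := keybound ωb Cf KVC KCC μ R L k Vg (1 + Real.exp (z s)) hμ hL hkKVC hkKCC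
      hX (ev s) (ei s) (ig s) (vc s) (vg s) hVs
    have heq : ev s * ((ωb / Cf) * ei s - KVC * ev s)
          + ei s * (dadsInput ωb Cf KCC μ ig vc ev ei z s
            + (ωb * R / L) * ig s - (ωb / L) * vc s + (ωb / L) * vg s)
        = ev s*((ωb/Cf)*(ei s) - KVC*(ev s))
          + (ei s)*(-(KCC + ((1 + Real.exp (z s))*ωb^2/(4*μ))*(1+(ig s)^2+(vc s)^2))*(ei s)
            - (ωb/Cf)*(ev s) + (ωb*R/L)*(ig s) - (ωb/L)*(vc s) + (ωb/L)*(vg s)) := by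
      simp only [dadsInput]
    have heq2 : μ * (1+R^2+Vg^2) / (L^2 * (1 + Real.exp (z s))) = D / (1 + Real.exp (z s)) := by
      rw [hDdef, div_div]
    have heq3 : storageW ev ei s = (ev s)^2/2 + (ei s)^2/2 := rfl
    rw [heq, heq3]
    calc ev s*((ωb/Cf)*(ei s) - KVC*(ev s))
          + (ei s)*(-(KCC + ((1 + Real.exp (z s))*ωb^2/(4*μ))*(1+(ig s)^2+(vc s)^2))*(ei s)
            - (ωb/Cf)*(ev s) + (ωb*R/L)*(ig s) - (ωb/L)*(vc s) + (ωb/L)*(vg s))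
        ≤ -(2*k)*((ev s)^2/2 + (ei s)^2/2) + μ*(1+R^2+Vg^2)/(L^2*(1 + Real.exp (z s))) := hkey
      _ ≤ -(2*k)*((ev s)^2/2 + (ei s)^2/2) + c := by
          rw [heq2]
          have := hc s hs2
          linarith
  -- the storage function is bounded on [0, t]
  have hWτb : ∀ τ : ℝ, 0 ≤ τ → τ ≤ t → storageW ev ei τ ≤ Wb := by
    intro τ hτ hτt
    have hcb : ∀ s ∈ Icc (0:ℝ) τ, D / (1 + Real.exp (z s)) ≤ c0 := by
      intro s hs
      have h1 : Real.exp (z 0) ≤ Real.exp (z s) := Real.exp_le_exp.mpr (hzmono 0 s le_rfl hs.1)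
      rw [hc0def]
      exact div_le_div_of_nonneg_left hD0.le (by positivity) (by linarith)
    have hbd := haebound 0 τ c0 le_rfl hτ hτt hcb
    have h2 := gron k c0 0 τ hk0 hτ (storageW ev ei) _ (hqint 0 τ le_rfl hτ hτt)
      (hWrep 0 τ le_rfl hτ hτt) hbd
    have hW00 : 0 ≤ storageW ev ei 0 := by
      have : storageW ev ei 0 = (ev 0)^2/2 + (ei 0)^2/2 := rfl
      rw [this]; positivity
    have he1 : Real.exp (-(2*k)*(τ - 0)) ≤ 1 := by
      rw [Real.exp_le_one_iff]
      nlinarith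
    have he0 := (Real.exp_pos (-(2*k)*(τ - 0))).le
    have hc02k : 0 ≤ c0/(2*k) := by positivity
    rw [hWbdef]
    nlinarith [mul_nonneg (sub_nonneg.mpr he1) hW00, mul_nonneg hc02k he0]
  -- final bound on exp (z t)
  have hfinal : Real.exp (z t) ≤ M + (Γ/(2*k)) * Q := by
    by_cases hcase : Real.exp (z t) ≤ M
    · have h1 : 0 ≤ (Γ/(2*k)) * Q := by positivity
      linarith
    · push_neg at hcase
      have hcont : ContinuousOn (fun s => Real.exp (z s)) (Icc 0 t) :=
        Real.continuous_exp.comp_continuousOn hzc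
      have hMmem : M ∈ Icc (Real.exp (z 0)) (Real.exp (z t)) :=
        ⟨le_max_right _ _, hcase.le⟩
      obtain ⟨τ, hτmem, hτeq⟩ := intermediate_value_Icc ht hcont hMmem
      obtain ⟨hτ0, hτt⟩ := hτmem
      simp only at hτeq
      -- on [τ, t] the disturbance term is dominated
      have hMbd : ∀ s ∈ Icc τ t, D / (1 + Real.exp (z s)) ≤ 2*k*ε := by
        intro s hs
        have h1 : M ≤ Real.exp (z s) := by
          rw [← hτeq]
          exact Real.exp_le_exp.mpr (hzmono τ s hτ0 hs.1)
        have h2 : D / (2*k*ε) - 1 ≤ M := le_max_left _ _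
        have h2' : D / (2*k*ε) ≤ 1 + M := by linarith
        have h3 : D ≤ 2*k*ε*(1+M) := by
          rw [div_le_iff₀ (by positivity : (0:ℝ) < 2*k*ε)] at h2'
          linarith [h2']
        rw [div_le_iff₀ (by positivity : (0:ℝ) < 1 + Real.exp (z s))]
        nlinarith [hk0, hε]
      -- exponential decay of the excess storage on [τ, t]
      have hPdecay : ∀ σ ∈ Icc τ t, max (storageW ev ei σ - ε) 0
          ≤ max (storageW ev ei τ - ε) 0 * Real.exp (-(2*k)*(σ - τ)) := by
        intro σ hσ
        have hτσ : σ ∈ Icc τ t := hσ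
        have hbd := haebound τ σ (2*k*ε) hτ0 hσ.1 hσ.2
          (fun s hs => hMbd s ⟨hs.1, hs.2.trans hσ.2⟩)
        have h2 := gron k (2*k*ε) τ σ hk0 hσ.1 (storageW ev ei) _
          (hqint τ σ hτ0 hσ.1 hσ.2) (hWrep τ σ hτ0 hσ.1 hσ.2) hbd
        have he : (2*k*ε)/(2*k) = ε := by field_simp
        rw [he] at h2
        have hQτ1 : storageW ev ei τ - ε ≤ max (storageW ev ei τ - ε) 0 := le_max_left _ _
        have hE0 := (Real.exp_pos (-(2*k)*(σ - τ))).le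
        apply max_le
        · calc storageW ev ei σ - ε
              ≤ (storageW ev ei τ - ε) * Real.exp (-(2*k)*(σ-τ)) := by linarith
            _ ≤ max (storageW ev ei τ - ε) 0 * Real.exp (-(2*k)*(σ - τ)) :=
              mul_le_mul_of_nonneg_right hQτ1 hE0
        · positivity
      -- the representation of exp (z ·) on [τ, t]
      have hζint : IntervalIntegrable
          (fun s => Γ * Real.exp (-(z s)) * max (storageW ev ei s - ε) 0) volume τ t :=
        (hz_int t ht).mono_set (hsubU τ t hτ0 hτt le_rfl)
      have hPKint : IntervalIntegrable
          (fun s => Γ * max (storageW ev ei s - ε) 0) volume τ t :=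
        ContinuousOn.intervalIntegrable
          ((continuousOn_const.mul hPc).mono (hsubI τ t hτ0 hτt le_rfl))
      have hzrepτ : ∀ s ∈ Icc τ t, z s = z τ + ∫ r in τ..s,
          Γ * Real.exp (-(z r)) * max (storageW ev ei r - ε) 0 := by
        intro s hs
        have := hzd τ s hτ0 hs.1
        linarith
      have hexp := exp_rep z (fun s => max (storageW ev ei s - ε) 0) Γ τ t hτt hΓ
        (fun s => le_max_right _ _) hζint hPKint hzrepτ
      -- bound the integral of Γ P
      have hQτ0 : (0:ℝ) ≤ max (storageW ev ei τ - ε) 0 := le_max_right _ _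
      have hdecInt : IntervalIntegrable
          (fun s => Γ * (max (storageW ev ei τ - ε) 0 * Real.exp (-(2*k)*(s - τ))))
          volume τ t :=
        ContinuousOn.intervalIntegrable (by fun_prop)
      have hIb : (∫ s in τ..t, Γ * max (storageW ev ei s - ε) 0)
          ≤ Γ * max (storageW ev ei τ - ε) 0 / (2*k) := by
        have h1 : (∫ s in τ..t, Γ * max (storageW ev ei s - ε) 0)
            ≤ ∫ s in τ..t, Γ * (max (storageW ev ei τ - ε) 0 * Real.exp (-(2*k)*(s - τ))) := by
          apply intervalIntegral.integral_mono_on hτt hPKint hdecInt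
          intro s hs
          exact mul_le_mul_of_nonneg_left (hPdecay s hs) hΓ.le
        have hder : ∀ s ∈ uIcc τ t, HasDerivAt
            (fun σ => -(Γ * max (storageW ev ei τ - ε) 0/(2*k)) * Real.exp (-(2*k)*(σ - τ)))
            (Γ * (max (storageW ev ei τ - ε) 0 * Real.exp (-(2*k)*(s - τ)))) s := by
          intro s _
          have hin : HasDerivAt (fun σ : ℝ => -(2*k)*(σ - τ)) (-(2*k)) s := by
            simpa using ((hasDerivAt_id s).sub_const τ).const_mul (-(2*k))
          have h3 := hin.exp
          have h4 := h3.const_mul (-(Γ * max (storageW ev ei τ - ε) 0/(2*k)))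
          refine h4.congr_deriv ?_
          have hk2 : (2*k) ≠ 0 := by positivity
          rw [mul_comm (Real.exp _) (-(2*k)), ← mul_assoc (-(Γ * max (storageW ev ei τ - ε) 0/(2*k))),
            neg_mul_neg, div_mul_cancel₀ _ hk2]
          ring
        have h2 := intervalIntegral.integral_eq_sub_of_hasDerivAt hder hdecInt
        have hE0 := (Real.exp_pos (-(2*k)*(t - τ))).le
        have hE1 : Real.exp (-(2*k)*(τ - τ)) = 1 := by norm_num
        rw [hE1] at h2
        have hc2 : (0:ℝ) ≤ Γ * max (storageW ev ei τ - ε) 0 / (2*k) := by positivity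
        calc (∫ s in τ..t, Γ * max (storageW ev ei s - ε) 0)
            ≤ ∫ s in τ..t, Γ * (max (storageW ev ei τ - ε) 0 * Real.exp (-(2*k)*(s - τ))) := h1
          _ = -(Γ * max (storageW ev ei τ - ε) 0/(2*k)) * Real.exp (-(2*k)*(t - τ))
              - -(Γ * max (storageW ev ei τ - ε) 0/(2*k)) * 1 := h2
          _ ≤ Γ * max (storageW ev ei τ - ε) 0 / (2*k) := by
              nlinarith [mul_nonneg hc2 hE0]
      -- conclude
      have hQτQ : max (storageW ev ei τ - ε) 0 ≤ Q := by
        rw [hQdef]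
        exact max_le_max (sub_le_sub_right (hWτb τ hτ0 hτt) ε) le_rfl
      calc Real.exp (z t) = Real.exp (z τ) + ∫ s in τ..t, Γ * max (storageW ev ei s - ε) 0 :=
            hexp
        _ ≤ M + Γ * max (storageW ev ei τ - ε) 0 / (2*k) := by rw [hτeq]; linarith
        _ ≤ M + (Γ/(2*k)) * Q := by
            have h5 : Γ * max (storageW ev ei τ - ε) 0 / (2*k) ≤ Γ * Q / (2*k) := by gcongr
            have h6 : Γ * Q / (2*k) = (Γ/(2*k)) * Q := by ring
            linarith
  have hB0 : 0 < M + (Γ/(2*k)) * Q := lt_of_lt_of_le (Real.exp_pos _) hfinal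
  rw [Real.le_log_iff_exp_le hB0]
  exact hfinal
end

section
/- Let ε > 0 and M ≥ 0, and let g : [0,∞) → ℝ be locally absolutely continuous with |ġ(t)| ≤ M for almost every t ≥ 0. If ∫₀^∞ max{g(t) − ε, 0} dt < +∞, then limsup_{t→∞} g(t) ≤ ε. -/
open MeasureTheory Filter
open scoped ENNReal

/-- Barbalat-type asymptotic claim: if g is locally
absolutely continuous on [0,∞) (encoded by the integral identity with locally
integrable a.e. derivative g') with |ġ| ≤ M a.e., and the excess of g above
the threshold ε > 0 has finite (Lebesgue) integral over [0,∞), then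
limsup_{t→∞} g(t) ≤ ε. -/
theorem stmt12
    (ε M : ℝ) (hε : 0 < ε) (hM : 0 ≤ M)
    (g g' : ℝ → ℝ)
    (hg_int : ∀ t, 0 ≤ t → IntervalIntegrable g' volume 0 t)
    (hg_rep : ∀ t, 0 ≤ t → g t = g 0 + ∫ s in (0:ℝ)..t, g' s)
    (hg' : ∀ᵐ t ∂volume, 0 ≤ t → |g' t| ≤ M)
    (hfin : ∫⁻ t in Set.Ici (0:ℝ), ENNReal.ofReal (max (g t - ε) 0) < ⊤) :
    limsup g atTop ≤ ε := by
  -- clamped derivative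
  set G : ℝ → ℝ := fun x => max (-M) (min M (g' x)) with hG
  have hGbd : ∀ x, |G x| ≤ M := by
    intro x
    rw [abs_le]
    constructor
    · exact le_max_left _ _
    · exact max_le (by linarith) (min_le_left _ _)
  -- Lipschitz-type bound
  have lip : ∀ t s : ℝ, 0 ≤ t → t ≤ s → |g s - g t| ≤ M * (s - t) := by
    intro t s ht hts
    have hs0 : (0:ℝ) ≤ s := le_trans ht hts
    have h0s := hg_int s hs0
    have h0t := hg_int t ht
    have hts' : IntervalIntegrable g' volume t s := by
      apply h0s.mono_set
      rw [Set.uIcc_of_le hts, Set.uIcc_of_le hs0]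
      exact Set.Icc_subset_Icc ht le_rfl
    have hdiff : g s - g t = ∫ u in t..s, g' u := by
      rw [hg_rep s hs0, hg_rep t ht]
      have := intervalIntegral.integral_interval_sub_left h0s h0t
      linarith [this]
    have hcong : (∫ u in t..s, g' u) = ∫ u in t..s, G u := by
      apply intervalIntegral.integral_congr_ae
      filter_upwards [hg'] with x hx hmem
      rw [Set.uIoc_of_le hts] at hmem
      have hx0 : 0 ≤ x := le_trans ht (le_of_lt hmem.1)
      have := hx hx0
      rw [abs_le] at this
      simp only [hG]
      rw [min_eq_right this.2, max_eq_right this.1]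
    have hbd : ‖∫ u in t..s, G u‖ ≤ M * |s - t| :=
      intervalIntegral.norm_integral_le_of_norm_le_const (fun x _ => by
        simpa using hGbd x)
    rw [hdiff, hcong]
    rw [Real.norm_eq_abs] at hbd
    rwa [abs_of_nonneg (by linarith : (0:ℝ) ≤ s - t)] at hbd
  -- eventual bound
  have hev : ∀ δ : ℝ, 0 < δ → ∀ᶠ t in atTop, g t ≤ ε + δ := by
    intro δ hδ
    by_contra hcon
    have hfreq : ∀ a : ℝ, ∃ b ≥ a, ε + δ < g b := by
      have := Filter.not_eventually.1 hcon
      have h2 := Filter.frequently_atTop.1 this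
      intro a
      obtain ⟨b, hb, hb2⟩ := h2 a
      exact ⟨b, hb, lt_of_not_ge hb2⟩
    set L : ℝ := M + 1 with hL
    have hLpos : 0 < L := by linarith
    set ℓ : ℝ := δ / (2 * L) with hℓ
    have hℓpos : 0 < ℓ := div_pos hδ (by linarith)
    have hMℓ : M * ℓ ≤ δ / 2 := by
      have : L * ℓ = δ / 2 := by
        field_simp [hℓ]
        rw [hℓ]; field_simp [hLpos.ne']
      nlinarith
    set r : ℝ := δ / 2 * ℓ with hr
    have hrpos : 0 < r := mul_pos (by linarith) hℓpos
    -- each excursion contributes at least r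
    have contrib : ∀ t : ℝ, 0 ≤ t → ε + δ < g t →
        ENNReal.ofReal r ≤ ∫⁻ s in Set.Ico t (t + ℓ), ENNReal.ofReal (max (g s - ε) 0) := by
      intro t ht hgt
      have hmono : ∀ s ∈ Set.Ico t (t + ℓ), ENNReal.ofReal (δ / 2) ≤ ENNReal.ofReal (max (g s - ε) 0) := by
        intro s hs
        apply ENNReal.ofReal_le_ofReal
        have h1 : |g s - g t| ≤ M * (s - t) := lip t s ht hs.1
        have h2 : M * (s - t) ≤ M * ℓ := by
          apply mul_le_mul_of_nonneg_left _ hM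
          have := hs.2
          linarith
        have h3 : g t - g s ≤ δ / 2 := by
          have := abs_le.1 h1
          linarith [this.1]
        have : δ / 2 ≤ g s - ε := by linarith
        exact le_trans this (le_max_left _ _)
      calc ENNReal.ofReal r
          = ENNReal.ofReal (δ / 2) * volume (Set.Ico t (t + ℓ)) := by
            rw [Real.volume_Ico]
            rw [show t + ℓ - t = ℓ by ring]
            rw [← ENNReal.ofReal_mul (by linarith : (0:ℝ) ≤ δ / 2)]
        _ = ∫⁻ _ in Set.Ico t (t + ℓ), ENNReal.ofReal (δ / 2) := by
            rw [setLIntegral_const]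
        _ ≤ ∫⁻ s in Set.Ico t (t + ℓ), ENNReal.ofReal (max (g s - ε) 0) := by
            apply lintegral_mono_ae
            exact (ae_restrict_iff' measurableSet_Ico).2 (ae_of_all _ hmono)
    -- accumulate
    have main : ∀ n : ℕ, ∃ T : ℝ, 0 ≤ T ∧
        (n : ℝ≥0∞) * ENNReal.ofReal r ≤ ∫⁻ s in Set.Ico 0 T, ENNReal.ofReal (max (g s - ε) 0) := by
      intro n
      induction n with
      | zero => exact ⟨0, le_rfl, by simp⟩
      | succ n ih =>
        obtain ⟨T, hT0, hTle⟩ := ih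
        obtain ⟨t, htT, hgt⟩ := hfreq T
        have ht0 : 0 ≤ t := le_trans hT0 htT
        refine ⟨t + ℓ, by linarith, ?_⟩
        have hdisj : Disjoint (Set.Ico 0 T) (Set.Ico t (t + ℓ)) := by
          rw [Set.disjoint_left]
          intro x hx hx2
          exact absurd (lt_of_lt_of_le hx.2 (le_trans htT hx2.1)) (lt_irrefl x)
        have hsub : Set.Ico 0 T ∪ Set.Ico t (t + ℓ) ⊆ Set.Ico 0 (t + ℓ) := by
          apply Set.union_subset
          · exact Set.Ico_subset_Ico le_rfl (by linarith)
          · exact Set.Ico_subset_Ico ht0 le_rfl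
        calc ((n + 1 : ℕ) : ℝ≥0∞) * ENNReal.ofReal r
            = (n : ℝ≥0∞) * ENNReal.ofReal r + ENNReal.ofReal r := by
              push_cast
              ring
          _ ≤ (∫⁻ s in Set.Ico 0 T, ENNReal.ofReal (max (g s - ε) 0))
              + ∫⁻ s in Set.Ico t (t + ℓ), ENNReal.ofReal (max (g s - ε) 0) :=
              add_le_add hTle (contrib t ht0 hgt)
          _ = ∫⁻ s in Set.Ico 0 T ∪ Set.Ico t (t + ℓ), ENNReal.ofReal (max (g s - ε) 0) :=
              (lintegral_union measurableSet_Ico hdisj).symm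
          _ ≤ ∫⁻ s in Set.Ico 0 (t + ℓ), ENNReal.ofReal (max (g s - ε) 0) :=
              lintegral_mono_set hsub
    -- contradiction with finiteness
    set x := ∫⁻ s in Set.Ici (0:ℝ), ENNReal.ofReal (max (g s - ε) 0) with hx
    have hxn : ∀ n : ℕ, (n : ℝ≥0∞) * ENNReal.ofReal r ≤ x := by
      intro n
      obtain ⟨T, hT0, hTle⟩ := main n
      exact le_trans hTle (lintegral_mono_set (Set.Ico_subset_Icc_self.trans
        (Set.Icc_subset_Ici_self)))
    have hxne : x ≠ ⊤ := hfin.ne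
    have hreal : ∀ n : ℕ, (n : ℝ) * r ≤ x.toReal := by
      intro n
      have h1 := hxn n
      have h2 : ((n : ℝ≥0∞) * ENNReal.ofReal r).toReal ≤ x.toReal :=
        ENNReal.toReal_mono hxne h1
      rwa [ENNReal.toReal_mul, ENNReal.toReal_natCast, ENNReal.toReal_ofReal hrpos.le] at h2
    obtain ⟨n, hn⟩ := exists_nat_gt (x.toReal / r)
    have := hreal n
    rw [div_lt_iff₀ hrpos] at hn
    linarith
  -- conclude limsup bound
  by_cases hcb : Filter.IsCoboundedUnder (· ≤ ·) atTop g
  · have h1 : ∀ δ : ℝ, 0 < δ → limsup g atTop ≤ ε + δ := fun δ hδ =>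
      Filter.limsup_le_of_le hcb (hev δ hδ)
    exact le_of_forall_pos_le_add h1
  · rw [Filter.limsup_eq, Real.sInf_of_not_bddBelow]
    · exact hε.le
    · intro ⟨b, hb⟩
      apply hcb
      refine ⟨b, fun a ha => ?_⟩
      exact hb (Filter.eventually_map.1 ha)
end

section
/- Let ω_b, C_f, K_VC, K_CC, μ, R, L, Γ, ε > 0 and set k = min{K_VC, K_CC}. Suppose i_g, v_c, v_g : [0,∞) → ℝ are Lebesgue measurable and essentially bounded, and e_v, e_i, z : [0,∞) → ℝ are locally absolutely continuous functions satisfying, for almost every t ≥ 0: ė_v = (ω_b/C_f)e_i − K_VC·e_v; ė_i = u + (ω_b R/L)i_g − (ω_b/L)v_c + (ω_b/L)v_g, where u = −( K_CC + ((1 + e^z)ω_b²/(4μ))(1 + i_g² + v_c²) )·e_i − (ω_b/C_f)·e_v; and ż = Γ·e^{−z}·max{W − ε, 0}, where W = e_v²/2 + e_i²/2. Then limsup_{t→∞} W(t) ≤ ε, and consequently limsup_{t→∞} |e_v(t)| ≤ √(2ε). -/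
open MeasureTheory Filter

open Set Topology

set_option maxHeartbeats 1000000

section DADSAux

lemma my_swap {a b : ℝ} {g φ : ℝ → ℝ}
    (hg : IntegrableOn g (Ioc a b)) (hφ : IntegrableOn φ (Ioc a b)) :
    ∫ s in Ioc a b, φ s * (∫ r in Ioc a s, g r) =
    ∫ r in Ioc a b, g r * (∫ s in Icc r b, φ s) := by
  set μ := volume.restrict (Ioc a b) with hμ
  have hgi : Integrable g μ := hg
  have hφi : Integrable φ μ := hφ
  set F : ℝ × ℝ → ℝ := fun p => Set.indicator {p : ℝ × ℝ | p.2 ≤ p.1}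
    (fun p => φ p.1 * g p.2) p with hF
  have hFint : Integrable F (μ.prod μ) := by
    have h1 : Integrable (fun p : ℝ × ℝ => φ p.1 * g p.2) (μ.prod μ) :=
      Integrable.mul_prod hφi hgi
    have hE : MeasurableSet {p : ℝ × ℝ | p.2 ≤ p.1} :=
      measurableSet_le measurable_snd measurable_fst
    exact h1.indicator hE
  have hswap : ∫ s, (∫ r, F (s, r) ∂μ) ∂μ = ∫ r, (∫ s, F (s, r) ∂μ) ∂μ :=
    integral_integral_swap (f := fun s r => F (s, r)) hFint
  have hL : ∫ s, (∫ r, F (s, r) ∂μ) ∂μ = ∫ s in Ioc a b, φ s * (∫ r in Ioc a s, g r) := by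
    rw [hμ]
    apply setIntegral_congr_fun measurableSet_Ioc
    intro s hs
    have : ∀ r, F (s, r) = Set.indicator (Iic s) (fun r => φ s * g r) r := by
      intro r
      by_cases h : r ≤ s <;> simp [hF, Set.indicator, h]
    simp_rw [this]
    rw [setIntegral_indicator measurableSet_Iic]
    have : Ioc a b ∩ Iic s = Ioc a s := by
      rw [Set.Ioc_inter_Iic, min_eq_right hs.2]
    rw [this, MeasureTheory.integral_const_mul]
  have hR : ∫ r, (∫ s, F (s, r) ∂μ) ∂μ = ∫ r in Ioc a b, g r * (∫ s in Icc r b, φ s) := by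
    rw [hμ]
    apply setIntegral_congr_fun measurableSet_Ioc
    intro r hr
    have : ∀ s, F (s, r) = Set.indicator (Ici r) (fun s => φ s * g r) s := by
      intro s
      by_cases h : r ≤ s <;> simp [hF, Set.indicator, h]
    simp_rw [this]
    rw [setIntegral_indicator measurableSet_Ici]
    have hset : Ioc a b ∩ Ici r = Icc r b := by
      ext x
      simp only [Set.mem_inter_iff, Set.mem_Ioc, Set.mem_Ici, Set.mem_Icc]
      constructor
      · rintro ⟨⟨_, h2⟩, h3⟩; exact ⟨h3, h2⟩
      · rintro ⟨h1, h2⟩; exact ⟨⟨lt_of_lt_of_le hr.1 h1, h2⟩, h1⟩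
    rw [hset]
    rw [MeasureTheory.integral_mul_const]
    ring
  rw [hL] at hswap
  rw [hR] at hswap
  exact hswap

lemma prim_contOn {g : ℝ → ℝ} (hg : ∀ t, 0 ≤ t → IntervalIntegrable g volume 0 t) :
    ContinuousOn (fun t => ∫ s in (0:ℝ)..t, g s) (Ici (0:ℝ)) := by
  intro a ha
  have h1 : IntervalIntegrable g volume 0 (a+1) := hg (a+1) (by linarith [mem_Ici.mp ha])
  have h2 : IntegrableOn g (uIcc (0:ℝ) (a+1)) volume := by
    rw [uIcc_of_le (by linarith [mem_Ici.mp ha])]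
    rw [integrableOn_Icc_iff_integrableOn_Ioc]
    exact (intervalIntegrable_iff_integrableOn_Ioc_of_le (by linarith [mem_Ici.mp ha])).mp h1
  have h3 := intervalIntegral.continuousOn_primitive_interval h2
  have ha' : a ∈ uIcc (0:ℝ) (a+1) := by
    rw [uIcc_of_le (by linarith [mem_Ici.mp ha])]
    exact ⟨mem_Ici.mp ha, by linarith⟩
  have h4 : ContinuousWithinAt (fun t => ∫ s in (0:ℝ)..t, g s) (uIcc (0:ℝ) (a+1)) a :=
    h3 a ha'
  apply h4.mono_of_mem_nhdsWithin
  rw [uIcc_of_le (by linarith [mem_Ici.mp ha])]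
  have : Icc (0:ℝ) (a+1) = Ici 0 ∩ Iic (a+1) := (Ici_inter_Iic).symm
  rw [this]
  exact Filter.inter_mem self_mem_nhdsWithin
    (mem_nhdsWithin_of_mem_nhds (Iic_mem_nhds (by linarith [mem_Ici.mp ha])))

lemma sq_rep {g f : ℝ → ℝ} (hg : ∀ t, 0 ≤ t → IntervalIntegrable g volume 0 t)
    (hf : ∀ t, 0 ≤ t → f t = f 0 + ∫ s in (0:ℝ)..t, g s)
    {t : ℝ} (ht : 0 ≤ t) :
    f t ^ 2 / 2 = f 0 ^ 2 / 2 + ∫ s in (0:ℝ)..t, f s * g s := by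
  set F : ℝ → ℝ := fun x => ∫ s in (0:ℝ)..x, g s with hF
  have hgt := hg t ht
  have hgIoc : IntegrableOn g (Ioc 0 t) volume :=
    (intervalIntegrable_iff_integrableOn_Ioc_of_le ht).mp hgt
  have hFc : ContinuousOn F (Icc 0 t) := (prim_contOn hg).mono Icc_subset_Ici_self
  have hFg_int : IntervalIntegrable (fun s => g s * F s) volume 0 t := by
    apply hgt.mul_continuousOn
    rwa [uIcc_of_le ht]
  have hFgIoc : IntegrableOn (fun s => g s * F s) (Ioc 0 t) volume :=
    (intervalIntegrable_iff_integrableOn_Ioc_of_le ht).mp hFg_int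
  have key : ∫ s in Ioc 0 t, g s * F s = F t ^ 2 / 2 := by
    have hsw := my_swap hgIoc hgIoc
    have hL : ∫ s in Ioc 0 t, g s * (∫ r in Ioc 0 s, g r) = ∫ s in Ioc 0 t, g s * F s := by
      apply setIntegral_congr_fun measurableSet_Ioc
      intro s hs
      have : F s = ∫ r in Ioc 0 s, g r := intervalIntegral.integral_of_le hs.1.le
      dsimp only
      rw [this]
    have hR : ∫ r in Ioc 0 t, g r * (∫ s in Icc r t, g s)
        = ∫ r in Ioc 0 t, g r * (F t - F r) := by
      apply setIntegral_congr_fun measurableSet_Ioc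
      intro r hr
      dsimp only
      congr 1
      rw [integral_Icc_eq_integral_Ioc, ← intervalIntegral.integral_of_le hr.2]
      have h0r : IntervalIntegrable g volume 0 r := hgt.mono_set
        (by rw [uIcc_of_le ht, uIcc_of_le hr.1.le]; exact Icc_subset_Icc le_rfl hr.2)
      exact (intervalIntegral.integral_interval_sub_left hgt h0r).symm
    rw [hL, hR] at hsw
    have hsplit : ∫ r in Ioc 0 t, g r * (F t - F r)
        = (∫ r in Ioc 0 t, F t * g r) - ∫ r in Ioc 0 t, g r * F r := by
      rw [← integral_sub (hgIoc.const_mul (F t)) hFgIoc]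
      apply setIntegral_congr_fun measurableSet_Ioc
      intro r _
      dsimp only
      ring
    have hFt : ∫ r in Ioc 0 t, g r = F t := (intervalIntegral.integral_of_le ht).symm
    rw [hsplit, integral_const_mul, hFt] at hsw
    linarith
  have hfeq : ∫ s in (0:ℝ)..t, f s * g s = f 0 * F t + F t ^ 2 / 2 := by
    rw [intervalIntegral.integral_of_le ht]
    have h1 : ∫ s in Ioc 0 t, f s * g s
        = ∫ s in Ioc 0 t, (f 0 * g s + g s * F s) := by
      apply setIntegral_congr_fun measurableSet_Ioc
      intro s hs
      have hfs : f s = f 0 + F s := hf s hs.1.le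
      dsimp only
      rw [hfs]
      ring
    have hFt : ∫ r in Ioc 0 t, g r = F t := (intervalIntegral.integral_of_le ht).symm
    rw [h1, integral_add (hgIoc.const_mul (f 0)) hFgIoc, integral_const_mul, key, hFt]
  have hft : f t = f 0 + F t := hf t ht
  rw [hfeq, hft]
  ring

lemma gronwall {k B T t : ℝ} (hk : 0 < k) (hTt : T ≤ t) {V q : ℝ → ℝ}
    (hq : IntervalIntegrable q volume T t)
    (hV : ∀ s, s ∈ Icc T t → V s = V T + ∫ r in T..s, q r)
    (hVc : ContinuousOn V (Icc T t))
    (hbd : ∀ᵐ s ∂(volume.restrict (Ioc T t)), q s + 2*k*V s ≤ B)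
    (hB : 0 ≤ B) :
    V t ≤ Real.exp (2*k*(T - t)) * V T + B/(2*k) := by
  have hqIoc : IntegrableOn q (Ioc T t) volume :=
    (intervalIntegrable_iff_integrableOn_Ioc_of_le hTt).mp hq
  have hEc : Continuous (fun u : ℝ => Real.exp (2*k*u)) := by continuity
  have hφc : Continuous (fun u : ℝ => 2*k*Real.exp (2*k*u)) := by continuity
  have hφIoc : IntegrableOn (fun u : ℝ => 2*k*Real.exp (2*k*u)) (Ioc T t) volume :=
    hφc.integrableOn_Ioc
  have hED : ∀ u : ℝ, HasDerivAt (fun v : ℝ => Real.exp (2*k*v)) (2*k*Real.exp (2*k*u)) u := by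
    intro u
    have h1 : HasDerivAt (fun v : ℝ => 2*k*v) (2*k) u := by
      simpa using (hasDerivAt_id u).const_mul (2*k)
    have := h1.exp
    simpa [mul_comm] using this
  have hφint : ∀ r t' : ℝ, ∫ s in r..t', 2*k*Real.exp (2*k*s)
      = Real.exp (2*k*t') - Real.exp (2*k*r) := by
    intro r t'
    exact intervalIntegral.integral_eq_sub_of_hasDerivAt (fun x _ => hED x)
      (hφc.intervalIntegrable r t')
  have hsw := my_swap (g := q) (φ := fun u : ℝ => 2*k*Real.exp (2*k*u)) hqIoc hφIoc
  have hL : ∫ s in Ioc T t, (2*k*Real.exp (2*k*s)) * (∫ r in Ioc T s, q r)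
      = ∫ s in Ioc T t, (2*k*Real.exp (2*k*s)) * (V s - V T) := by
    apply setIntegral_congr_fun measurableSet_Ioc
    intro s hs
    dsimp only
    congr 1
    rw [← intervalIntegral.integral_of_le hs.1.le]
    have := hV s ⟨hs.1.le, hs.2⟩
    linarith
  have hR : ∫ r in Ioc T t, q r * (∫ s in Icc r t, 2*k*Real.exp (2*k*s))
      = ∫ r in Ioc T t, q r * (Real.exp (2*k*t) - Real.exp (2*k*r)) := by
    apply setIntegral_congr_fun measurableSet_Ioc
    intro r hr
    dsimp only
    congr 1
    rw [integral_Icc_eq_integral_Ioc, ← intervalIntegral.integral_of_le hr.2]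
    exact hφint r t
  rw [hL, hR] at hsw
  -- integrability facts
  have hφV_int : IntegrableOn (fun s => (2*k*Real.exp (2*k*s)) * V s) (Ioc T t) volume :=
    ((hφc.continuousOn.mul hVc).integrableOn_Icc).mono_set Ioc_subset_Icc_self
  have hEq_int : IntegrableOn (fun s => Real.exp (2*k*s) * q s) (Ioc T t) volume := by
    have : IntervalIntegrable (fun s => Real.exp (2*k*s) * q s) volume T t :=
      hq.continuousOn_mul hEc.continuousOn
    exact (intervalIntegrable_iff_integrableOn_Ioc_of_le hTt).mp this
  have hIq : ∫ r in Ioc T t, q r = V t - V T := by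
    rw [← intervalIntegral.integral_of_le hTt]
    have := hV t ⟨hTt, le_rfl⟩
    linarith
  have hIφ : ∫ s in Ioc T t, 2*k*Real.exp (2*k*s)
      = Real.exp (2*k*t) - Real.exp (2*k*T) := by
    rw [← intervalIntegral.integral_of_le hTt]
    exact hφint T t
  -- expand both sides of hsw
  have hLexp : ∫ s in Ioc T t, (2*k*Real.exp (2*k*s)) * (V s - V T)
      = (∫ s in Ioc T t, (2*k*Real.exp (2*k*s)) * V s)
        - V T * (Real.exp (2*k*t) - Real.exp (2*k*T)) := by
    have h1 : ∫ s in Ioc T t, (2*k*Real.exp (2*k*s)) * (V s - V T)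
        = ∫ s in Ioc T t, ((2*k*Real.exp (2*k*s)) * V s - V T * (2*k*Real.exp (2*k*s))) := by
      apply setIntegral_congr_fun measurableSet_Ioc
      intro s _; dsimp only; ring
    rw [h1, integral_sub hφV_int (hφIoc.const_mul (V T)), integral_const_mul, hIφ]
  have hRexp : ∫ r in Ioc T t, q r * (Real.exp (2*k*t) - Real.exp (2*k*r))
      = Real.exp (2*k*t) * (V t - V T) - ∫ r in Ioc T t, Real.exp (2*k*r) * q r := by
    have h1 : ∫ r in Ioc T t, q r * (Real.exp (2*k*t) - Real.exp (2*k*r))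
        = ∫ r in Ioc T t, (Real.exp (2*k*t) * q r - Real.exp (2*k*r) * q r) := by
      apply setIntegral_congr_fun measurableSet_Ioc
      intro r _; dsimp only; ring
    rw [h1, integral_sub (hqIoc.const_mul _) hEq_int, integral_const_mul, hIq]
  rw [hLexp, hRexp] at hsw
  -- the combined integral identity
  have hcomb : (∫ s in Ioc T t, ((2*k*Real.exp (2*k*s)) * V s + Real.exp (2*k*s) * q s))
      = Real.exp (2*k*t) * V t - Real.exp (2*k*T) * V T := by
    rw [integral_add hφV_int hEq_int]
    linarith
  -- bound the integrand
  have hmono : (∫ s in Ioc T t, ((2*k*Real.exp (2*k*s)) * V s + Real.exp (2*k*s) * q s))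
      ≤ ∫ s in Ioc T t, Real.exp (2*k*s) * B := by
    apply setIntegral_mono_ae_restrict (hφV_int.add hEq_int)
      ((hEc.integrableOn_Ioc).mul_const B)
    filter_upwards [hbd] with s hs
    simp only [Pi.add_apply]
    have he : (0:ℝ) < Real.exp (2*k*s) := Real.exp_pos _
    have h2 : (2*k*Real.exp (2*k*s)) * V s + Real.exp (2*k*s) * q s
        = Real.exp (2*k*s) * (q s + 2*k*V s) := by ring
    rw [h2]
    exact mul_le_mul_of_nonneg_left hs he.le
  have hEB : ∫ s in Ioc T t, Real.exp (2*k*s) * B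
      = B * (Real.exp (2*k*t) - Real.exp (2*k*T)) / (2*k) := by
    have h1 : ∫ s in Ioc T t, Real.exp (2*k*s) * B
        = B / (2*k) * ∫ s in Ioc T t, 2*k*Real.exp (2*k*s) := by
      rw [← integral_const_mul]
      apply setIntegral_congr_fun measurableSet_Ioc
      intro s _; dsimp only
      field_simp
    rw [h1, hIφ]
    ring
  rw [hcomb, hEB] at hmono
  -- final algebra
  have hEtpos : (0:ℝ) < Real.exp (2*k*t) := Real.exp_pos _
  have hETpos : (0:ℝ) < Real.exp (2*k*T) := Real.exp_pos _
  have hdiv : Real.exp (2*k*(T-t)) = Real.exp (2*k*T) / Real.exp (2*k*t) := by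
    rw [show 2*k*(T-t) = 2*k*T - 2*k*t by ring, Real.exp_sub]
  rw [hdiv]
  have hc : Real.exp (2*k*T) / Real.exp (2*k*t) * Real.exp (2*k*t) = Real.exp (2*k*T) :=
    div_mul_cancel₀ _ (ne_of_gt hEtpos)
  have hkpos : (0:ℝ) < 2*k := by linarith
  have hfin : Real.exp (2*k*t) * V t
      ≤ Real.exp (2*k*T) * V T + B / (2*k) * Real.exp (2*k*t) := by
    have hBET : 0 ≤ B * Real.exp (2*k*T) / (2*k) := by positivity
    have : B * (Real.exp (2*k*t) - Real.exp (2*k*T)) / (2*k)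
        = B / (2*k) * Real.exp (2*k*t) - B * Real.exp (2*k*T) / (2*k) := by ring
    linarith [hmono, this]
  have h8 : V t ≤ (Real.exp (2*k*T) * V T + B/(2*k) * Real.exp (2*k*t)) / Real.exp (2*k*t) := by
    rw [le_div_iff₀ hEtpos]
    linarith [hfin]
  have h9 : (Real.exp (2*k*T) * V T + B/(2*k) * Real.exp (2*k*t)) / Real.exp (2*k*t)
      = Real.exp (2*k*T)/Real.exp (2*k*t) * V T + B/(2*k) := by
    rw [add_div, mul_div_right_comm, mul_div_cancel_right₀ _ (ne_of_gt hEtpos)]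
  exact h8.trans_eq h9

lemma key_ineq {ωb Cf KVC KCC μ R L k Cvg D : ℝ}
    (hωb : 0 < ωb) (hCf : 0 < Cf) (hKVC : 0 < KVC) (hKCC : 0 < KCC)
    (hμ : 0 < μ) (hL : 0 < L) (hk : k = min KVC KCC)
    (hD : D = 3 * (max (R^2) 1 + Cvg^2) / L^2)
    (Ig Vc Vg Ev Ei Z : ℝ) (hvg : |Vg| ≤ Cvg) :
    Ev * ((ωb / Cf) * Ei - KVC * Ev)
      + Ei * ((-(KCC + ((1 + Real.exp Z) * ωb^2 / (4 * μ)) * (1 + Ig^2 + Vc^2)) * Ei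
          - (ωb / Cf) * Ev) + (ωb * R / L) * Ig - (ωb / L) * Vc + (ωb / L) * Vg)
    ≤ -(2*k) * (Ev^2/2 + Ei^2/2) + μ * D * Real.exp (-Z) := by
  have hE : (0:ℝ) < Real.exp Z := Real.exp_pos _
  have hP : (1:ℝ) ≤ 1 + Ig^2 + Vc^2 := by linarith [sq_nonneg Ig, sq_nonneg Vc]
  have hPpos : (0:ℝ) < 1 + Ig^2 + Vc^2 := by linarith
  set P : ℝ := 1 + Ig^2 + Vc^2 with hPdef
  set E : ℝ := Real.exp Z with hEdef
  set d : ℝ := (ωb * R / L) * Ig - (ωb / L) * Vc + (ωb / L) * Vg with hddef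
  set c : ℝ := E * ωb^2 * P / (4 * μ) with hcdef
  have hcpos : 0 < c := by rw [hcdef]; positivity
  have hCvg : 0 ≤ Cvg := le_trans (abs_nonneg Vg) hvg
  have hVg2 : Vg^2 ≤ Cvg^2 := sq_le_sq' (abs_le.mp hvg).1 (abs_le.mp hvg).2
  have hmax1 : R^2 ≤ max (R^2) 1 := le_max_left _ _
  have hmax2 : (1:ℝ) ≤ max (R^2) 1 := le_max_right _ _
  -- d^2 ≤ D * ωb^2 * P
  have hdd : d = ωb / L * (R * Ig - Vc + Vg) := by rw [hddef]; ring
  have h3 : (R * Ig - Vc + Vg)^2 ≤ 3 * (R^2 * Ig^2 + Vc^2 + Vg^2) := by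
    nlinarith [sq_nonneg (R*Ig + Vc), sq_nonneg (R*Ig - Vg), sq_nonneg (Vc + Vg)]
  have e1 : R^2 * Ig^2 ≤ (max (R^2) 1) * Ig^2 :=
    mul_le_mul_of_nonneg_right hmax1 (sq_nonneg Ig)
  have e2 : Vc^2 ≤ (max (R^2) 1) * Vc^2 := le_mul_of_one_le_left (sq_nonneg Vc) hmax2
  have e4 : (0:ℝ) ≤ Cvg^2 * Ig^2 := mul_nonneg (sq_nonneg _) (sq_nonneg _)
  have e5 : (0:ℝ) ≤ Cvg^2 * Vc^2 := mul_nonneg (sq_nonneg _) (sq_nonneg _)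
  have h4 : (R * Ig - Vc + Vg)^2 ≤ 3 * (max (R^2) 1 + Cvg^2) * P := by
    rw [hPdef]
    linarith [h3, e1, e2, hVg2, e4, e5, hmax2]
  have h5 : (ωb / L)^2 * (3 * (max (R^2) 1 + Cvg^2) * P) = D * ωb^2 * P := by
    rw [hD]; field_simp
  have hd2 : d^2 ≤ D * ωb^2 * P := by
    rw [hdd, mul_pow, ← h5]
    exact mul_le_mul_of_nonneg_left h4 (sq_nonneg _)
  -- Young
  have hc4pos : (0:ℝ) < 4 * c := by linarith
  have hy : 4 * c * (d^2 / (4 * c)) = d^2 := by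
    rw [mul_comm, div_mul_cancel₀ _ (ne_of_gt hc4pos)]
  have hyoung : Ei * d ≤ c * Ei^2 + d^2 / (4 * c) := by
    have h1 : 0 ≤ (2*c*Ei - d)^2 := sq_nonneg _
    have heq : 4*c*(c*Ei^2 - Ei*d + d^2/(4*c)) = (2*c*Ei - d)^2 := by
      linear_combination hy
    have h2 : 0 ≤ 4*c*(c*Ei^2 - Ei*d + d^2/(4*c)) := heq ▸ h1
    have h6 := (mul_nonneg_iff_of_pos_left hc4pos).mp h2
    linarith
  -- d^2/(4c) ≤ μ D exp(-Z)
  have hexp : Real.exp (-Z) = 1 / E := by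
    rw [hEdef, Real.exp_neg, inv_eq_one_div]
  have hq : d^2 / (4 * c) ≤ μ * D * Real.exp (-Z) := by
    rw [hexp]
    have hrhs : μ * D * (1 / E) = μ * D / E := by ring
    rw [hrhs, div_le_div_iff₀ hc4pos hE]
    have hc4' : μ * D * (4 * c) = D * E * ωb^2 * P := by
      rw [hcdef]; field_simp
    rw [hc4']
    calc d^2 * E ≤ (D * ωb^2 * P) * E := mul_le_mul_of_nonneg_right hd2 hE.le
      _ = D * E * ωb^2 * P := by ring
  -- assemble
  have hkv : k ≤ KVC := by rw [hk]; exact min_le_left _ _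
  have hkc : k ≤ KCC := by rw [hk]; exact min_le_right _ _
  have hAc : ((1+E)*ωb^2/(4*μ))*P - c = ωb^2*P/(4*μ) := by
    rw [hcdef]; field_simp; ring
  have hAc0 : (0:ℝ) ≤ ωb^2*P/(4*μ) := by positivity
  have hcA : c ≤ ((1+E)*ωb^2/(4*μ))*P := by linarith
  have hA : c * Ei^2 ≤ ((1+E)*ωb^2/(4*μ))*P * Ei^2 :=
    mul_le_mul_of_nonneg_right hcA (sq_nonneg Ei)
  have hLHS : Ev * ((ωb / Cf) * Ei - KVC * Ev)
      + Ei * ((-(KCC + ((1 + Real.exp Z) * ωb^2 / (4 * μ)) * (1 + Ig^2 + Vc^2)) * Ei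
          - (ωb / Cf) * Ev) + (ωb * R / L) * Ig - (ωb / L) * Vc + (ωb / L) * Vg)
      = -KVC * Ev^2 - KCC * Ei^2 - ((1 + E) * ωb^2 / (4 * μ)) * P * Ei^2 + Ei * d := by
    rw [hddef, hPdef, hEdef]; ring
  rw [hLHS]
  have hv1 : k * Ev^2 ≤ KVC * Ev^2 := mul_le_mul_of_nonneg_right hkv (sq_nonneg Ev)
  have hv2 : k * Ei^2 ≤ KCC * Ei^2 := mul_le_mul_of_nonneg_right hkc (sq_nonneg Ei)
  linarith [hyoung, hq, hA, hv1, hv2]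


end DADSAux

/-- Practical (assignable) voltage-regulation guarantee of
the DADS-backstepping d-channel closed loop: with i_g, v_c, v_g measurable and
essentially bounded, the storage function satisfies limsup_{t→∞} W(t) ≤ ε and
hence limsup_{t→∞} |e_v(t)| ≤ √(2ε). Local absolute continuity of the
closed-loop solution is encoded by the integral identities plus local
integrability of the right-hand sides. -/
theorem stmt13
    (ωb Cf KVC KCC μ R L Γ ε : ℝ)
    (hωb : 0 < ωb) (hCf : 0 < Cf) (hKVC : 0 < KVC) (hKCC : 0 < KCC)
    (hμ : 0 < μ) (hR : 0 < R) (hL : 0 < L) (hΓ : 0 < Γ) (hε : 0 < ε)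
    (k : ℝ) (hk : k = min KVC KCC)
    (ig vc vg ev ei z : ℝ → ℝ)
    (hig_meas : Measurable ig) (hvc_meas : Measurable vc) (hvg_meas : Measurable vg)
    (hig_bdd : ∃ Cig : ℝ, ∀ᵐ t ∂volume, 0 ≤ t → |ig t| ≤ Cig)
    (hvc_bdd : ∃ Cvc : ℝ, ∀ᵐ t ∂volume, 0 ≤ t → |vc t| ≤ Cvc)
    (hvg_bdd : ∃ Cvg : ℝ, ∀ᵐ t ∂volume, 0 ≤ t → |vg t| ≤ Cvg)
    (hev_int : ∀ t, 0 ≤ t → IntervalIntegrable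
      (fun s => (ωb / Cf) * ei s - KVC * ev s) volume 0 t)
    (hev_rep : ∀ t, 0 ≤ t → ev t = ev 0 + ∫ s in (0:ℝ)..t,
      ((ωb / Cf) * ei s - KVC * ev s))
    (hei_int : ∀ t, 0 ≤ t → IntervalIntegrable
      (fun s => dadsInput ωb Cf KCC μ ig vc ev ei z s
        + (ωb * R / L) * ig s - (ωb / L) * vc s + (ωb / L) * vg s) volume 0 t)
    (hei_rep : ∀ t, 0 ≤ t → ei t = ei 0 + ∫ s in (0:ℝ)..t,
      (dadsInput ωb Cf KCC μ ig vc ev ei z s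
        + (ωb * R / L) * ig s - (ωb / L) * vc s + (ωb / L) * vg s))
    (hz_int : ∀ t, 0 ≤ t → IntervalIntegrable
      (fun s => Γ * Real.exp (-(z s)) * max (storageW ev ei s - ε) 0) volume 0 t)
    (hz_rep : ∀ t, 0 ≤ t → z t = z 0 + ∫ s in (0:ℝ)..t,
      (Γ * Real.exp (-(z s)) * max (storageW ev ei s - ε) 0)) :
    limsup (storageW ev ei) atTop ≤ ε ∧
    limsup (fun t => |ev t|) atTop ≤ Real.sqrt (2 * ε) := by
  have hkpos : 0 < k := hk ▸ lt_min hKVC hKCC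
  set W : ℝ → ℝ := storageW ev ei with hWdef
  set gv : ℝ → ℝ := fun s => (ωb / Cf) * ei s - KVC * ev s with hgv
  set gi : ℝ → ℝ := fun s => dadsInput ωb Cf KCC μ ig vc ev ei z s
      + (ωb * R / L) * ig s - (ωb / L) * vc s + (ωb / L) * vg s with hgi
  set hfun : ℝ → ℝ := fun s => Γ * Real.exp (-(z s)) * max (W s - ε) 0 with hhf
  set q : ℝ → ℝ := fun s => ev s * gv s + ei s * gi s with hqdef
  -- continuity
  have hevC : ContinuousOn ev (Ici (0:ℝ)) :=
    (continuousOn_const.add (prim_contOn hev_int)).congr (fun t ht => hev_rep t ht)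
  have heiC : ContinuousOn ei (Ici (0:ℝ)) :=
    (continuousOn_const.add (prim_contOn hei_int)).congr (fun t ht => hei_rep t ht)
  have hWC : ContinuousOn W (Ici (0:ℝ)) := by
    show ContinuousOn (fun s => (ev s)^2/2 + (ei s)^2/2) (Ici 0)
    exact ((hevC.pow 2).div_const 2).add ((heiC.pow 2).div_const 2)
  have hW0 : ∀ s, 0 ≤ W s := fun s => by
    show 0 ≤ (ev s)^2/2 + (ei s)^2/2
    positivity
  -- q integrable
  have hq_int : ∀ t, 0 ≤ t → IntervalIntegrable q volume 0 t := by
    intro t ht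
    have hsub : Icc (0:ℝ) t ⊆ Ici 0 := Icc_subset_Ici_self
    have h1 : IntervalIntegrable (fun s => ev s * gv s) volume 0 t := by
      apply (hev_int t ht).continuousOn_mul
      rw [uIcc_of_le ht]; exact hevC.mono hsub
    have h2 : IntervalIntegrable (fun s => ei s * gi s) volume 0 t := by
      apply (hei_int t ht).continuousOn_mul
      rw [uIcc_of_le ht]; exact heiC.mono hsub
    exact h1.add h2
  -- W representation
  have hW_rep : ∀ t, 0 ≤ t → W t = W 0 + ∫ s in (0:ℝ)..t, q s := by
    intro t ht
    have h1 := sq_rep hev_int hev_rep ht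
    have h2 := sq_rep hei_int hei_rep ht
    have hsub : Icc (0:ℝ) t ⊆ Ici 0 := Icc_subset_Ici_self
    have hii1 : IntervalIntegrable (fun s => ev s * gv s) volume 0 t := by
      apply (hev_int t ht).continuousOn_mul
      rw [uIcc_of_le ht]; exact hevC.mono hsub
    have hii2 : IntervalIntegrable (fun s => ei s * gi s) volume 0 t := by
      apply (hei_int t ht).continuousOn_mul
      rw [uIcc_of_le ht]; exact heiC.mono hsub
    have hadd := intervalIntegral.integral_add hii1 hii2
    show (ev t)^2/2 + (ei t)^2/2 = ((ev 0)^2/2 + (ei 0)^2/2) + ∫ s in (0:ℝ)..t, q s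
    rw [hqdef]
    rw [hadd]
    linarith [h1, h2]
  -- z monotone
  have hz_mono : ∀ s t, 0 ≤ s → s ≤ t → z s ≤ z t := by
    intro s t hs hst
    have ht : 0 ≤ t := le_trans hs hst
    have hdiff : z t - z s = ∫ u in s..t, hfun u := by
      rw [hz_rep t ht, hz_rep s hs]
      have := intervalIntegral.integral_interval_sub_left (hz_int t ht) (hz_int s hs)
      rw [hhf]
      rw [hWdef]
      linarith [this]
    have hpos : 0 ≤ ∫ u in s..t, hfun u := by
      apply intervalIntegral.integral_nonneg hst
      intro u _
      rw [hhf]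
      have : (0:ℝ) ≤ max (W u - ε) 0 := le_max_right _ _
      positivity
    linarith [hdiff, hpos]
  -- constants
  obtain ⟨Cvg, hCvg⟩ := hvg_bdd
  set D : ℝ := 3 * (max (R^2) 1 + Cvg^2) / L^2 with hDdef
  have hDpos : 0 < D := by
    apply div_pos
    · nlinarith [le_max_right (R^2) (1:ℝ), sq_nonneg Cvg]
    · positivity
  -- a.e. bound on q
  have hqb : ∀ᵐ s ∂volume, 0 ≤ s → q s ≤ -(2*k) * W s + μ * D * Real.exp (-(z s)) := by
    filter_upwards [hCvg] with s h1 hs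
    have := key_ineq hωb hCf hKVC hKCC hμ hL hk hDdef
      (ig s) (vc s) (vg s) (ev s) (ei s) (z s) (h1 hs)
    rw [hqdef, hgv, hgi, hWdef]
    simpa [dadsInput, storageW] using this
  set M : ℝ := μ * D * Real.exp (-(z 0)) with hMdef
  set Mp : ℝ := max M 1 with hMpdef
  have hMppos : (0:ℝ) < Mp := lt_of_lt_of_le one_pos (le_max_right _ _)
  have hqM : ∀ᵐ s ∂volume, 0 ≤ s → q s ≤ Mp := by
    filter_upwards [hqb] with s h1 hs
    have h2 := h1 hs
    have h3 : Real.exp (-(z s)) ≤ Real.exp (-(z 0)) :=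
      Real.exp_le_exp.mpr (neg_le_neg (hz_mono 0 s le_rfl hs))
    have h4 : μ * D * Real.exp (-(z s)) ≤ M := by
      rw [hMdef]
      exact mul_le_mul_of_nonneg_left h3 (by positivity)
    have h5 : M ≤ Mp := le_max_left _ _
    have h6 : 0 ≤ W s := hW0 s
    nlinarith [h2, h4, h5, h6, hkpos]
  -- one-sided Lipschitz bound
  have hWdiff : ∀ s t, 0 ≤ s → s ≤ t → W t - W s ≤ Mp * (t - s) := by
    intro s t hs hst
    have ht : 0 ≤ t := le_trans hs hst
    have hqst : IntervalIntegrable q volume s t :=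
      (hq_int t ht).mono_set (by rw [uIcc_of_le hst, uIcc_of_le ht]; exact Icc_subset_Icc hs le_rfl)
    have hdiff : W t - W s = ∫ u in s..t, q u := by
      rw [hW_rep t ht, hW_rep s hs]
      have := intervalIntegral.integral_interval_sub_left (hq_int t ht) (hq_int s hs)
      linarith [this]
    have hmono : ∫ u in s..t, q u ≤ ∫ _u in s..t, Mp := by
      apply intervalIntegral.integral_mono_ae_restrict hst hqst
        (intervalIntegrable_const)
      rw [Filter.EventuallyLE, ae_restrict_iff' measurableSet_Icc]
      filter_upwards [hqM] with x h1 hx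
      exact h1 (le_trans hs hx.1)
    have hconst : ∫ _u in s..t, Mp = Mp * (t - s) := by
      rw [intervalIntegral.integral_const, smul_eq_mul]; ring
    linarith [hdiff, hmono, hconst]
  -- main eventual bound
  have key : ∀ δ, 0 < δ → ∀ᶠ t in atTop, W t ≤ ε + δ := by
    intro δ hδ
    by_cases hzb : ∃ zs, ∀ t, 0 ≤ t → z t ≤ zs
    · -- Case A : z bounded above
      obtain ⟨zs, hzs⟩ := hzb
      have hzs0 : z 0 ≤ zs := hzs 0 le_rfl
      set K : ℝ := Real.exp zs * (zs - z 0) / Γ with hKdef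
      have hmax_int : ∀ t, 0 ≤ t → IntervalIntegrable (fun s => max (W s - ε) 0) volume 0 t := by
        intro t ht
        apply ContinuousOn.intervalIntegrable
        rw [uIcc_of_le ht]
        exact Continuous.comp_continuousOn (continuous_id.max continuous_const)
          ((hWC.mono Icc_subset_Ici_self).sub continuousOn_const)
      have hKb : ∀ t, 0 ≤ t → (∫ s in (0:ℝ)..t, max (W s - ε) 0) ≤ K := by
        intro t ht
        have h1 : ∀ x ∈ Icc (0:ℝ) t,
            Γ * Real.exp (-zs) * max (W x - ε) 0 ≤ hfun x := by
          intro x hx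
          rw [hhf]
          apply mul_le_mul_of_nonneg_right _ (le_max_right _ _)
          exact mul_le_mul_of_nonneg_left
            (Real.exp_le_exp.mpr (neg_le_neg (hzs x hx.1))) hΓ.le
        have h2 : ∫ s in (0:ℝ)..t, Γ * Real.exp (-zs) * max (W s - ε) 0
            ≤ ∫ s in (0:ℝ)..t, hfun s := by
          apply intervalIntegral.integral_mono_on ht
            (((hmax_int t ht).const_mul _)) (hz_int t ht) h1
        have h3 : ∫ s in (0:ℝ)..t, Γ * Real.exp (-zs) * max (W s - ε) 0
            = Γ * Real.exp (-zs) * ∫ s in (0:ℝ)..t, max (W s - ε) 0 := by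
          rw [← intervalIntegral.integral_const_mul]
        have h4 : ∫ s in (0:ℝ)..t, hfun s = z t - z 0 := by
          rw [hz_rep t ht, hhf, hWdef]; ring
        have h5 : z t ≤ zs := hzs t ht
        have h6 : Γ * Real.exp (-zs) * (∫ s in (0:ℝ)..t, max (W s - ε) 0) ≤ zs - z 0 := by
          rw [← h3]; linarith [h2, h4]
        have h7 : (0:ℝ) < Γ * Real.exp (-zs) := by positivity
        rw [hKdef]
        rw [← le_div_iff₀' h7] at h6
        have h8 : (zs - z 0) / (Γ * Real.exp (-zs)) = Real.exp zs * (zs - z 0) / Γ := by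
          rw [Real.exp_neg]
          field_simp
        linarith [h6, h8.symm.le, h8.le]
      -- contradiction argument
      by_contra hcon
      rw [Filter.not_eventually] at hcon
      have hfreq : ∀ a : ℝ, ∃ b ≥ a, ε + δ < W b := by
        have := Filter.frequently_atTop.mp (hcon.mono (fun t ht => lt_of_not_ge ht))
        exact this
      set δ' : ℝ := δ / (2 * Mp) with hδ'def
      have hδ'pos : 0 < δ' := by rw [hδ'def]; positivity
      have hMd : Mp * δ' = δ / 2 := by
        rw [hδ'def]; field_simp
      have claim : ∀ n : ℕ, ∃ t, 0 ≤ t ∧ (n : ℝ) * ((δ/2) * δ') ≤ ∫ s in (0:ℝ)..t, max (W s - ε) 0 := by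
        intro n
        induction n with
        | zero => exact ⟨0, le_rfl, by simp⟩
        | succ n ih =>
          obtain ⟨tn, htn0, htn⟩ := ih
          obtain ⟨t', ht', hWt'⟩ := hfreq (tn + δ')
          have ht'0 : 0 ≤ t' := le_trans (by linarith) ht'
          have htd : 0 ≤ t' - δ' := by linarith
          have hseg : ∀ u ∈ Icc (t' - δ') t', δ/2 ≤ max (W u - ε) 0 := by
            intro u hu
            have hu0 : 0 ≤ u := le_trans htd hu.1
            have hd := hWdiff u t' hu0 hu.2
            have : Mp * (t' - u) ≤ Mp * δ' :=
              mul_le_mul_of_nonneg_left (by linarith [hu.1]) hMppos.le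
            have hWu : ε + δ/2 ≤ W u := by
              rw [hMd] at this
              linarith
            exact le_trans (by linarith) (le_max_left _ _)
          have hii1 := hmax_int (t' - δ') htd
          have hii2 : IntervalIntegrable (fun s => max (W s - ε) 0) volume (t' - δ') t' :=
            (hmax_int t' ht'0).mono_set
              (by rw [uIcc_of_le (by linarith : t' - δ' ≤ t'), uIcc_of_le ht'0]
                  exact Icc_subset_Icc htd le_rfl)
          have hsplit : (∫ s in (0:ℝ)..(t' - δ'), max (W s - ε) 0)
              + (∫ s in (t' - δ')..t', max (W s - ε) 0)
              = ∫ s in (0:ℝ)..t', max (W s - ε) 0 :=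
            intervalIntegral.integral_add_adjacent_intervals hii1 hii2
          have hlow : (δ/2) * δ' ≤ ∫ s in (t' - δ')..t', max (W s - ε) 0 := by
            have h9 : ∫ _s in (t' - δ')..t', (δ/2 : ℝ) = (δ/2) * δ' := by
              rw [intervalIntegral.integral_const, smul_eq_mul]; ring_nf
            rw [← h9]
            apply intervalIntegral.integral_mono_on (by linarith) intervalIntegrable_const hii2
            intro x hx
            exact hseg x hx
          have hmon : (∫ s in (0:ℝ)..tn, max (W s - ε) 0)
              ≤ ∫ s in (0:ℝ)..(t' - δ'), max (W s - ε) 0 := by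
            have htn_td : tn ≤ t' - δ' := by linarith
            have hiimid : IntervalIntegrable (fun s => max (W s - ε) 0) volume tn (t' - δ') :=
              hii1.mono_set
                (by rw [uIcc_of_le htn_td, uIcc_of_le htd]; exact Icc_subset_Icc htn0 le_rfl)
            have := intervalIntegral.integral_interval_sub_left hii1 (hmax_int tn htn0)
            have hnn : 0 ≤ ∫ s in tn..(t' - δ'), max (W s - ε) 0 := by
              apply intervalIntegral.integral_nonneg htn_td
              intro u _; exact le_max_right _ _
            linarith [this, hnn]
          refine ⟨t', ht'0, ?_⟩
          push_cast
          linarith [htn, hmon, hlow, hsplit]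
      have hcpos : (0:ℝ) < (δ/2) * δ' := by positivity
      obtain ⟨n, hn⟩ := exists_nat_gt (K / ((δ/2) * δ'))
      obtain ⟨t, ht0, htb⟩ := claim n
      have hKt := hKb t ht0
      rw [div_lt_iff₀ hcpos] at hn
      linarith [htb, hKt, hn]
    · -- Case B : z unbounded
      push_neg at hzb
      set cth : ℝ := -Real.log ((ε + δ) * k / (μ * D)) with hcth
      have hBval : μ * D * Real.exp (-cth) = (ε + δ) * k := by
        rw [hcth, neg_neg, Real.exp_log (by positivity)]
        field_simp
      obtain ⟨T, hT0, hTz⟩ := hzb cth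
      have hWle : ∀ t, T ≤ t → W t ≤ Real.exp (2*k*(T - t)) * W T + (ε + δ)/2 := by
        intro t hTt
        have ht0 : 0 ≤ t := le_trans hT0 hTt
        have hqTt : IntervalIntegrable q volume T t :=
          (hq_int t ht0).mono_set
            (by rw [uIcc_of_le hTt, uIcc_of_le ht0]; exact Icc_subset_Icc hT0 le_rfl)
        have hV : ∀ s, s ∈ Icc T t → W s = W T + ∫ r in T..s, q r := by
          intro s hs
          have hs0 : 0 ≤ s := le_trans hT0 hs.1
          rw [hW_rep s hs0, hW_rep T hT0]
          have := intervalIntegral.integral_interval_sub_left (hq_int s hs0) (hq_int T hT0)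
          linarith [this]
        have hVc : ContinuousOn W (Icc T t) :=
          hWC.mono (fun x hx => le_trans hT0 hx.1)
        have hbd : ∀ᵐ s ∂(volume.restrict (Ioc T t)), q s + 2*k*W s ≤ (ε + δ) * k := by
          rw [ae_restrict_iff' measurableSet_Ioc]
          filter_upwards [hqb] with s h1 hs
          have hs0 : 0 ≤ s := le_trans hT0 hs.1.le
          have h2 := h1 hs0
          have h3 : cth ≤ z s := le_trans hTz.le (hz_mono T s hT0 hs.1.le)
          have h4 : Real.exp (-(z s)) ≤ Real.exp (-cth) :=
            Real.exp_le_exp.mpr (neg_le_neg h3)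
          have h5 : μ * D * Real.exp (-(z s)) ≤ (ε + δ) * k := by
            rw [← hBval]
            exact mul_le_mul_of_nonneg_left h4 (by positivity)
          linarith
        have hgr := gronwall hkpos hTt hqTt hV hVc hbd (by positivity)
        have heq : (ε + δ) * k / (2 * k) = (ε + δ) / 2 := by
          field_simp
        linarith [hgr, heq.le, heq.symm.le]
      have h2k : Tendsto (fun t : ℝ => 2*k*t) atTop atTop :=
        Tendsto.const_mul_atTop (by linarith) tendsto_id
      have h4' : Tendsto (fun t : ℝ => Real.exp (-(2*k*t))) atTop (𝓝 0) :=
        Real.tendsto_exp_neg_atTop_nhds_zero.comp h2k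
      have h5' : Tendsto (fun t : ℝ => Real.exp (2*k*(T - t)) * W T) atTop (𝓝 0) := by
        have heq2 : (fun t : ℝ => Real.exp (2*k*(T - t)) * W T)
            = fun t : ℝ => Real.exp (2*k*T) * Real.exp (-(2*k*t)) * W T := by
          funext t
          rw [← Real.exp_add]
          congr 2
          ring
        rw [heq2]
        have := (h4'.const_mul (Real.exp (2*k*T))).mul_const (W T)
        simpa using this
      have hev' : ∀ᶠ t in atTop, Real.exp (2*k*(T - t)) * W T < (ε + δ)/2 :=
        h5'.eventually_lt_const (by positivity)
      filter_upwards [hev', eventually_ge_atTop T] with t h1 h2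
      linarith [hWle t h2]
  -- conclude
  have hWev0 : ∀ᶠ t in atTop, (0:ℝ) ≤ W t := Eventually.of_forall hW0
  have hcob : IsCoboundedUnder (· ≤ ·) atTop W :=
    isCoboundedUnder_le_of_eventually_le atTop hWev0
  constructor
  · apply le_of_forall_gt_imp_ge_of_dense
    intro c hc
    have hδ : 0 < c - ε := by linarith
    apply Filter.limsup_le_of_le hcob
    filter_upwards [key (c - ε) hδ] with t ht
    linarith
  · have hcob2 : IsCoboundedUnder (· ≤ ·) atTop (fun t => |ev t|) :=
      isCoboundedUnder_le_of_eventually_le atTop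
        (Eventually.of_forall (fun t => abs_nonneg (ev t)))
    apply le_of_forall_gt_imp_ge_of_dense
    intro c hc
    have hc0 : 0 ≤ c := le_trans (Real.sqrt_nonneg _) hc.le
    have h2ε : 2*ε < c^2 := (Real.sqrt_lt' (lt_of_le_of_lt (Real.sqrt_nonneg _) hc)).mp hc
    set δ : ℝ := (c^2 - 2*ε)/2 with hδdef
    have hδpos : 0 < δ := by rw [hδdef]; linarith
    apply Filter.limsup_le_of_le hcob2
    filter_upwards [key δ hδpos] with t ht
    have hWt : W t ≤ c^2/2 := by rw [hδdef] at ht; linarith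
    have hev2 : (ev t)^2 ≤ c^2 := by
      have hrfl : W t = (ev t)^2/2 + (ei t)^2/2 := rfl
      linarith [sq_nonneg (ei t)]
    calc |ev t| = Real.sqrt ((ev t)^2) := (Real.sqrt_sq_eq_abs _).symm
      _ ≤ Real.sqrt (c^2) := Real.sqrt_le_sqrt hev2
      _ = c := Real.sqrt_sq hc0
end

section
/- Let ω_b, C_f, L, R > 0 and let λ ∈ ℝ satisfy −min{ √(C_f·L), R/(4(R²/L + 3/(2C_f))) } < λ < 0. Define k₁ = min{ ω_b|λ|/(8L), ω_b·R/4 }, k₂ = ω_b(2L/|λ| + |λ|/(2C_f)), and k₃ = ω_b(1/(2R) + |λ|/(2L)). Then for all v_c, i_g, i_t, v_g ∈ ℝ²: ω_b⟨v_c, i_t⟩ − ω_b⟨i_g, v_g⟩ − ω_b·R‖i_g‖² + λω_b( (1/L)‖v_c‖² − (1/L)⟨v_c, v_g⟩ − (R/L)⟨v_c, i_g⟩ + (1/C_f)⟨i_g, i_t⟩ − (1/C_f)‖i_g‖² ) ≤ −k₁(‖v_c‖² + ‖i_g‖²) + k₂‖i_t‖² + k₃‖v_g‖². -/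
open scoped RealInnerProductSpace

set_option maxHeartbeats 1600000 in
/-- Pointwise dissipation inequality (via Young's
inequality) for the derivative of the cross-term storage function
W₂ = (C_f/2)‖v_c‖² + (L/2)‖i_g‖² + λ⟪v_c, i_g⟫ along the PCC-voltage and
grid-current dynamics, for −min{√(C_f L), R/(4(R²/L + 3/(2C_f)))} < λ < 0. -/
theorem stmt17
    (ωb Cf L R lam : ℝ)
    (hωb : 0 < ωb) (hCf : 0 < Cf) (hL : 0 < L) (hR : 0 < R)
    (hlam_neg : lam < 0)
    (hlam_lb : -(min (Real.sqrt (Cf * L)) (R / (4 * (R^2 / L + 3 / (2 * Cf))))) < lam)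
    (k₁ k₂ k₃ : ℝ)
    (hk₁ : k₁ = min (ωb * |lam| / (8 * L)) (ωb * R / 4))
    (hk₂ : k₂ = ωb * (2 * L / |lam| + |lam| / (2 * Cf)))
    (hk₃ : k₃ = ωb * (1 / (2 * R) + |lam| / (2 * L))) :
    ∀ vc ig it vg : EuclideanSpace ℝ (Fin 2),
      ωb * ⟪vc, it⟫ - ωb * ⟪ig, vg⟫ - ωb * R * ‖ig‖^2
        + lam * ωb * ((1 / L) * ‖vc‖^2 - (1 / L) * ⟪vc, vg⟫ - (R / L) * ⟪vc, ig⟫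
          + (1 / Cf) * ⟪ig, it⟫ - (1 / Cf) * ‖ig‖^2)
      ≤ -k₁ * (‖vc‖^2 + ‖ig‖^2) + k₂ * ‖it‖^2 + k₃ * ‖vg‖^2 := by
  intro vc ig it vg
  set μ : ℝ := -lam with hμdef
  have hμpos : 0 < μ := by simp [hμdef]; linarith
  have habs : |lam| = μ := by rw [abs_of_neg hlam_neg]
  have hlamval : lam = -μ := by simp [hμdef]
  have hD : (0:ℝ) < R^2 / L + 3 / (2 * Cf) := by positivity
  have hmin : μ < min (Real.sqrt (Cf * L)) (R / (4 * (R^2 / L + 3 / (2 * Cf)))) := by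
    linarith [hlam_lb]
  have hμt : μ < R / (4 * (R^2 / L + 3 / (2 * Cf))) :=
    lt_of_lt_of_le hmin (min_le_right _ _)
  have hμ' : μ * (R^2 / L + 3 / (2 * Cf)) < R / 4 := by
    have h4D : (0:ℝ) < 4 * (R^2 / L + 3 / (2 * Cf)) := by positivity
    have h := (lt_div_iff₀ h4D).mp hμt
    nlinarith [h]
  set a := ‖vc‖
  set b := ‖ig‖
  set c := ‖it‖
  set d := ‖vg‖
  -- inner product bounds
  have P1 : ωb * ⟪vc, it⟫ ≤ ωb * (a * c) :=
    mul_le_mul_of_nonneg_left (real_inner_le_norm _ _) hωb.le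
  have P2 : ωb * (-⟪ig, vg⟫) ≤ ωb * (b * d) := by
    refine mul_le_mul_of_nonneg_left ?_ hωb.le
    have h := abs_real_inner_le_norm ig vg
    have h2 := neg_abs_le ⟪ig, vg⟫
    linarith
  have P3 : (μ * ωb / L) * ⟪vc, vg⟫ ≤ (μ * ωb / L) * (a * d) :=
    mul_le_mul_of_nonneg_left (real_inner_le_norm _ _) (by positivity)
  have P4 : (μ * ωb * R / L) * ⟪vc, ig⟫ ≤ (μ * ωb * R / L) * (a * b) :=
    mul_le_mul_of_nonneg_left (real_inner_le_norm _ _) (by positivity)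
  have P5 : (μ * ωb / Cf) * (-⟪ig, it⟫) ≤ (μ * ωb / Cf) * (b * c) := by
    refine mul_le_mul_of_nonneg_left ?_ (by positivity)
    have h := abs_real_inner_le_norm ig it
    have h2 := neg_abs_le ⟪ig, it⟫
    linarith
  -- Young's inequalities
  have H1 : ωb * (a * c) ≤ ωb * μ / L / 8 * a^2 + 2 * ωb * L / μ * c^2 := by
    have h : μ * (8 * L) * (ωb * (a * c))
        ≤ μ * (8 * L) * (ωb * μ / L / 8 * a^2 + 2 * ωb * L / μ * c^2) := by
      have e : μ * (8 * L) * (ωb * μ / L / 8 * a^2 + 2 * ωb * L / μ * c^2)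
          = ωb * μ^2 * a^2 + 16 * ωb * L^2 * c^2 := by first | (field_simp; ring) | field_simp
      rw [e]
      nlinarith [mul_nonneg hωb.le (sq_nonneg (μ * a - 4 * L * c))]
    exact le_of_mul_le_mul_left h (by positivity)
  have H2 : ωb * (b * d) ≤ ωb * R / 2 * b^2 + ωb / R / 2 * d^2 := by
    have h : (2 * R) * (ωb * (b * d))
        ≤ (2 * R) * (ωb * R / 2 * b^2 + ωb / R / 2 * d^2) := by
      have e : (2 * R) * (ωb * R / 2 * b^2 + ωb / R / 2 * d^2)
          = ωb * R^2 * b^2 + ωb * d^2 := by first | (field_simp; ring) | field_simp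
      rw [e]
      nlinarith [mul_nonneg hωb.le (sq_nonneg (R * b - d))]
    exact le_of_mul_le_mul_left h (by positivity)
  have H3 : (μ * ωb / L) * (a * d) ≤ μ * ωb / L / 2 * a^2 + μ * ωb / L / 2 * d^2 := by
    have h : (2 * L) * ((μ * ωb / L) * (a * d))
        ≤ (2 * L) * (μ * ωb / L / 2 * a^2 + μ * ωb / L / 2 * d^2) := by
      have e1 : (2 * L) * ((μ * ωb / L) * (a * d)) = 2 * μ * ωb * (a * d) := by
        field_simp
      have e2 : (2 * L) * (μ * ωb / L / 2 * a^2 + μ * ωb / L / 2 * d^2)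
          = μ * ωb * a^2 + μ * ωb * d^2 := by first | (field_simp; ring) | field_simp
      rw [e1, e2]
      nlinarith [mul_nonneg (mul_nonneg hμpos.le hωb.le) (sq_nonneg (a - d))]
    exact le_of_mul_le_mul_left h (by positivity)
  have H4 : (μ * ωb * R / L) * (a * b)
      ≤ μ * ωb / L / 4 * a^2 + μ * ωb * R^2 / L * b^2 := by
    have h : (4 * L) * ((μ * ωb * R / L) * (a * b))
        ≤ (4 * L) * (μ * ωb / L / 4 * a^2 + μ * ωb * R^2 / L * b^2) := by
      have e1 : (4 * L) * ((μ * ωb * R / L) * (a * b)) = 4 * μ * ωb * R * (a * b) := by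
        field_simp
      have e2 : (4 * L) * (μ * ωb / L / 4 * a^2 + μ * ωb * R^2 / L * b^2)
          = μ * ωb * a^2 + 4 * μ * ωb * R^2 * b^2 := by first | (field_simp; ring) | field_simp
      rw [e1, e2]
      nlinarith [mul_nonneg (mul_nonneg hμpos.le hωb.le) (sq_nonneg (a - 2 * R * b))]
    exact le_of_mul_le_mul_left h (by positivity)
  have H5 : (μ * ωb / Cf) * (b * c)
      ≤ μ * ωb / Cf / 2 * b^2 + μ * ωb / Cf / 2 * c^2 := by
    have h : (2 * Cf) * ((μ * ωb / Cf) * (b * c))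
        ≤ (2 * Cf) * (μ * ωb / Cf / 2 * b^2 + μ * ωb / Cf / 2 * c^2) := by
      have e1 : (2 * Cf) * ((μ * ωb / Cf) * (b * c)) = 2 * μ * ωb * (b * c) := by
        field_simp
      have e2 : (2 * Cf) * (μ * ωb / Cf / 2 * b^2 + μ * ωb / Cf / 2 * c^2)
          = μ * ωb * b^2 + μ * ωb * c^2 := by first | (field_simp; ring) | field_simp
      rw [e1, e2]
      nlinarith [mul_nonneg (mul_nonneg hμpos.le hωb.le) (sq_nonneg (b - c))]
    exact le_of_mul_le_mul_left h (by positivity)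
  -- coefficient bounds
  have hk₁' : k₁ = min (ωb * μ / (8 * L)) (ωb * R / 4) := by rw [hk₁, habs]
  have hKa : k₁ * a^2 ≤ ωb * μ / L / 8 * a^2 := by
    calc k₁ * a^2 ≤ ωb * μ / (8 * L) * a^2 := by
          rw [hk₁']
          exact mul_le_mul_of_nonneg_right (min_le_left _ _) (sq_nonneg a)
      _ = ωb * μ / L / 8 * a^2 := by ring
  have hKb : k₁ * b^2 ≤ ωb * R / 4 * b^2 := by
    have := min_le_right (ωb * μ / (8 * L)) (ωb * R / 4)
    rw [hk₁']
    exact mul_le_mul_of_nonneg_right this (sq_nonneg b)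
  have hKc : k₂ * c^2 = 2 * ωb * L / μ * c^2 + ωb * μ / Cf / 2 * c^2 := by
    rw [hk₂, habs]; ring
  have hKd : k₃ * d^2 = ωb / R / 2 * d^2 + ωb * μ / L / 2 * d^2 := by
    rw [hk₃, habs]; ring
  have hb : (μ * (R^2 / L + 3 / (2 * Cf))) * (ωb * b^2) ≤ (R / 4) * (ωb * b^2) :=
    mul_le_mul_of_nonneg_right hμ'.le (by positivity)
  rw [hlamval]
  have hbb := hb
  have hexp : (μ * (R^2 / L + 3 / (2 * Cf))) * (ωb * b^2)
      = μ * ωb * R^2 / L * b^2 + (3 / 2) * (μ * ωb / Cf * b^2) := by ring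
  rw [hexp] at hbb
  clear_value μ a b c d
  ring_nf at P1 P2 P3 P4 P5 H1 H2 H3 H4 H5 hKa hKb hKc hKd hbb ⊢
  linarith [P1, P2, P3, P4, P5, H1, H2, H3, H4, H5, hKa, hKb, hKc, hKd, hbb]
end
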